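/- arXiv:1604.05350 — 8 statements merged into one kernel-verified Lean document; each statement's English description precedes it below -/
import Mathlib

section
/- Let u₁ and u₂ be two crossing-free geometric graphs (on subsets of a planar point set P in general position with distinct x-coordinates). If u₁ and u₂ are crossing (i.e., some edge of u₁ and some edge of u₂ intersect in their relative interiors), then each depends on the other: there exists a point on u₂ directly and strictly above a point on u₁, and there exists a point on u₁ directly and strictly above a point on u₂. -/
/-!
Statement 0: if two crossing-free geometric graphs on subsets of a planar point
set (general position, distinct x-coordinates) cross, then each depends on the
other: some point on one lies vertically strictly above some point on the other,
and vice versa.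
-/

open scoped Classical

noncomputable section

abbrev Pt := ℝ × ℝ

/-- No three distinct points of `P` are collinear. -/
def GenPos (P : Set Pt) : Prop :=
  ∀ a ∈ P, ∀ b ∈ P, ∀ c ∈ P, a ≠ b → a ≠ c → b ≠ c → ¬ Collinear ℝ ({a, b, c} : Set Pt)

/-- No two distinct points of `P` share an x-coordinate. -/
def DistinctX (P : Set Pt) : Prop :=
  ∀ a ∈ P, ∀ b ∈ P, a ≠ b → a.1 ≠ b.1

/-- A geometric graph on a subset of `P`: a finite nonempty vertex set together
with straight-line edges between distinct vertices. -/
structure GGraph (P : Set Pt) where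
  V : Set Pt
  E : Set (Pt × Pt)
  hVP : V ⊆ P
  hVfin : V.Finite
  hVne : V.Nonempty
  hE : ∀ e ∈ E, e.1 ∈ V ∧ e.2 ∈ V ∧ e.1 ≠ e.2

/-- Two edges cross: their relative interiors (open segments) meet and they are
distinct edges (different endpoint sets). -/
def CrossE (e f : Pt × Pt) : Prop :=
  (openSegment ℝ e.1 e.2 ∩ openSegment ℝ f.1 f.2).Nonempty ∧
    ({e.1, e.2} : Set Pt) ≠ {f.1, f.2}

/-- A geometric graph is crossing-free if its edges are pairwise non-crossing. -/
def GGraph.CrossingFree {P : Set Pt} (u : GGraph P) : Prop :=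
  ∀ e ∈ u.E, ∀ f ∈ u.E, ¬ CrossE e f

/-- Two geometric graphs cross if some edge of one crosses some edge of the other. -/
def GCross {P : Set Pt} (u₁ u₂ : GGraph P) : Prop :=
  ∃ e ∈ u₁.E, ∃ f ∈ u₂.E, CrossE e f

/-- A point on `u`: a vertex of `u` or a point in the relative interior of an edge. -/
def OnG {P : Set Pt} (u : GGraph P) (x : Pt) : Prop :=
  x ∈ u.V ∨ ∃ e ∈ u.E, x ∈ openSegment ℝ e.1 e.2

lemma seg_coords {a b p : Pt} (h : p ∈ openSegment ℝ a b) :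
    ∃ s : ℝ, 0 < s ∧ s < 1 ∧ p.1 = a.1 + s*(b.1-a.1) ∧ p.2 = a.2 + s*(b.2-a.2) := by
  rw [openSegment_eq_image'] at h
  obtain ⟨s, ⟨h0, h1⟩, rfl⟩ := h
  exact ⟨s, h0, h1, by simp [smul_eq_mul], by simp [smul_eq_mul]⟩

lemma seg_mem (a b : Pt) (s : ℝ) (h0 : 0 < s) (h1 : s < 1) :
    ((a.1 + s*(b.1-a.1), a.2 + s*(b.2-a.2)) : Pt) ∈ openSegment ℝ a b := by
  rw [openSegment_eq_image']
  exact ⟨s, ⟨h0, h1⟩, by simp [Prod.ext_iff, smul_eq_mul]⟩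

lemma shift_bound (s m : ℝ) (hs0 : 0 < s) (hs1 : s < 1) (h : |m| ≤ min s (1-s)/2) :
    0 < s + m ∧ s + m < 1 := by
  obtain ⟨h1, h2⟩ := abs_le.1 h
  have := min_le_left s (1-s)
  have := min_le_right s (1-s)
  have : 0 < min s (1-s) := lt_min hs0 (by linarith)
  constructor <;> linarith

lemma diff_eq (ε L M A2 C2 : ℝ) (hL : L ≠ 0) (hM : M ≠ 0) :
    ε/L*A2 - ε/M*C2 = ε*((A2*M - C2*L)/(L*M)) := by field_simp

lemma abs_div_bound (ε L x : ℝ) (hL : 0 < |L|) (h : |ε| * 2 ≤ x * |L|) :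
    |ε / L| ≤ x / 2 := by
  rw [abs_div, div_le_div_iff₀ hL two_pos]
  nlinarith

lemma aux_above {a b c d p : Pt} (hL : b.1 - a.1 ≠ 0) (hM : d.1 - c.1 ≠ 0)
    (hp1 : p ∈ openSegment ℝ a b) (hp2 : p ∈ openSegment ℝ c d)
    (hslope : (b.2-a.2)*(d.1-c.1) ≠ (d.2-c.2)*(b.1-a.1)) :
    ∃ x y : Pt, x ∈ openSegment ℝ c d ∧ y ∈ openSegment ℝ a b ∧ x.1 = y.1 ∧ y.2 < x.2 := by
  obtain ⟨s, hs0, hs1, hps1, hps2⟩ := seg_coords hp1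
  obtain ⟨t, ht0, ht1, hpt1, hpt2⟩ := seg_coords hp2
  have hLpos : 0 < |b.1 - a.1| := abs_pos.2 hL
  have hMpos : 0 < |d.1 - c.1| := abs_pos.2 hM
  have hmins : 0 < min s (1-s) := lt_min hs0 (by linarith)
  have hmint : 0 < min t (1-t) := lt_min ht0 (by linarith)
  have hδ0 : 0 < min (min s (1-s) * |b.1-a.1|) (min t (1-t) * |d.1-c.1|) / 2 :=
    div_pos (lt_min (mul_pos hmins hLpos) (mul_pos hmint hMpos)) two_pos
  set δ : ℝ := min (min s (1-s) * |b.1-a.1|) (min t (1-t) * |d.1-c.1|) / 2 with hδdef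
  have hW0 : ((b.2-a.2)*(d.1-c.1) - (d.2-c.2)*(b.1-a.1)) / ((b.1-a.1)*(d.1-c.1)) ≠ 0 :=
    div_ne_zero (sub_ne_zero.2 hslope) (mul_ne_zero hL hM)
  set W : ℝ := ((b.2-a.2)*(d.1-c.1) - (d.2-c.2)*(b.1-a.1)) / ((b.1-a.1)*(d.1-c.1)) with hWdef
  have key : ∀ ε : ℝ, |ε| = δ → ∃ x y : Pt, x ∈ openSegment ℝ c d ∧
      y ∈ openSegment ℝ a b ∧ x.1 = y.1 ∧ y.2 - x.2 = ε * W := by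
    intro ε hε
    have hεL : |ε / (b.1-a.1)| ≤ min s (1-s) / 2 := by
      apply abs_div_bound _ _ _ hLpos
      rw [hε, hδdef]
      have := min_le_left (min s (1-s) * |b.1-a.1|) (min t (1-t) * |d.1-c.1|)
      linarith
    have hεM : |ε / (d.1-c.1)| ≤ min t (1-t) / 2 := by
      apply abs_div_bound _ _ _ hMpos
      rw [hε, hδdef]
      have := min_le_right (min s (1-s) * |b.1-a.1|) (min t (1-t) * |d.1-c.1|)
      linarith
    obtain ⟨hsL, hsR⟩ := shift_bound s _ hs0 hs1 hεL
    obtain ⟨htL, htR⟩ := shift_bound t _ ht0 ht1 hεM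
    refine ⟨_, _, seg_mem c d (t + ε/(d.1-c.1)) htL htR,
      seg_mem a b (s + ε/(b.1-a.1)) hsL hsR, ?_, ?_⟩
    · show c.1 + (t + ε/(d.1-c.1))*(d.1-c.1) = a.1 + (s + ε/(b.1-a.1))*(b.1-a.1)
      have e1 : (t + ε/(d.1-c.1))*(d.1-c.1) = t*(d.1-c.1) + ε := by field_simp
      have e2 : (s + ε/(b.1-a.1))*(b.1-a.1) = s*(b.1-a.1) + ε := by field_simp
      rw [e1, e2]; linarith [hps1.symm.trans hpt1]
    · show (a.2 + (s + ε/(b.1-a.1))*(b.2-a.2)) - (c.2 + (t + ε/(d.1-c.1))*(d.2-c.2)) = ε * W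
      have h0 : a.2 + s*(b.2-a.2) = c.2 + t*(d.2-c.2) := hps2.symm.trans hpt2
      have := diff_eq ε (b.1-a.1) (d.1-c.1) (b.2-a.2) (d.2-c.2) hL hM
      rw [hWdef]
      nlinarith [this, h0]
  rcases lt_or_gt_of_ne hW0 with hW | hW
  · obtain ⟨x, y, hx, hy, hxy, hd⟩ := key δ (abs_of_pos hδ0)
    exact ⟨x, y, hx, hy, hxy, by nlinarith⟩
  · obtain ⟨x, y, hx, hy, hxy, hd⟩ := key (-δ) (by rw [abs_neg]; exact abs_of_pos hδ0)
    exact ⟨x, y, hx, hy, hxy, by nlinarith⟩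

lemma collinear_of_on_line {a b w : Pt} (r : ℝ)
    (hw : w.1 = a.1 + r*(b.1-a.1) ∧ w.2 = a.2 + r*(b.2-a.2)) :
    Collinear ℝ ({a, b, w} : Set Pt) := by
  rw [collinear_iff_of_mem (Set.mem_insert a {b, w})]
  refine ⟨b - a, fun z hz => ?_⟩
  rcases hz with rfl | rfl | rfl
  · exact ⟨0, by simp⟩
  · exact ⟨1, by simp⟩
  · refine ⟨r, ?_⟩
    simp only [vadd_eq_add, Prod.ext_iff, Prod.fst_add, Prod.snd_add, Prod.smul_fst,
      Prod.smul_snd, Prod.fst_sub, Prod.snd_sub, smul_eq_mul]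
    constructor <;> [rw [hw.1]; rw [hw.2]] <;> ring

theorem crossing_implies_mutual_dependence
    (P : Set Pt) (hPfin : P.Finite) (hgp : GenPos P) (hdx : DistinctX P)
    (u₁ u₂ : GGraph P) (h₁ : u₁.CrossingFree) (h₂ : u₂.CrossingFree)
    (hcross : GCross u₁ u₂) :
    (∃ x y : Pt, OnG u₂ x ∧ OnG u₁ y ∧ x.1 = y.1 ∧ y.2 < x.2) ∧
    (∃ x y : Pt, OnG u₁ x ∧ OnG u₂ y ∧ x.1 = y.1 ∧ y.2 < x.2) := by
  obtain ⟨e, he, f, hf, ⟨p, hp1, hp2⟩, hne⟩ := hcross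
  obtain ⟨haV, hbV, hab⟩ := u₁.hE e he
  obtain ⟨hcV, hdV, hcd⟩ := u₂.hE f hf
  set a := e.1 with ha'; set b := e.2 with hb'
  set c := f.1 with hc'; set d := f.2 with hd'
  have haP : a ∈ P := u₁.hVP haV
  have hbP : b ∈ P := u₁.hVP hbV
  have hcP : c ∈ P := u₂.hVP hcV
  have hdP : d ∈ P := u₂.hVP hdV
  have hL : b.1 - a.1 ≠ 0 := sub_ne_zero.2 (Ne.symm (hdx a haP b hbP hab))
  have hM : d.1 - c.1 ≠ 0 := sub_ne_zero.2 (Ne.symm (hdx c hcP d hdP hcd))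
  -- slopes differ
  have hslope : (b.2-a.2)*(d.1-c.1) ≠ (d.2-c.2)*(b.1-a.1) := by
    intro heq
    obtain ⟨s, hs0, hs1, hps1, hps2⟩ := seg_coords hp1
    obtain ⟨t, ht0, ht1, hpt1, hpt2⟩ := seg_coords hp2
    -- c and d lie on the line through a, b
    have hc1 : c.1 = a.1 + (s - t*(d.1-c.1)/(b.1-a.1))*(b.1-a.1) := by
      field_simp; linarith [hps1.symm.trans hpt1]
    have hc2 : c.2 = a.2 + (s - t*(d.1-c.1)/(b.1-a.1))*(b.2-a.2) := by
      have h0 : a.2 + s*(b.2-a.2) = c.2 + t*(d.2-c.2) := hps2.symm.trans hpt2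
      field_simp
      linear_combination t*heq - (b.1-a.1)*h0
    have hd1 : d.1 = a.1 + (s + (1-t)*(d.1-c.1)/(b.1-a.1))*(b.1-a.1) := by
      field_simp; linarith [hps1.symm.trans hpt1]
    have hd2 : d.2 = a.2 + (s + (1-t)*(d.1-c.1)/(b.1-a.1))*(b.2-a.2) := by
      have h0 : a.2 + s*(b.2-a.2) = c.2 + t*(d.2-c.2) := hps2.symm.trans hpt2
      field_simp
      linear_combination -(b.1-a.1)*h0 - (1-t)*heq
    -- find a witness among c, d not in {a, b}
    have hwit : ∃ w : Pt, ∃ r : ℝ, w ∈ P ∧ w ≠ a ∧ w ≠ b ∧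
        w.1 = a.1 + r*(b.1-a.1) ∧ w.2 = a.2 + r*(b.2-a.2) := by
      by_cases hca : c = a
      · by_cases hdb : d = b
        · exact absurd (by rw [hca, hdb]) hne
        · by_cases hda : d = a
          · exact absurd (hda.trans hca.symm).symm hcd
          · exact ⟨d, _, hdP, hda, hdb, hd1, hd2⟩
      · by_cases hcb : c = b
        · by_cases hda : d = a
          · exact absurd (by rw [hcb, hda, Set.pair_comm]) hne
          · by_cases hdb : d = b
            · exact absurd (hdb.trans hcb.symm).symm hcd
            · exact ⟨d, _, hdP, hda, hdb, hd1, hd2⟩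
        · exact ⟨c, _, hcP, hca, hcb, hc1, hc2⟩
    obtain ⟨w, r, hwP, hwa, hwb, hw1, hw2⟩ := hwit
    exact hgp a haP b hbP w hwP hab hwa.symm hwb.symm (collinear_of_on_line r ⟨hw1, hw2⟩)
  constructor
  · obtain ⟨x, y, hx, hy, hxy, hlt⟩ := aux_above hL hM hp1 hp2 hslope
    exact ⟨x, y, Or.inr ⟨f, hf, hx⟩, Or.inr ⟨e, he, hy⟩, hxy, hlt⟩
  · obtain ⟨x, y, hx, hy, hxy, hlt⟩ := aux_above hM hL hp2 hp1 hslope.symm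
    exact ⟨x, y, Or.inr ⟨e, he, hx⟩, Or.inr ⟨f, hf, hy⟩, hxy, hlt⟩
end
end

section
/- Let u₁ and u₂ be two crossing-free geometric graphs on subsets of P. Then u₂ depends on u₁ (i.e., some vertex of u₁ lies in the lower shadow of u₂, or some vertex of u₂ lies in the upper shadow of u₁) if and only if there exists a point on u₂ directly (same x-coordinate) and strictly above a point on u₁. -/
/-!
Statement 1: for crossing-free geometric graphs u₁, u₂ on subsets of P,
u₂ depends on u₁ (via lower/upper shadows) iff some point on u₂ lies directly
(same x-coordinate) and strictly above some point on u₁.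
-/

open scoped Classical

noncomputable section

/-- Lower shadow: points of `P` from which an upward vertical ray meets the
relative interior of some edge of `u`. -/
def lowG {P : Set Pt} (u : GGraph P) : Set Pt :=
  {q ∈ P | ∃ e ∈ u.E, ∃ z ∈ openSegment ℝ e.1 e.2, z.1 = q.1 ∧ q.2 < z.2}

/-- Upper shadow: points of `P` from which a downward vertical ray meets the
relative interior of some edge of `u`. -/
def upG {P : Set Pt} (u : GGraph P) : Set Pt :=
  {q ∈ P | ∃ e ∈ u.E, ∃ z ∈ openSegment ℝ e.1 e.2, z.1 = q.1 ∧ z.2 < q.2}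

/-- `u₂` depends on `u₁`. -/
def GDependsOn {P : Set Pt} (u₁ u₂ : GGraph P) : Prop :=
  (u₁.V ∩ lowG u₂).Nonempty ∨ (upG u₁ ∩ u₂.V).Nonempty

/-- Height of the line through `p` and `q` at abscissa `t`. -/
def lineY (p q : Pt) (t : ℝ) : ℝ := p.2 + (t - p.1) * ((q.2 - p.2) / (q.1 - p.1))

lemma lineY_left (p q : Pt) : lineY p q p.1 = p.2 := by simp [lineY]

lemma lineY_right (p q : Pt) (h : p.1 ≠ q.1) : lineY p q q.1 = q.2 := by
  have h' : q.1 - p.1 ≠ 0 := sub_ne_zero.mpr (Ne.symm h)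
  rw [lineY, mul_div_assoc', mul_div_right_comm, div_self h', one_mul]; ring

lemma mem_openSeg_iff (p q : Pt) (h : p.1 < q.1) (z : Pt) :
    z ∈ openSegment ℝ p q ↔ p.1 < z.1 ∧ z.1 < q.1 ∧ z.2 = lineY p q z.1 := by
  have hd : q.1 - p.1 ≠ 0 := sub_ne_zero.mpr (ne_of_gt h)
  constructor
  · rintro ⟨a, b, ha, hb, hab, hz⟩
    have h1 : z.1 = a * p.1 + b * q.1 := by
      rw [← hz]; simp [Prod.fst_add, Prod.smul_fst, smul_eq_mul]
    have h2 : z.2 = a * p.2 + b * q.2 := by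
      rw [← hz]; simp [Prod.snd_add, Prod.smul_snd, smul_eq_mul]
    have haeq : a = 1 - b := by linarith
    have hbeq : b = 1 - a := by linarith
    have e1 : z.1 - p.1 = b * (q.1 - p.1) := by rw [h1, haeq]; ring
    have e2 : q.1 - z.1 = a * (q.1 - p.1) := by rw [h1, hbeq]; ring
    refine ⟨by nlinarith [mul_pos hb (sub_pos.mpr h)], by nlinarith [mul_pos ha (sub_pos.mpr h)], ?_⟩
    rw [h2, h1, lineY, haeq]
    field_simp
    ring
  · rintro ⟨h1, h2, h3⟩
    refine ⟨1 - (z.1 - p.1) / (q.1 - p.1), (z.1 - p.1) / (q.1 - p.1), ?_, ?_, by ring, ?_⟩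
    · have : (z.1 - p.1) / (q.1 - p.1) < 1 := by
        rw [div_lt_one (by linarith)]; linarith
      linarith
    · exact div_pos (by linarith) (by linarith)
    · have hfst : ((1 - (z.1 - p.1) / (q.1 - p.1)) • p + ((z.1 - p.1) / (q.1 - p.1)) • q).1
          = z.1 := by
        simp only [Prod.fst_add, Prod.smul_fst, smul_eq_mul]
        field_simp
        ring
      have hsnd : ((1 - (z.1 - p.1) / (q.1 - p.1)) • p + ((z.1 - p.1) / (q.1 - p.1)) • q).2
          = z.2 := by
        simp only [Prod.snd_add, Prod.smul_snd, smul_eq_mul]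
        rw [h3, lineY]
        field_simp
        ring
      exact Prod.ext hfst hsnd

lemma affine_pos_dir (A B t₀ : ℝ) (h : 0 < A + B * t₀) :
    (∀ t, t₀ ≤ t → 0 < A + B * t) ∨ (∀ t, t ≤ t₀ → 0 < A + B * t) := by
  rcases le_or_gt 0 B with hB | hB
  · exact Or.inl fun t ht => by nlinarith
  · exact Or.inr fun t ht => by nlinarith

lemma key_segments (p q r s : Pt) (hpq : p.1 < q.1) (hrs : r.1 < s.1)
    (hqs : q.1 = s.1 → q = s) (hpr : p.1 = r.1 → p = r)
    (x y : Pt) (hx : x ∈ openSegment ℝ r s) (hy : y ∈ openSegment ℝ p q)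
    (hxy : x.1 = y.1) (hlt : y.2 < x.2) :
    (∃ z ∈ openSegment ℝ r s, z.1 = p.1 ∧ p.2 < z.2) ∨
    (∃ z ∈ openSegment ℝ r s, z.1 = q.1 ∧ q.2 < z.2) ∨
    (∃ z ∈ openSegment ℝ p q, z.1 = r.1 ∧ z.2 < r.2) ∨
    (∃ z ∈ openSegment ℝ p q, z.1 = s.1 ∧ z.2 < s.2) := by
  have hd1 : q.1 - p.1 ≠ 0 := sub_ne_zero.mpr (ne_of_gt hpq)
  have hd2 : s.1 - r.1 ≠ 0 := sub_ne_zero.mpr (ne_of_gt hrs)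
  obtain ⟨hx1, hx2, hx3⟩ := (mem_openSeg_iff r s hrs x).mp hx
  obtain ⟨hy1, hy2, hy3⟩ := (mem_openSeg_iff p q hpq y).mp hy
  set m₁ : ℝ := (q.2 - p.2) / (q.1 - p.1) with hm₁
  set m₂ : ℝ := (s.2 - r.2) / (s.1 - r.1) with hm₂
  set A : ℝ := r.2 - r.1 * m₂ - p.2 + p.1 * m₁ with hA
  set B : ℝ := m₂ - m₁ with hB
  have hg : ∀ t, lineY r s t - lineY p q t = A + B * t := by
    intro t; rw [lineY, lineY, hA, hB, hm₁, hm₂]; ring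
  have ht₀ : 0 < A + B * x.1 := by
    have h1 := hg x.1
    have h2 : y.2 = lineY p q x.1 := by rw [hxy]; exact hy3
    rw [← hx3, ← h2] at h1
    linarith
  rcases affine_pos_dir A B x.1 ht₀ with hpos | hpos
  · -- positive to the right
    rcases lt_trichotomy q.1 s.1 with h | h | h
    · right; left
      refine ⟨(q.1, lineY r s q.1), ?_, rfl, ?_⟩
      · rw [mem_openSeg_iff r s hrs]
        exact ⟨by rw [hxy] at hx1; linarith, h, rfl⟩
      · have h0 := hpos q.1 (by rw [hxy]; linarith)
        have h1 := hg q.1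
        have h2 : lineY p q q.1 = q.2 := lineY_right p q (ne_of_lt hpq)
        simp only [h2] at h1
        linarith
    · exfalso
      have hqs' := hqs h
      have h0 := hpos q.1 (by rw [hxy]; linarith)
      have h1 := hg q.1
      have h2 : lineY p q q.1 = q.2 := lineY_right p q (ne_of_lt hpq)
      have h3 : lineY r s q.1 = s.2 := by rw [h]; exact lineY_right r s (ne_of_lt hrs)
      rw [h2, h3, hqs'] at h1
      rw [h] at h0
      linarith
    · right; right; right
      refine ⟨(s.1, lineY p q s.1), ?_, rfl, ?_⟩
      · rw [mem_openSeg_iff p q hpq]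
        exact ⟨by rw [hxy] at hx2; linarith, h, rfl⟩
      · have h0 := hpos s.1 (by linarith)
        have h1 := hg s.1
        have h3 : lineY r s s.1 = s.2 := lineY_right r s (ne_of_lt hrs)
        simp only [h3] at h1
        linarith
  · -- positive to the left
    rcases lt_trichotomy r.1 p.1 with h | h | h
    · left
      refine ⟨(p.1, lineY r s p.1), ?_, rfl, ?_⟩
      · rw [mem_openSeg_iff r s hrs]
        exact ⟨h, by rw [hxy] at hx2; linarith, rfl⟩
      · have h0 := hpos p.1 (by rw [hxy]; linarith)
        have h1 := hg p.1
        have h2 : lineY p q p.1 = p.2 := lineY_left p q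
        simp only [h2] at h1
        linarith
    · exfalso
      have hpr' := hpr h.symm
      have h0 := hpos p.1 (by rw [hxy]; linarith)
      have h1 := hg p.1
      have h2 : lineY p q p.1 = p.2 := lineY_left p q
      have h3 : lineY r s p.1 = r.2 := by rw [← h]; exact lineY_left r s
      rw [h2, h3, hpr'] at h1
      rw [← h] at h0
      linarith
    · right; right; left
      refine ⟨(r.1, lineY p q r.1), ?_, rfl, ?_⟩
      · rw [mem_openSeg_iff p q hpq]
        exact ⟨h, by rw [hxy] at hx1; linarith, rfl⟩
      · have h0 := hpos r.1 (by linarith)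
        have h1 := hg r.1
        have h3 : lineY r s r.1 = r.2 := lineY_left r s
        simp only [h3] at h1
        linarith

theorem dependsOn_iff_point_above
    (P : Set Pt) (hPfin : P.Finite) (hgp : GenPos P) (hdx : DistinctX P)
    (u₁ u₂ : GGraph P) (h₁ : u₁.CrossingFree) (h₂ : u₂.CrossingFree) :
    GDependsOn u₁ u₂ ↔
      ∃ x y : Pt, OnG u₂ x ∧ OnG u₁ y ∧ x.1 = y.1 ∧ y.2 < x.2 := by
  constructor
  · rintro (⟨v, hvV, hvP, e, he, z, hz, hz1, hz2⟩ | ⟨v, ⟨hvP, e, he, z, hz, hz1, hz2⟩, hvV⟩)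
    · exact ⟨z, v, Or.inr ⟨e, he, hz⟩, Or.inl hvV, hz1, hz2⟩
    · exact ⟨v, z, Or.inl hvV, Or.inr ⟨e, he, hz⟩, hz1.symm, hz2⟩
  · rintro ⟨x, y, hx, hy, hxy, hlt⟩
    have orient : ∀ (u : GGraph P), ∀ e ∈ u.E, ∃ a b : Pt, a ∈ u.V ∧ b ∈ u.V ∧ a.1 < b.1 ∧
        openSegment ℝ a b = openSegment ℝ e.1 e.2 := by
      intro u e he
      obtain ⟨h1, h2, h3⟩ := u.hE e he
      have hxx : e.1.1 ≠ e.2.1 := hdx _ (u.hVP h1) _ (u.hVP h2) h3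
      rcases lt_or_gt_of_ne hxx with h | h
      · exact ⟨e.1, e.2, h1, h2, h, rfl⟩
      · exact ⟨e.2, e.1, h2, h1, h, openSegment_symm ℝ _ _⟩
    rcases hx with hxV | ⟨e₂, he₂, hxe⟩
    · rcases hy with hyV | ⟨e₁, he₁, hye⟩
      · -- vertex-vertex : impossible by distinct x-coordinates
        exfalso
        have hne : x ≠ y := by intro h; rw [h] at hlt; exact lt_irrefl _ hlt
        exact hdx x (u₂.hVP hxV) y (u₁.hVP hyV) hne hxy
      · -- x vertex of u₂, y on edge of u₁
        exact Or.inr ⟨x, ⟨u₂.hVP hxV, e₁, he₁, y, hye, hxy.symm, hlt⟩, hxV⟩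
    · rcases hy with hyV | ⟨e₁, he₁, hye⟩
      · -- y vertex of u₁, x on edge of u₂
        exact Or.inl ⟨y, hyV, u₁.hVP hyV, e₂, he₂, x, hxe, hxy, hlt⟩
      · -- edge-edge case
        obtain ⟨p, q, hpV, hqV, hpq, hseg1⟩ := orient u₁ e₁ he₁
        obtain ⟨r, s, hrV, hsV, hrs, hseg2⟩ := orient u₂ e₂ he₂
        have hqs : q.1 = s.1 → q = s := by
          intro h
          by_contra hne
          exact hdx q (u₁.hVP hqV) s (u₂.hVP hsV) hne h
        have hpr : p.1 = r.1 → p = r := by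
          intro h
          by_contra hne
          exact hdx p (u₁.hVP hpV) r (u₂.hVP hrV) hne h
        have hx' : x ∈ openSegment ℝ r s := by rw [hseg2]; exact hxe
        have hy' : y ∈ openSegment ℝ p q := by rw [hseg1]; exact hye
        rcases key_segments p q r s hpq hrs hqs hpr x y hx' hy' hxy hlt with
          ⟨z, hz, hz1, hz2⟩ | ⟨z, hz, hz1, hz2⟩ | ⟨z, hz, hz1, hz2⟩ | ⟨z, hz, hz1, hz2⟩
        · exact Or.inl ⟨p, hpV, u₁.hVP hpV, e₂, he₂, z, by rw [← hseg2]; exact hz, hz1, hz2⟩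
        · exact Or.inl ⟨q, hqV, u₁.hVP hqV, e₂, he₂, z, by rw [← hseg2]; exact hz, hz1, hz2⟩
        · exact Or.inr ⟨r, ⟨u₂.hVP hrV, e₁, he₁, z, by rw [← hseg1]; exact hz, hz1, hz2⟩, hrV⟩
        · exact Or.inr ⟨s, ⟨u₂.hVP hsV, e₁, he₁, z, by rw [← hseg1]; exact hz, hz1, hz2⟩, hsV⟩
end
end

section
/- Any finite nonempty set of pairwise disjoint open segments in the plane contains a segment that can be translated vertically upward to infinity in a continuous motion without ever intersecting any of the other segments. -/
def IsOpenSeg (s : Set Pt) : Prop :=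
  ∃ a b : Pt, a ≠ b ∧ s = openSegment ℝ a b

lemma IsOpenSeg.convex {s : Set Pt} (h : IsOpenSeg s) : Convex ℝ s := by
  obtain ⟨a, b, -, rfl⟩ := h; exact convex_openSegment a b

lemma IsOpenSeg.nonempty {s : Set Pt} (h : IsOpenSeg s) : s.Nonempty := by
  obtain ⟨a, b, -, rfl⟩ := h
  exact ⟨_, ⟨1/2, 1/2, by norm_num, by norm_num, by norm_num, rfl⟩⟩

def Below (s t : Set Pt) : Prop :=
  ∃ p ∈ s, ∃ q ∈ t, p.1 = q.1 ∧ p.2 < q.2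

/-- crossing lemma: aligned pairs in opposite vertical order force intersection. -/
lemma crossing {s t : Set Pt} (hs : Convex ℝ s) (ht : Convex ℝ t)
    {p p' q q' : Pt} (hp : p ∈ s) (hp' : p' ∈ s) (hq : q ∈ t) (hq' : q' ∈ t)
    (e1 : p.1 = q.1) (e2 : p'.1 = q'.1) (l1 : p.2 < q.2) (l2 : q'.2 < p'.2) :
    ¬ Disjoint s t := by
  set h0 : ℝ := p.2 - q.2 with hh0
  set h1 : ℝ := p'.2 - q'.2 with hh1
  have h0neg : h0 < 0 := by simp [hh0]; linarith
  have h1pos : 0 < h1 := by simp [hh1]; linarith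
  set u : ℝ := h0 / (h0 - h1) with hu
  have hden : h0 - h1 < 0 := by linarith
  have hu0 : 0 ≤ u := by
    exact le_of_lt (div_pos_of_neg_of_neg h0neg hden)
  have hu1 : u ≤ 1 := by
    rw [hu, div_le_one_of_neg hden]; linarith
  have hzs : (1-u) • p + u • p' ∈ s := hs hp hp' (by linarith) hu0 (by ring)
  have hzt : (1-u) • q + u • q' ∈ t := ht hq hq' (by linarith) hu0 (by ring)
  have key : (1-u) • p + u • p' = (1-u) • q + u • q' := by
    have hne : h0 - h1 ≠ 0 := ne_of_lt hden
    have h2 : (1-u) * p.2 + u * p'.2 = (1-u) * q.2 + u * q'.2 := by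
      have : (1-u) * (p.2 - q.2) + u * (p'.2 - q'.2) = 0 := by
        rw [hu]; field_simp; ring
      linarith [this]
    have h1' : (1-u) * p.1 + u * p'.1 = (1-u) * q.1 + u * q'.1 := by
      rw [e1, e2]
    ext <;> simpa [Prod.smul_def, Prod.add_def] using (by assumption : _)
  intro hd
  exact (Set.disjoint_left.mp hd hzs) (key ▸ hzt)

def projx (s : Set Pt) : Set ℝ := Prod.fst '' s

lemma projx_convex {s : Set Pt} (h : Convex ℝ s) : Convex ℝ (projx s) := by
  have := h.linear_image (LinearMap.fst ℝ ℝ ℝ)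
  simpa [projx] using this

lemma mem_of_between {I : Set ℝ} (hI : Convex ℝ I) {a c m : ℝ}
    (ha : a ∈ I) (hc : c ∈ I) (h1 : a ≤ m) (h2 : m ≤ c) : m ∈ I :=
  hI.ordConnected.out ha hc ⟨h1, h2⟩

lemma sides_aux {I J : Set ℝ} (hI : Convex ℝ I) (hJ : Convex ℝ J)
    (hd : Disjoint I J) {a b : ℝ} (ha : a ∈ I) (hb : b ∈ J) (hab : a < b) :
    ∀ x ∈ I, ∀ y ∈ J, x < y := by
  intro x hx y hy
  by_contra hc
  push_neg at hc
  rcases le_or_gt y a with h | h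
  · exact Set.disjoint_left.mp hd ha (mem_of_between hJ hy hb h (le_of_lt hab))
  · exact Set.disjoint_left.mp hd (mem_of_between hI ha hx (le_of_lt h) hc) hy

lemma sides {I J : Set ℝ} (hI : Convex ℝ I) (hJ : Convex ℝ J)
    (hd : Disjoint I J) {a b : ℝ} (ha : a ∈ I) (hb : b ∈ J) :
    (∀ x ∈ I, ∀ y ∈ J, x < y) ∨ (∀ x ∈ I, ∀ y ∈ J, y < x) := by
  rcases lt_trichotomy a b with h | h | h
  · exact Or.inl (sides_aux hI hJ hd ha hb h)
  · exact absurd (h ▸ ha) (fun h' => Set.disjoint_left.mp hd h' hb)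
  · exact Or.inr (fun x hx y hy => sides_aux hJ hI hd.symm hb ha h y hy x hx)

lemma helly3 {I J K : Set ℝ} (hI : Convex ℝ I) (hJ : Convex ℝ J) (hK : Convex ℝ K)
    {a b c : ℝ} (haI : a ∈ I) (haJ : a ∈ J) (hbJ : b ∈ J) (hbK : b ∈ K)
    (hcK : c ∈ K) (hcI : c ∈ I) : ∃ x, x ∈ I ∧ x ∈ J ∧ x ∈ K := by
  rcases le_total a b with h1 | h1 <;> rcases le_total b c with h2 | h2 <;>
    rcases le_total a c with h3 | h3
  · exact ⟨b, mem_of_between hI haI hcI h1 h2, hbJ, hbK⟩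
  · exact ⟨a, haI, haJ, by rwa [h1.antisymm (h2.trans h3)]⟩
  · exact ⟨c, hcI, mem_of_between hJ haJ hbJ h3 h2, hcK⟩
  · exact ⟨a, haI, haJ, mem_of_between hK hcK hbK h3 h1⟩
  · exact ⟨a, haI, haJ, mem_of_between hK hbK hcK h1 h3⟩
  · exact ⟨c, hcI, mem_of_between hJ hbJ haJ h2 h3, hcK⟩
  · exact ⟨a, haI, haJ, by rwa [(h3.trans h2).antisymm h1]⟩
  · exact ⟨b, mem_of_between hI hcI haI h2 h1, hbJ, hbK⟩
def SegRel (S : Set (Set Pt)) (s t : Set Pt) : Prop :=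
  s ∈ S ∧ t ∈ S ∧ s ≠ t ∧ Below s t

section Family
variable {S : Set (Set Pt)} (hseg : ∀ s ∈ S, IsOpenSeg s)
  (hdisj : ∀ s ∈ S, ∀ t ∈ S, s ≠ t → Disjoint s t)

include hseg hdisj

/-- Consistency: if `s` is somewhere below `t`, it is below at every alignment. -/
lemma below_mono {s t : Set Pt} (hR : SegRel S s t) {p q : Pt}
    (hp : p ∈ s) (hq : q ∈ t) (hx : p.1 = q.1) : p.2 < q.2 := by
  obtain ⟨hsS, htS, hne, pw, hpw, qw, hqw, hxw, hlt⟩ := hR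
  have hd := hdisj s hsS t htS hne
  rcases lt_trichotomy p.2 q.2 with h | h | h
  · exact h
  · exact absurd (Set.disjoint_left.mp hd hp)
      (by rw [show p = q from Prod.ext hx h]; simp [hq])
  · exact absurd hd
      (crossing ((hseg s hsS).convex) ((hseg t htS).convex) hpw hp hqw hq hxw hx hlt h)

lemma overlap_rel {s t : Set Pt} (hsS : s ∈ S) (htS : t ∈ S) (hne : s ≠ t)
    {p q : Pt} (hp : p ∈ s) (hq : q ∈ t) (hx : p.1 = q.1) :
    SegRel S s t ∨ SegRel S t s := by
  rcases lt_trichotomy p.2 q.2 with h | h | h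
  · exact Or.inl ⟨hsS, htS, hne, p, hp, q, hq, hx, h⟩
  · exact absurd (Set.disjoint_left.mp (hdisj s hsS t htS hne) hp)
      (by rw [show p = q from Prod.ext hx h]; simp [hq])
  · exact Or.inr ⟨htS, hsS, hne.symm, q, hq, p, hp, hx.symm, h⟩

lemma rel_asymm {s t : Set Pt} (h1 : SegRel S s t) (h2 : SegRel S t s) : False := by
  obtain ⟨hsS, htS, hne, pw, hpw, qw, hqw, hxw, hlt⟩ := h1
  obtain ⟨-, -, -, u, hu, v, hv, hxu, hlu⟩ := h2
  exact crossing ((hseg s hsS).convex) ((hseg t htS).convex) hpw hv hqw hu hxw hxu.symm hlt hlu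
    (hdisj s hsS t htS hne)



omit hseg hdisj in
lemma below_overlap {s t : Set Pt} (h : Below s t) :
    ∃ x, x ∈ projx s ∧ x ∈ projx t := by
  obtain ⟨p, hp, q, hq, hx, -⟩ := h
  exact ⟨p.1, ⟨p, hp, rfl⟩, ⟨q, hq, hx.symm⟩⟩

lemma no_cycle : ∀ n, 1 ≤ n → ∀ c : ℕ → Set Pt,
    (∀ i < n, SegRel S (c i) (c (i+1))) → c n = c 0 → False := by
  intro n
  induction n using Nat.strong_induction_on with
  | _ n IH =>
    intro hn c hchain hcyc
    have hmem : ∀ i, i ≤ n → c i ∈ S := by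
      intro i hi
      rcases lt_or_eq_of_le hi with h | h
      · exact (hchain i h).1
      · rw [h, hcyc]; exact (hchain 0 hn).1
    -- (A) equality shortcut
    have hA : ∀ i j, i < j → j ≤ n → ¬(i = 0 ∧ j = n) → c i ≠ c j := by
      intro i j hij hjn hnot heq
      rcases eq_or_lt_of_le hjn with heqj | hjn'
      · subst heqj
        refine IH i (by omega) (by omega) c (fun k hk => hchain k (by omega)) ?_
        exact heq.trans hcyc
      · refine IH (n - (j - i)) (by omega) (by omega)
          (fun k => if k ≤ i then c k else c (k + (j - i))) ?_ ?_
        · intro k hk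
          beta_reduce
          rcases lt_trichotomy k i with h | h | h
          · rw [if_pos h.le, if_pos (by omega)]; exact hchain k (by omega)
          · subst h
            rw [if_pos le_rfl, if_neg (by omega)]
            have e : k + 1 + (j - k) = j + 1 := by omega
            rw [e, heq]; exact hchain j (by omega)
          · rw [if_neg (by omega), if_neg (by omega)]
            have e : k + 1 + (j - i) = (k + (j - i)) + 1 := by omega
            rw [e]; exact hchain _ (by omega)
        · beta_reduce
          rw [if_neg (by omega), if_pos (by omega)]
          have e : n - (j - i) + (j - i) = n := by omega
          rw [e, hcyc]
    -- (B) no forward chord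
    have hB : ∀ i j, i + 2 ≤ j → j ≤ n → ¬ SegRel S (c i) (c j) := by
      intro i j hij hjn hR
      refine IH (n - (j - i - 1)) (by omega) (by omega)
        (fun k => if k ≤ i then c k else c (k + (j - i - 1))) ?_ ?_
      · intro k hk
        beta_reduce
        rcases lt_trichotomy k i with h | h | h
        · rw [if_pos h.le, if_pos (by omega)]; exact hchain k (by omega)
        · subst h
          rw [if_pos le_rfl, if_neg (by omega)]
          have e : k + 1 + (j - k - 1) = j := by omega
          rw [e]; exact hR
        · rw [if_neg (by omega), if_neg (by omega)]
          have e : k + 1 + (j - i - 1) = (k + (j - i - 1)) + 1 := by omega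
          rw [e]; exact hchain _ (by omega)
      · beta_reduce
        rw [if_neg (by omega), if_pos (by omega)]
        have e : n - (j - i - 1) + (j - i - 1) = n := by omega
        rw [e, hcyc]
    -- (C) no short backward chord
    have hC : ∀ i j, i < j → j ≤ n → j - i + 1 < n → ¬ SegRel S (c j) (c i) := by
      intro i j hij hjn hsh hR
      refine IH (j - i + 1) (by omega) (by omega)
        (fun k => if k ≤ j - i then c (i + k) else c i) ?_ ?_
      · intro k hk
        beta_reduce
        rcases lt_trichotomy k (j - i) with h | h | h
        · rw [if_pos h.le, if_pos (by omega)]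
          have e : i + (k + 1) = (i + k) + 1 := by omega
          rw [e]; exact hchain _ (by omega)
        · subst h
          rw [if_pos le_rfl, if_neg (by omega)]
          have e : i + (j - i) = j := by omega
          rw [e]; exact hR
        · omega
      · beta_reduce
        rw [if_neg (by omega), if_pos (by omega)]
        norm_num
    -- (D) disjoint projections for far apart indices
    have hD : ∀ i j, i + 2 ≤ j → j ≤ n → j - i + 1 < n →
        Disjoint (projx (c i)) (projx (c j)) := by
      intro i j hij hjn hsh
      rw [Set.disjoint_left]
      rintro x ⟨p, hp, rfl⟩ ⟨q, hq, hx⟩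
      have hne : c i ≠ c j := hA i j (by omega) hjn (by omega)
      rcases overlap_rel hseg hdisj (hmem i (by omega)) (hmem j hjn) hne hp hq hx.symm with h | h
      · exact hB i j hij hjn h
      · exact hC i j (by omega) hjn hsh h
    rcases (by omega : n = 1 ∨ n = 2 ∨ n = 3 ∨ 4 ≤ n) with h1 | h2 | h3 | h4
    · subst h1
      exact (hchain 0 (by norm_num)).2.2.1 hcyc.symm
    · subst h2
      have e0 := hchain 0 (by norm_num)
      have e1 := hchain 1 (by norm_num)
      rw [show c (1+1) = c 0 from hcyc] at e1
      exact rel_asymm hseg hdisj e0 e1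
    · subst h3
      have e0 := hchain 0 (by norm_num)
      have e1 := hchain 1 (by norm_num)
      have e2 := hchain 2 (by norm_num)
      rw [show c (2+1) = c 0 from hcyc] at e2
      obtain ⟨x0, hx00, hx01⟩ := below_overlap e0.2.2.2
      obtain ⟨x1, hx11, hx12⟩ := below_overlap e1.2.2.2
      obtain ⟨x2, hx22, hx20⟩ := below_overlap e2.2.2.2
      obtain ⟨x, hxI, hxJ, hxK⟩ := helly3 (projx_convex (hseg _ e0.1).convex)
        (projx_convex (hseg _ e1.1).convex) (projx_convex (hseg _ e2.1).convex)
        hx00 hx01 hx11 hx12 hx22 hx20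
      obtain ⟨p0, hp0, hp0x⟩ := hxI
      obtain ⟨p1, hp1, hp1x⟩ := hxJ
      obtain ⟨p2, hp2, hp2x⟩ := hxK
      have l0 : p0.2 < p1.2 := below_mono hseg hdisj e0 hp0 hp1 (hp0x.trans hp1x.symm)
      have l1 : p1.2 < p2.2 := below_mono hseg hdisj e1 hp1 hp2 (hp1x.trans hp2x.symm)
      have l2 : p2.2 < p0.2 := below_mono hseg hdisj e2 hp2 hp0 (hp2x.trans hp0x.symm)
      linarith
    · -- n ≥ 4
      have hP : ∀ j, j ≤ n → Convex ℝ (projx (c j)) :=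
        fun j hj => projx_convex (hseg _ (hmem j hj)).convex
      have e0 := hchain 0 (by omega)
      have e1 := hchain 1 (by omega)
      have en1 := hchain (n-1) (by omega)
      have en2 := hchain (n-2) (by omega)
      rw [show n - 1 + 1 = n by omega, hcyc] at en1
      rw [show n - 2 + 1 = n - 1 by omega] at en2
      obtain ⟨a, haP0, haP1⟩ := below_overlap e0.2.2.2
      obtain ⟨w, hwP1, hwP2⟩ := below_overlap e1.2.2.2
      obtain ⟨b, hbPn1, hbP0⟩ := below_overlap en1.2.2.2
      obtain ⟨d, hdPn2, hdPn1⟩ := below_overlap en2.2.2.2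
      have hside : ∀ j, 2 ≤ j → j ≤ n - 2 →
          (∀ x ∈ projx (c 0), ∀ y ∈ projx (c j), x < y) ∨
          (∀ x ∈ projx (c 0), ∀ y ∈ projx (c j), y < x) := by
        intro j h2 hj2
        obtain ⟨p, hp⟩ := (hseg _ (hmem j (by omega))).nonempty
        exact sides (hP 0 (by omega)) (hP j (by omega))
          (hD 0 j (by omega) (by omega) (by omega)) haP0 ⟨p, hp, rfl⟩
      rcases hside 2 le_rfl (by omega) with hup | hdn
      · have hall : ∀ j, 2 ≤ j → j ≤ n - 2 →
            ∀ x ∈ projx (c 0), ∀ y ∈ projx (c j), x < y := by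
          intro j h2
          induction j, h2 using Nat.le_induction with
          | base => intro _; exact hup
          | succ j hj IH2 =>
            intro hj1
            have hUj := IH2 (by omega)
            obtain ⟨z, hz1, hz2⟩ := below_overlap (hchain j (by omega)).2.2.2
            rcases hside (j+1) (by omega) hj1 with h | h
            · exact h
            · exact absurd (hUj a haP0 z hz1) (asymm (h a haP0 z hz2))
        have hwa : a < w := hall 2 le_rfl (by omega) a haP0 w hwP2
        have hwb : b < w := hall 2 le_rfl (by omega) b hbP0 w hwP2
        have hda : a < d := hall (n-2) (by omega) (by omega) a haP0 d hdPn2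
        have hdb : b < d := hall (n-2) (by omega) (by omega) b hbP0 d hdPn2
        have hm1 : max a b ∈ projx (c 1) :=
          mem_of_between (hP 1 (by omega)) haP1 hwP1 (le_max_left a b)
            (max_le hwa.le hwb.le)
        have hm2 : max a b ∈ projx (c (n-1)) :=
          mem_of_between (hP (n-1) (by omega)) hbPn1 hdPn1 (le_max_right a b)
            (max_le hda.le hdb.le)
        exact Set.disjoint_left.mp (hD 1 (n-1) (by omega) (by omega) (by omega)) hm1 hm2
      · have hall : ∀ j, 2 ≤ j → j ≤ n - 2 →
            ∀ x ∈ projx (c 0), ∀ y ∈ projx (c j), y < x := by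
          intro j h2
          induction j, h2 using Nat.le_induction with
          | base => intro _; exact hdn
          | succ j hj IH2 =>
            intro hj1
            have hUj := IH2 (by omega)
            obtain ⟨z, hz1, hz2⟩ := below_overlap (hchain j (by omega)).2.2.2
            rcases hside (j+1) (by omega) hj1 with h | h
            · exact absurd (hUj a haP0 z hz1) (asymm (h a haP0 z hz2))
            · exact h
        have hwa : w < a := hall 2 le_rfl (by omega) a haP0 w hwP2
        have hwb : w < b := hall 2 le_rfl (by omega) b hbP0 w hwP2
        have hda : d < a := hall (n-2) (by omega) (by omega) a haP0 d hdPn2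
        have hdb : d < b := hall (n-2) (by omega) (by omega) b hbP0 d hdPn2
        have hm1 : min a b ∈ projx (c 1) :=
          mem_of_between (hP 1 (by omega)) hwP1 haP1
            (le_min hwa.le hwb.le) (min_le_left a b)
        have hm2 : min a b ∈ projx (c (n-1)) :=
          mem_of_between (hP (n-1) (by omega)) hdPn1 hbPn1
            (le_min hda.le hdb.le) (min_le_right a b)
        exact Set.disjoint_left.mp (hD 1 (n-1) (by omega) (by omega) (by omega)) hm1 hm2

end Family

lemma transGen_chain {α : Type*} {r : α → α → Prop} {a b : α} (h : Relation.TransGen r a b) :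
    ∃ n, 1 ≤ n ∧ ∃ c : ℕ → α, c 0 = a ∧ c n = b ∧ ∀ i < n, r (c i) (c (i+1)) := by
  induction h with
  | @single b' hr =>
    refine ⟨1, le_rfl, fun k => if k = 0 then a else b', if_pos rfl, if_neg one_ne_zero, ?_⟩
    intro i hi
    interval_cases i
    simpa using hr
  | @tail b' c' hab hbc IH =>
    obtain ⟨n, hn, c, h0, hnb, hch⟩ := IH
    refine ⟨n + 1, by omega, fun k => if k ≤ n then c k else c', ?_, ?_, ?_⟩
    · beta_reduce; rw [if_pos (by omega)]; exact h0
    · beta_reduce; rw [if_neg (by omega)]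
    · intro i hi
      beta_reduce
      rcases lt_or_eq_of_le (by omega : i + 1 ≤ n + 1) with h | h
      · rw [if_pos (by omega), if_pos (by omega)]; exact hch i (by omega)
      · rw [if_pos (by omega), if_neg (by omega)]
        have : i = n := by omega
        rw [this, hnb]; exact hbc

lemma finset_exists_max {α : Type*} {r : α → α → Prop}
    (htrans : Transitive r) (hirr : ∀ a, ¬ r a a) :
    ∀ F : Finset α, F.Nonempty → ∃ m ∈ F, ∀ t ∈ F, ¬ r m t := by
  classical
  intro F
  induction F using Finset.induction_on with
  | empty => rintro ⟨x, hx⟩; simp at hx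
  | @insert a F ha IH =>
    intro _
    rcases F.eq_empty_or_nonempty with rfl | hFne
    · refine ⟨a, Finset.mem_insert_self a _, ?_⟩
      intro t ht
      simp only [Finset.mem_insert, Finset.notMem_empty, or_false] at ht
      cases ht; exact hirr a
    · obtain ⟨m, hmF, hmax⟩ := IH hFne
      by_cases hma : r m a
      · refine ⟨a, Finset.mem_insert_self a _, ?_⟩
        intro t ht hat
        rcases Finset.mem_insert.mp ht with rfl | htF
        · exact hirr t hat
        · exact hmax t htF (htrans hma hat)
      · refine ⟨m, Finset.mem_insert_of_mem hmF, ?_⟩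
        intro t ht hmt
        rcases Finset.mem_insert.mp ht with rfl | htF
        · exact hma hmt
        · exact hmax t htF hmt

theorem exists_upward_movable_segment
    (S : Set (Set Pt)) (hfin : S.Finite) (hne : S.Nonempty)
    (hseg : ∀ s ∈ S, IsOpenSeg s)
    (hdisj : ∀ s ∈ S, ∀ t ∈ S, s ≠ t → Disjoint s t) :
    ∃ s ∈ S, ∀ t : ℝ, 0 ≤ t → ∀ s' ∈ S, s' ≠ s →
      Disjoint ((fun z : Pt => z + ((0 : ℝ), t)) '' s) s' := by
  classical
  have htrans : Transitive (Relation.TransGen (SegRel S)) := fun a b c h1 h2 => h1.trans h2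
  have hirr : ∀ a, ¬ Relation.TransGen (SegRel S) a a := by
    intro a h
    obtain ⟨n, hn, c, h0, hn', hch⟩ := transGen_chain h
    exact no_cycle hseg hdisj n hn c hch (hn'.trans h0.symm)
  obtain ⟨m, hmF, hmax⟩ := finset_exists_max htrans hirr hfin.toFinset (by simpa using hne)
  have hmS : m ∈ S := by simpa using hmF
  refine ⟨m, hmS, ?_⟩
  intro t ht s' hs' hne'
  rw [Set.disjoint_left]
  rintro z ⟨p, hp, rfl⟩ hz'
  rcases eq_or_lt_of_le ht with rfl | htpos
  · have hz'' : p + ((0:ℝ), (0:ℝ)) ∈ s' := hz'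
    have hpp : p + ((0:ℝ), (0:ℝ)) = p := by ext <;> simp
    rw [hpp] at hz''
    exact Set.disjoint_left.mp (hdisj m hmS s' hs' (Ne.symm hne')) hp hz''
  · have hb : Below m s' := ⟨p, hp, p + (0, t), hz', by simp, by simp [htpos]⟩
    exact hmax s' (by simpa using hs')
      (Relation.TransGen.single ⟨hmS, hs', Ne.symm hne', hb⟩)
end

section
/- Every nonempty crossing-free set C of segments with endpoints in P contains a right-most extreme element: a segment u such that no other segment of C depends on u, and every other extreme segment of C lies to the left of u (its rightmost endpoint precedes the leftmost endpoint of u in x-order or equals it under the ordering of extreme elements). Moreover, removing this element leaves a crossing-free set. Hence the set of crossing-free combinations of segments on P is serializable. -/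
/-!
Statement 3: every nonempty crossing-free set of segments on P contains a
right-most extreme element, and removing it leaves a crossing-free set; hence
the family of crossing-free segment combinations is serializable.
-/

open scoped Classical

noncomputable section

/-- A segment on `P`, normalized so that the left endpoint comes first
(points of `P` have pairwise distinct x-coordinates). -/
def IsSegOn (P : Set Pt) (s : Pt × Pt) : Prop :=
  s.1 ∈ P ∧ s.2 ∈ P ∧ s.1.1 < s.2.1

/-- Vertex points of a segment. -/
def segV (s : Pt × Pt) : Set Pt := {s.1, s.2}

/-- Lower shadow of a segment: points of `P` strictly below its relative interior. -/
def lowS (P : Set Pt) (s : Pt × Pt) : Set Pt :=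
  {q ∈ P | ∃ z ∈ openSegment ℝ s.1 s.2, z.1 = q.1 ∧ q.2 < z.2}

/-- Upper shadow of a segment: points of `P` strictly above its relative interior. -/
def upS (P : Set Pt) (s : Pt × Pt) : Set Pt :=
  {q ∈ P | ∃ z ∈ openSegment ℝ s.1 s.2, z.1 = q.1 ∧ z.2 < q.2}

/-- `u₂` depends on `u₁`. -/
def SDependsOn (P : Set Pt) (u₁ u₂ : Pt × Pt) : Prop :=
  (segV u₁ ∩ lowS P u₂).Nonempty ∨ (upS P u₁ ∩ segV u₂).Nonempty

/-- Two distinct segments cross: their relative interiors intersect. -/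
def SCross (u v : Pt × Pt) : Prop :=
  (openSegment ℝ u.1 u.2 ∩ openSegment ℝ v.1 v.2).Nonempty ∧ u ≠ v

/-- A crossing-free set of segments. -/
def SCFree (C : Set (Pt × Pt)) : Prop := ∀ u ∈ C, ∀ v ∈ C, ¬ SCross u v

/-- `u` is extreme in `C`: no other element of `C` depends on `u`. -/
def SExtreme (P : Set Pt) (C : Set (Pt × Pt)) (u : Pt × Pt) : Prop :=
  u ∈ C ∧ ∀ v ∈ C, v ≠ u → ¬ SDependsOn P u v

/-- `u` is the right-most extreme element of `C`: every other extreme element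
lies to the left of `u` (its right endpoint does not go beyond the left
endpoint of `u` in x-order). -/
def SRME (P : Set Pt) (C : Set (Pt × Pt)) (u : Pt × Pt) : Prop :=
  SExtreme P C u ∧ ∀ v, SExtreme P C v → v ≠ u → v.2.1 ≤ u.1.1

/-- Vertex points of a combination. -/
def ptsS (C : Set (Pt × Pt)) : Set Pt := ⋃ s ∈ C, segV s

/-- Lower shadow of a combination. -/
def lowSC (P : Set Pt) (C : Set (Pt × Pt)) : Set Pt := ⋃ s ∈ C, lowS P s

namespace CFAux

def ySeg (s : Pt × Pt) (x : ℝ) : ℝ :=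
  s.1.2 + (x - s.1.1) * (s.2.2 - s.1.2) / (s.2.1 - s.1.1)

lemma ySeg_cont (s : Pt × Pt) : Continuous (ySeg s) := by
  unfold ySeg; fun_prop

lemma ySeg_left (s : Pt × Pt) : ySeg s s.1.1 = s.1.2 := by
  unfold ySeg; ring

lemma ySeg_right {s : Pt × Pt} (hs : s.1.1 < s.2.1) : ySeg s s.2.1 = s.2.2 := by
  have h : s.2.1 - s.1.1 ≠ 0 := sub_ne_zero.mpr hs.ne'
  unfold ySeg; field_simp; ring

lemma mem_openSegment_iff {s : Pt × Pt} (hs : s.1.1 < s.2.1) (z : Pt) :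
    z ∈ openSegment ℝ s.1 s.2 ↔ (s.1.1 < z.1 ∧ z.1 < s.2.1 ∧ z.2 = ySeg s z.1) := by
  have hne : s.2.1 - s.1.1 ≠ 0 := sub_ne_zero.mpr hs.ne'
  rw [openSegment_eq_image]
  constructor
  · rintro ⟨θ, ⟨hθ0, hθ1⟩, rfl⟩
    have hx : ((1 - θ) • s.1 + θ • s.2).1 = s.1.1 + θ * (s.2.1 - s.1.1) := by
      simp [Prod.fst_add, Prod.smul_fst, smul_eq_mul]; ring
    have hy : ((1 - θ) • s.1 + θ • s.2).2 = s.1.2 + θ * (s.2.2 - s.1.2) := by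
      simp [Prod.snd_add, Prod.smul_snd, smul_eq_mul]; ring
    refine ⟨?_, ?_, ?_⟩
    · rw [hx]; nlinarith
    · rw [hx]; nlinarith
    · rw [hx, hy]; unfold ySeg; field_simp; ring
  · rintro ⟨h1, h2, h3⟩
    refine ⟨(z.1 - s.1.1) / (s.2.1 - s.1.1), ⟨?_, ?_⟩, ?_⟩
    · exact div_pos (by linarith) (by linarith)
    · rw [div_lt_one (by linarith)]; linarith
    · have hz : z = (z.1, z.2) := rfl
      rw [hz, Prod.ext_iff]
      constructor
      · simp only [Prod.fst_add, Prod.smul_fst, smul_eq_mul]; field_simp; ring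
      · simp only [Prod.snd_add, Prod.smul_snd, smul_eq_mul]
        rw [h3]; unfold ySeg; field_simp; ring

lemma openSegment_collinear {s : Pt × Pt} {z : Pt} (hz : z ∈ openSegment ℝ s.1 s.2) :
    Collinear ℝ ({z, s.1, s.2} : Set Pt) := by
  rw [openSegment_eq_image_lineMap] at hz
  obtain ⟨θ, _, rfl⟩ := hz
  exact collinear_insert_of_mem_affineSpan_pair (AffineMap.lineMap_mem_affineSpan_pair θ _ _)

lemma ne_of_x_ne {a b : Pt} (h : a.1 ≠ b.1) : a ≠ b := fun he => h (by rw [he])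

/-- `v` lies strictly above `u` on their (nonempty) open common vertical strip. -/
def Rel (u v : Pt × Pt) : Prop :=
  max u.1.1 v.1.1 < min u.2.1 v.2.1 ∧
  ∀ x ∈ Set.Ioo (max u.1.1 v.1.1) (min u.2.1 v.2.1), ySeg u x < ySeg v x

lemma no_touch {C : Set (Pt × Pt)} (hCF : SCFree C) {u v : Pt × Pt}
    (hu : u ∈ C) (hv : v ∈ C) (huv : u ≠ v)
    (hsu : u.1.1 < u.2.1) (hsv : v.1.1 < v.2.1) {x : ℝ}
    (hx : x ∈ Set.Ioo (max u.1.1 v.1.1) (min u.2.1 v.2.1)) : ySeg u x ≠ ySeg v x := by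
  intro h
  obtain ⟨hx1, hx2⟩ := hx
  apply hCF u hu v hv
  refine ⟨⟨(x, ySeg u x), ?_, ?_⟩, huv⟩
  · exact (mem_openSegment_iff hsu _).mpr
      ⟨lt_of_le_of_lt (le_max_left _ _) hx1, hx2.trans_le (min_le_left _ _), rfl⟩
  · exact (mem_openSegment_iff hsv _).mpr
      ⟨lt_of_le_of_lt (le_max_right _ _) hx1, hx2.trans_le (min_le_right _ _), h⟩

lemma dichotomy {C : Set (Pt × Pt)} (hCF : SCFree C) {u v : Pt × Pt}
    (hu : u ∈ C) (hv : v ∈ C) (huv : u ≠ v)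
    (hsu : u.1.1 < u.2.1) (hsv : v.1.1 < v.2.1)
    (hpq : max u.1.1 v.1.1 < min u.2.1 v.2.1) :
    Rel u v ∨ Rel v u := by
  set p := max u.1.1 v.1.1 with hp
  set q := min u.2.1 v.2.1 with hq
  have hcomm : max v.1.1 u.1.1 = p := max_comm _ _
  have hcomm' : min v.2.1 u.2.1 = q := min_comm _ _
  by_contra hc
  push_neg at hc
  obtain ⟨hc1, hc2⟩ := hc
  rw [Rel] at hc1 hc2
  push_neg at hc1 hc2
  obtain ⟨x2, hx2, h2⟩ := hc1 hpq
  obtain ⟨x1, hx1, h1⟩ := hc2 (by rw [hcomm, hcomm']; exact hpq)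
  rw [hcomm, hcomm'] at hx1
  -- h2 : ySeg v x2 ≤ ySeg u x2,  h1 : ySeg u x1 ≤ ySeg v x1 (as non-strict); sharpen
  have h2' : ySeg v x2 < ySeg u x2 :=
    lt_of_le_of_ne h2 (fun he => no_touch hCF hv hu huv.symm hsv hsu
      (by rw [hcomm, hcomm']; exact hx2) he)
  have h1' : ySeg u x1 < ySeg v x1 :=
    lt_of_le_of_ne h1 (fun he => no_touch hCF hu hv huv hsu hsv hx1 he)
  set f : ℝ → ℝ := fun x => ySeg v x - ySeg u x with hf
  have hfc : Continuous f := (ySeg_cont v).sub (ySeg_cont u)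
  have hroot : ∃ x ∈ Set.Ioo p q, f x = 0 := by
    rcases lt_trichotomy x1 x2 with hlt | heq | hgt
    · have := intermediate_value_Ioo' hlt.le hfc.continuousOn
        (a := x1) (b := x2) (f := f)
      obtain ⟨x, hx, hfx⟩ := this (show (0:ℝ) ∈ Set.Ioo (f x2) (f x1) from
        ⟨by simp only [hf]; linarith, by simp only [hf]; linarith⟩)
      exact ⟨x, ⟨hx1.1.trans hx.1, hx.2.trans hx2.2⟩, hfx⟩
    · exfalso; rw [heq] at h1'; linarith
    · have := intermediate_value_Ioo hgt.le hfc.continuousOn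
        (a := x2) (b := x1) (f := f)
      obtain ⟨x, hx, hfx⟩ := this (show (0:ℝ) ∈ Set.Ioo (f x2) (f x1) from
        ⟨by simp only [hf]; linarith, by simp only [hf]; linarith⟩)
      exact ⟨x, ⟨hx2.1.trans hx.1, hx.2.trans hx1.2⟩, hfx⟩
  obtain ⟨x, hx, hfx⟩ := hroot
  exact no_touch hCF hu hv huv hsu hsv hx (by simp [hf] at hfx; linarith)

lemma exists_pos_in_Ioo {f : ℝ → ℝ} (hf : Continuous f) {p q x0 : ℝ} (hpq : p < q)
    (hx0 : x0 = p ∨ x0 = q) (h : 0 < f x0) : ∃ x ∈ Set.Ioo p q, 0 < f x := by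
  have hc : x0 ∈ closure (Set.Ioo p q) := by
    rw [closure_Ioo hpq.ne]
    rcases hx0 with rfl | rfl
    · exact ⟨le_refl _, hpq.le⟩
    · exact ⟨hpq.le, le_refl _⟩
  obtain ⟨x, hx1, hx2⟩ := (mem_closure_iff.mp hc) (f ⁻¹' Set.Ioi 0)
    (isOpen_Ioi.preimage hf) h
  exact ⟨x, hx2, hx1⟩

lemma nonneg_at_boundary {f : ℝ → ℝ} (hf : Continuous f) {p q x0 : ℝ} (hpq : p < q)
    (hx0 : x0 = p ∨ x0 = q) (h : ∀ x ∈ Set.Ioo p q, 0 < f x) : 0 ≤ f x0 := by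
  by_contra hneg
  push_neg at hneg
  obtain ⟨x, hx, hfx⟩ := exists_pos_in_Ioo hf.neg hpq hx0 (by simpa using hneg)
  have hx' : f x < 0 := by simpa using hfx
  linarith [h x hx]

lemma rel_of_boundary {C : Set (Pt × Pt)} (hCF : SCFree C) {u v : Pt × Pt}
    (hu : u ∈ C) (hv : v ∈ C) (huv : u ≠ v)
    (hsu : u.1.1 < u.2.1) (hsv : v.1.1 < v.2.1)
    (hpq : max u.1.1 v.1.1 < min u.2.1 v.2.1) {x0 : ℝ}
    (hx0 : x0 = max u.1.1 v.1.1 ∨ x0 = min u.2.1 v.2.1)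
    (hlt : ySeg u x0 < ySeg v x0) : Rel u v := by
  rcases dichotomy hCF hu hv huv hsu hsv hpq with h | h
  · exact h
  · exfalso
    obtain ⟨_, h2⟩ := h
    rw [max_comm, min_comm] at h2
    have hbd : 0 ≤ (fun x => ySeg u x - ySeg v x) x0 :=
      nonneg_at_boundary ((ySeg_cont u).sub (ySeg_cont v)) hpq hx0
        (fun x hx => by simp; linarith [h2 x hx])
    simp at hbd; linarith

lemma rel_anti {u v : Pt × Pt} (h1 : Rel u v) (h2 : Rel v u) : False := by
  obtain ⟨hpq, hab⟩ := h1
  obtain ⟨_, hba⟩ := h2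
  rw [max_comm, min_comm] at hba
  set x := (max u.1.1 v.1.1 + min u.2.1 v.2.1) / 2 with hx
  have hmem : x ∈ Set.Ioo (max u.1.1 v.1.1) (min u.2.1 v.2.1) :=
    ⟨by rw [hx]; linarith, by rw [hx]; linarith⟩
  linarith [hab x hmem, hba x hmem]

/-- Dependence implies the "above on overlap" relation. -/
lemma dep_rel {P : Set Pt} {C : Set (Pt × Pt)} (hCF : SCFree C) {u v : Pt × Pt}
    (hu : u ∈ C) (hv : v ∈ C) (huv : u ≠ v)
    (hsu : IsSegOn P u) (hsv : IsSegOn P v)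
    (hdep : SDependsOn P u v) : Rel u v := by
  obtain ⟨_, _, hsu'⟩ := hsu
  obtain ⟨_, _, hsv'⟩ := hsv
  rcases hdep with ⟨a, haU, _, z, hz, hz1, hz2⟩ | ⟨b, ⟨_, z, hz, hz1, hz2⟩, hbV⟩
  · -- a vertex of u lies below the interior of v
    obtain ⟨hzl, hzr, hzy⟩ := (mem_openSegment_iff hsv' z).mp hz
    rw [hz1] at hzl hzr hzy
    simp only [segV, Set.mem_insert_iff, Set.mem_singleton_iff] at haU
    rcases haU with rfl | rfl
    · -- a = u.1 : its x-coordinate is the left end of the overlap strip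
      refine rel_of_boundary hCF hu hv huv hsu' hsv'
        (by rw [max_eq_left hzl.le]; exact lt_min hsu' hzr)
        (Or.inl (max_eq_left hzl.le).symm) ?_
      rw [ySeg_left, ← hzy]; exact hz2
    · -- a = u.2 : its x-coordinate is the right end of the overlap strip
      refine rel_of_boundary hCF hu hv huv hsu' hsv'
        (by rw [min_eq_left hzr.le]; exact max_lt hsu' hzl)
        (Or.inr (min_eq_left hzr.le).symm) ?_
      rw [ySeg_right hsu', ← hzy]; exact hz2
  · -- a vertex of v lies above the interior of u
    obtain ⟨hzl, hzr, hzy⟩ := (mem_openSegment_iff hsu' z).mp hz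
    rw [hz1] at hzl hzr hzy
    simp only [segV, Set.mem_insert_iff, Set.mem_singleton_iff] at hbV
    rcases hbV with rfl | rfl
    · refine rel_of_boundary hCF hu hv huv hsu' hsv'
        (by rw [max_eq_right hzl.le]; exact lt_min hzr hsv')
        (Or.inl (max_eq_right hzl.le).symm) ?_
      rw [ySeg_left, ← hzy]; exact hz2
    · refine rel_of_boundary hCF hu hv huv hsu' hsv'
        (by rw [min_eq_right hzr.le]; exact max_lt hzl hsv')
        (Or.inr (min_eq_right hzr.le).symm) ?_
      rw [ySeg_right hsv', ← hzy]; exact hz2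

/-- The "above on overlap" relation implies dependence (uses general position). -/
lemma rel_dep {P : Set Pt} (hgp : GenPos P) (hdx : DistinctX P) {u v : Pt × Pt}
    (huv : u ≠ v) (hsu : IsSegOn P u) (hsv : IsSegOn P v)
    (hrel : Rel u v) : SDependsOn P u v := by
  obtain ⟨hu1P, hu2P, hsu'⟩ := hsu
  obtain ⟨hv1P, hv2P, hsv'⟩ := hsv
  obtain ⟨hpq, habove⟩ := hrel
  have hfc : Continuous (fun x => ySeg v x - ySeg u x) :=
    (ySeg_cont v).sub (ySeg_cont u)
  have hbd : ∀ x0 : ℝ, x0 = max u.1.1 v.1.1 ∨ x0 = min u.2.1 v.2.1 →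
      ySeg u x0 ≤ ySeg v x0 := by
    intro x0 hx0
    have := nonneg_at_boundary hfc hpq hx0
      (fun x hx => by linarith [habove x hx])
    have h2 : (0:ℝ) ≤ ySeg v x0 - ySeg u x0 := this
    linarith
  rcases lt_trichotomy v.2.1 u.2.1 with hlt | heq | hgt
  · -- right endpoint of v is inside the strip of u; it lies above u
    have hm := hpq; rw [min_eq_right hlt.le] at hm
    have hx0u : u.1.1 < v.2.1 := (le_max_left _ _).trans_lt hm
    have h0 : ySeg u v.2.1 ≤ v.2.2 := by
      have := hbd v.2.1 (Or.inr (min_eq_right hlt.le).symm)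
      rwa [ySeg_right hsv'] at this
    have hne0 : ySeg u v.2.1 ≠ v.2.2 := by
      intro he
      have hmem : v.2 ∈ openSegment ℝ u.1 u.2 :=
        (mem_openSegment_iff hsu' v.2).mpr ⟨hx0u, hlt, he.symm⟩
      exact hgp v.2 hv2P u.1 hu1P u.2 hu2P (ne_of_x_ne hx0u.ne') (ne_of_x_ne hlt.ne)
        (ne_of_x_ne hsu'.ne) (openSegment_collinear hmem)
    refine Or.inr ⟨v.2, ⟨hv2P, (v.2.1, ySeg u v.2.1),
      (mem_openSegment_iff hsu' _).mpr ⟨hx0u, hlt, rfl⟩, rfl, lt_of_le_of_ne h0 hne0⟩, ?_⟩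
    simp [segV]
  · -- shared right endpoint; compare left endpoints
    have h22 : v.2 = u.2 := by
      by_contra h
      exact hdx v.2 hv2P u.2 hu2P h heq
    rcases lt_trichotomy u.1.1 v.1.1 with hl | heql | hr
    · -- left endpoint of v is inside the strip of u
      have hm := hpq; rw [max_eq_right hl.le] at hm
      have hx0u : v.1.1 < u.2.1 := hm.trans_le (min_le_left _ _)
      have h0 : ySeg u v.1.1 ≤ v.1.2 := by
        have := hbd v.1.1 (Or.inl (max_eq_right hl.le).symm)
        rwa [ySeg_left] at this
      have hne0 : ySeg u v.1.1 ≠ v.1.2 := by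
        intro he
        have hmem : v.1 ∈ openSegment ℝ u.1 u.2 :=
          (mem_openSegment_iff hsu' v.1).mpr ⟨hl, hx0u, he.symm⟩
        exact hgp v.1 hv1P u.1 hu1P u.2 hu2P (ne_of_x_ne hl.ne') (ne_of_x_ne hx0u.ne)
          (ne_of_x_ne hsu'.ne) (openSegment_collinear hmem)
      refine Or.inr ⟨v.1, ⟨hv1P, (v.1.1, ySeg u v.1.1),
        (mem_openSegment_iff hsu' _).mpr ⟨hl, hx0u, rfl⟩, rfl, lt_of_le_of_ne h0 hne0⟩, ?_⟩
      simp [segV]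
    · -- both endpoints shared: u = v, contradiction
      exfalso
      have h11 : u.1 = v.1 := by
        by_contra h
        exact hdx u.1 hu1P v.1 hv1P h heql
      exact huv (Prod.ext_iff.mpr ⟨h11, h22.symm⟩)
    · -- left endpoint of u is inside the strip of v; it lies below v
      have hm := hpq; rw [max_eq_left hr.le] at hm
      have hx0v : u.1.1 < v.2.1 := hm.trans_le (min_le_right _ _)
      have h0 : u.1.2 ≤ ySeg v u.1.1 := by
        have := hbd u.1.1 (Or.inl (max_eq_left hr.le).symm)
        rwa [ySeg_left] at this
      have hne0 : u.1.2 ≠ ySeg v u.1.1 := by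
        intro he
        have hmem : u.1 ∈ openSegment ℝ v.1 v.2 :=
          (mem_openSegment_iff hsv' u.1).mpr ⟨hr, hx0v, he⟩
        exact hgp u.1 hu1P v.1 hv1P v.2 hv2P (ne_of_x_ne hr.ne') (ne_of_x_ne hx0v.ne)
          (ne_of_x_ne hsv'.ne) (openSegment_collinear hmem)
      refine Or.inl ⟨u.1, ?_, ⟨hu1P, (u.1.1, ySeg v u.1.1),
        (mem_openSegment_iff hsv' _).mpr ⟨hr, hx0v, rfl⟩, rfl, lt_of_le_of_ne h0 hne0⟩⟩
      simp [segV]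
  · -- right endpoint of u is inside the strip of v; it lies below v
    have hm := hpq; rw [min_eq_left hgt.le] at hm
    have hx0v : v.1.1 < u.2.1 := (le_max_right _ _).trans_lt hm
    have h0 : u.2.2 ≤ ySeg v u.2.1 := by
      have := hbd u.2.1 (Or.inr (min_eq_left hgt.le).symm)
      rwa [ySeg_right hsu'] at this
    have hne0 : u.2.2 ≠ ySeg v u.2.1 := by
      intro he
      have hmem : u.2 ∈ openSegment ℝ v.1 v.2 :=
        (mem_openSegment_iff hsv' u.2).mpr ⟨hx0v, hgt, he⟩
      exact hgp u.2 hu2P v.1 hv1P v.2 hv2P (ne_of_x_ne hx0v.ne') (ne_of_x_ne hgt.ne)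
        (ne_of_x_ne hsv'.ne) (openSegment_collinear hmem)
    refine Or.inl ⟨u.2, ?_, ⟨hu2P, (u.2.1, ySeg v u.2.1),
      (mem_openSegment_iff hsv' _).mpr ⟨hx0v, hgt, rfl⟩, rfl, lt_of_le_of_ne h0 hne0⟩⟩
    simp [segV]

/-- The chord property for `Rel`. -/
lemma rel_chord {P : Set Pt} {C : Set (Pt × Pt)} (hCF : SCFree C)
    (hCseg : ∀ s ∈ C, IsSegOn P s) {a b c : Pt × Pt}
    (ha : a ∈ C) (hb : b ∈ C) (hc : c ∈ C)
    (Rab : Rel a b) (Rbc : Rel b c) (hLa : a.1.1 ≤ b.1.1) (hLc : c.1.1 ≤ b.1.1) :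
    Rel a c := by
  rcases eq_or_ne a c with rfl | hac
  · exact absurd Rbc (fun h => rel_anti Rab h)
  obtain ⟨_, _, hsa'⟩ := hCseg a ha
  obtain ⟨_, _, hsb'⟩ := hCseg b hb
  obtain ⟨_, _, hsc'⟩ := hCseg c hc
  have hra : b.1.1 < a.2.1 := (le_max_right _ _).trans_lt (Rab.1.trans_le (min_le_left _ _))
  have hrc : b.1.1 < c.2.1 := (le_max_left _ _).trans_lt (Rbc.1.trans_le (min_le_right _ _))
  have hpq : max a.1.1 c.1.1 < min a.2.1 c.2.1 :=
    lt_of_le_of_lt (max_le hLa hLc) (lt_min hra hrc)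
  rcases dichotomy hCF ha hc hac hsa' hsc' hpq with h | h
  · exact h
  · exfalso
    set M := min a.2.1 (min b.2.1 c.2.1) with hM
    have hMa : M ≤ a.2.1 := min_le_left _ _
    have hMb : M ≤ b.2.1 := (min_le_right _ _).trans (min_le_left _ _)
    have hMc : M ≤ c.2.1 := (min_le_right _ _).trans (min_le_right _ _)
    have hbM : b.1.1 < M := lt_min hra (lt_min hsb' hrc)
    set x0 := (b.1.1 + M) / 2 with hx0
    have hx0l : b.1.1 < x0 := by rw [hx0]; linarith
    have hx0r : x0 < M := by rw [hx0]; linarith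
    have mem_ab : x0 ∈ Set.Ioo (max a.1.1 b.1.1) (min a.2.1 b.2.1) :=
      ⟨lt_of_le_of_lt (max_le hLa le_rfl) hx0l, lt_min (by linarith) (by linarith)⟩
    have mem_bc : x0 ∈ Set.Ioo (max b.1.1 c.1.1) (min b.2.1 c.2.1) :=
      ⟨lt_of_le_of_lt (max_le le_rfl hLc) hx0l, lt_min (by linarith) (by linarith)⟩
    have mem_ca : x0 ∈ Set.Ioo (max c.1.1 a.1.1) (min c.2.1 a.2.1) :=
      ⟨lt_of_le_of_lt (max_le hLc hLa) hx0l, lt_min (by linarith) (by linarith)⟩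
    linarith [Rab.2 x0 mem_ab, Rbc.2 x0 mem_bc, h.2 x0 mem_ca]



lemma succ_mod_eq (n k : ℕ) : (n + 1) % k = (n % k + 1) % k :=
  ((Nat.mod_modEq n k).add_right 1).symm

/-- Abstract sink lemma: a finite set with an antisymmetric relation satisfying the
"chord" property (w.r.t. a real weight) has a sink. -/
lemma exists_sink {α : Type*} (R : α → α → Prop) (L : α → ℝ) (S : Set α)
    (hfin : S.Finite) (hne : S.Nonempty)
    (anti : ∀ a ∈ S, ∀ b ∈ S, R a b → R b a → False)
    (chord : ∀ a ∈ S, ∀ b ∈ S, ∀ c ∈ S, R a b → R b c → L a ≤ L b → L c ≤ L b → R a c) :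
    ∃ u ∈ S, ∀ v ∈ S, ¬ R u v := by
  by_contra hcon
  push_neg at hcon
  -- build an infinite walk
  have hstep : ∀ u ∈ S, ∃ v ∈ S, R u v := by
    intro u hu
    exact hcon u hu
  choose! f hfS hfR using hstep
  let w0 : ℕ → α := fun n => f^[n] hne.some
  have hw0S : ∀ n, w0 n ∈ S := by
    intro n
    induction n with
    | zero => exact hne.some_mem
    | succ n ih => simpa [w0, Function.iterate_succ_apply'] using hfS _ ih
  have hw0R : ∀ n, R (w0 n) (w0 (n + 1)) := by
    intro n
    have : w0 (n + 1) = f (w0 n) := by simp [w0, Function.iterate_succ_apply']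
    rw [this]; exact hfR _ (hw0S n)
  -- pigeonhole: find a repeat
  obtain ⟨i, hi, j, hj, hij, hw⟩ :
      ∃ i ∈ Finset.range (hfin.toFinset.card + 1), ∃ j ∈ Finset.range (hfin.toFinset.card + 1),
        i ≠ j ∧ w0 i = w0 j := by
    apply Finset.exists_ne_map_eq_of_card_lt_of_maps_to (t := hfin.toFinset)
    · simp [Finset.card_range]
    · intro a _; exact hfin.mem_toFinset.mpr (hw0S a)
  wlog hlt : i < j generalizing i j
  · exact this j hj i hi hij.symm hw.symm (by omega)
  -- cycles
  set Cyc : ℕ → Prop := fun k =>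
    ∃ w : ℕ → α, (∀ n, w n ∈ S) ∧ (∀ n, w (n + k) = w n) ∧ (∀ n, R (w n) (w (n + 1)))
    with hCyc
  have hex : ∃ k, 0 < k ∧ Cyc k := by
    refine ⟨j - i, by omega, fun n => w0 (i + n % (j - i)), fun n => hw0S _, ?_, ?_⟩
    · intro n; dsimp only; rw [Nat.add_mod_right]
    · intro n
      dsimp only
      have hk : 0 < j - i := by omega
      rcases lt_or_ge (n % (j - i) + 1) (j - i) with h | h
      · have h2 : (n + 1) % (j - i) = n % (j - i) + 1 := by
          rw [succ_mod_eq, Nat.mod_eq_of_lt h]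
        rw [h2, ← Nat.add_assoc]
        exact hw0R _
      · have hmlt : n % (j - i) < j - i := Nat.mod_lt _ hk
        have h3 : n % (j - i) + 1 = j - i := by omega
        have h2 : (n + 1) % (j - i) = 0 := by
          rw [succ_mod_eq, h3, Nat.mod_self]
        rw [h2]
        have e1 : i + 0 = i := rfl
        rw [e1, hw]
        have e2 : w0 j = w0 ((i + n % (j - i)) + 1) := by
          congr 1; omega
        rw [e2]
        exact hw0R _
  classical
  let k := Nat.find hex
  obtain ⟨hkpos, w, hwS, hper, hrel⟩ : 0 < k ∧ Cyc k := Nat.find_spec hex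
  have wmod : ∀ n, w n = w (n % k) := by
    intro n
    induction n using Nat.strong_induction_on with
    | _ n ih =>
      rcases lt_or_ge n k with h | h
      · rw [Nat.mod_eq_of_lt h]
      · obtain ⟨n', rfl⟩ : ∃ n', n = n' + k := ⟨n - k, by omega⟩
        rw [hper n', ih n' (by omega), Nat.add_mod_right]
  -- small cycles impossible
  rcases (by omega : k = 1 ∨ k = 2 ∨ 3 ≤ k) with hk1 | hk2 | hk3
  · have h1 : w 1 = w 0 := by rw [hk1] at hper; exact hper 0
    exact anti _ (hwS 0) _ (hwS 0) (h1 ▸ hrel 0) (h1 ▸ hrel 0)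
  · have h2 : w 2 = w 0 := by rw [hk2] at hper; exact hper 0
    exact anti _ (hwS 0) _ (hwS 1) (hrel 0) (h2 ▸ hrel 1)
  -- long cycle: shorten it using the chord property
  · obtain ⟨imax, himem, hmax⟩ :=
      Finset.exists_max_image (Finset.range k) (fun n => L (w n)) ⟨0, by simp; omega⟩
    set t := imax + (k - 1) with ht
    let w' : ℕ → α := fun n => w (t + n)
    have hw'rel : ∀ n, R (w' n) (w' (n + 1)) := fun n => hrel (t + n)
    have hw'per : ∀ n, w' (n + k) = w' n := by
      intro n; show w (t + (n + k)) = w (t + n)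
      rw [show t + (n + k) = (t + n) + k by omega]; exact hper _
    have hw'1 : w' 1 = w imax := by
      show w (t + 1) = w imax
      rw [show t + 1 = imax + k by omega, hper]
    have hw'max : ∀ n, L (w' n) ≤ L (w' 1) := by
      intro n
      rw [hw'1]
      show L (w (t + n)) ≤ _
      rw [wmod (t + n)]
      exact hmax _ (Finset.mem_range.mpr (Nat.mod_lt _ (by omega)))
    have Rac : R (w' 0) (w' 2) :=
      chord _ (hwS _) _ (hwS _) _ (hwS _) (hw'rel 0) (hw'rel 1) (hw'max 0) (hw'max 2)
    -- build a (k-1)-cycle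
    have hcyc' : Cyc (k - 1) := by
      refine ⟨fun n => if n % (k - 1) = 0 then w' 0 else w' (n % (k - 1) + 1),
        ?_, ?_, ?_⟩
      · intro n; dsimp only; split <;> exact hwS _
      · intro n; dsimp only; rw [Nat.add_mod_right]
      · intro n
        dsimp only
        have hk1pos : 0 < k - 1 := by omega
        have hmlt : n % (k - 1) < k - 1 := Nat.mod_lt _ hk1pos
        rcases eq_or_ne (n % (k - 1)) 0 with h0 | h0
        · rw [if_pos h0]
          have h2 : (n + 1) % (k - 1) = 1 := by
            rw [succ_mod_eq, h0, Nat.mod_eq_of_lt (by omega)]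
          rw [h2, if_neg (by omega)]
          exact Rac
        · rw [if_neg h0]
          rcases lt_or_ge (n % (k - 1) + 1) (k - 1) with h | h
          · have h2 : (n + 1) % (k - 1) = n % (k - 1) + 1 := by
              rw [succ_mod_eq, Nat.mod_eq_of_lt h]
            rw [h2, if_neg (by omega)]
            exact hw'rel _
          · have h3 : n % (k - 1) + 1 = k - 1 := by omega
            have h2 : (n + 1) % (k - 1) = 0 := by rw [succ_mod_eq, h3, Nat.mod_self]
            rw [h2, if_pos rfl, h3]
            have : w' 0 = w' ((k - 1) + 1) := by
              rw [show (k - 1) + 1 = 0 + k by omega]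
              exact (hw'per 0).symm
            rw [this]
            exact hw'rel _
    have := Nat.find_min' hex ⟨by omega, hcyc'⟩
    omega

end CFAux

theorem crossingFree_segments_serializable
    (P : Set Pt) (hPfin : P.Finite) (hgp : GenPos P) (hdx : DistinctX P)
    (C : Set (Pt × Pt)) (hCseg : ∀ s ∈ C, IsSegOn P s)
    (hCfin : C.Finite) (hCne : C.Nonempty) (hCF : SCFree C) :
    ∃ u, SRME P C u ∧ SCFree (C \ {u}) := by
  classical
  obtain ⟨u0, hu0C, hu0sink⟩ := CFAux.exists_sink CFAux.Rel (fun s => s.1.1) C hCfin hCne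
    (fun a _ b _ h1 h2 => CFAux.rel_anti h1 h2)
    (fun a ha b hb c hc h1 h2 hLa hLc => CFAux.rel_chord hCF hCseg ha hb hc h1 h2 hLa hLc)
  have hu0E : SExtreme P C u0 := ⟨hu0C, fun v hv hne hdep =>
    hu0sink v hv (CFAux.dep_rel hCF hu0C hv hne.symm (hCseg _ hu0C) (hCseg _ hv) hdep)⟩
  have hEfin : Set.Finite {w | SExtreme P C w} := hCfin.subset (fun w hw => hw.1)
  obtain ⟨u, huE, hmax⟩ := Set.exists_max_image {w | SExtreme P C w} (fun s => s.1.1)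
    hEfin ⟨u0, hu0E⟩
  have huEx : SExtreme P C u := huE
  refine ⟨u, ⟨huEx, ?_⟩, fun a ha b hb hcross => hCF a ha.1 b hb.1 hcross⟩
  intro v hvE hvne
  by_contra hgt
  push_neg at hgt
  have huC := huEx.1
  have hvC := hvE.1
  have hpq : max u.1.1 v.1.1 < min u.2.1 v.2.1 := by
    have h1 : v.1.1 ≤ u.1.1 := hmax v hvE
    have h2 : u.1.1 < u.2.1 := (hCseg u huC).2.2
    rw [max_eq_left h1]
    exact lt_min h2 hgt
  have hune : u ≠ v := fun h => hvne h.symm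
  rcases CFAux.dichotomy hCF huC hvC hune (hCseg u huC).2.2 (hCseg v hvC).2.2 hpq with h | h
  · exact huEx.2 v hvC hvne
      (CFAux.rel_dep hgp hdx hune (hCseg u huC) (hCseg v hvC) h)
  · exact hvE.2 u huC hune
      (CFAux.rel_dep hgp hdx hvne (hCseg v hvC) (hCseg u huC) h)
end
end

section
/- Let C and C' be crossing-free sets of segments on P with u the right-most extreme element of C, C' = C \ {u}, and let u' be the right-most extreme element of C'. If C and C' have the same lower-shadow point sets, the same sets of vertex points not in the lower shadow, and u, u' have the same leftmost endpoint, then a contradiction follows; consequently, removing the right-most extreme element always changes the equivalence class (the set of crossing-free segment combinations is progressive). -/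
/-!
Statement 4: progressiveness. If C is crossing-free with right-most extreme
element u, C' = C \ {u} has right-most extreme element u', and C, C' have the
same lower shadows, the same vertex points outside the lower shadow, and u, u'
have the same leftmost endpoint, then we reach a contradiction.
-/

open scoped Classical

noncomputable section

lemma openSegment_x_between {p q z : Pt} (h : p.1 < q.1)
    (hz : z ∈ openSegment ℝ p q) : p.1 < z.1 ∧ z.1 < q.1 := by
  obtain ⟨a, b, ha, hb, hab, rfl⟩ := hz
  have hz1 : (a • p + b • q).1 = a * p.1 + b * q.1 := rfl
  have ha' : a = 1 - b := by linarith
  subst ha'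
  constructor <;> rw [hz1] <;>
    nlinarith [mul_pos ha (sub_pos.mpr h), mul_pos hb (sub_pos.mpr h)]

lemma lowS_x_between {P : Set Pt} {s : Pt × Pt} (hs : s.1.1 < s.2.1) {q : Pt}
    (hq : q ∈ lowS P s) : s.1.1 < q.1 ∧ q.1 < s.2.1 := by
  obtain ⟨-, z, hz, hzx, -⟩ := hq
  have := openSegment_x_between hs hz
  rw [hzx] at this
  exact this

lemma upS_x_between {P : Set Pt} {s : Pt × Pt} (hs : s.1.1 < s.2.1) {q : Pt}
    (hq : q ∈ upS P s) : s.1.1 < q.1 ∧ q.1 < s.2.1 := by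
  obtain ⟨-, z, hz, hzx, -⟩ := hq
  have := openSegment_x_between hs hz
  rw [hzx] at this
  exact this

theorem crossingFree_segments_progressive
    (P : Set Pt) (hPfin : P.Finite) (hgp : GenPos P) (hdx : DistinctX P)
    (C : Set (Pt × Pt)) (hCseg : ∀ s ∈ C, IsSegOn P s)
    (hCfin : C.Finite) (hCne : C.Nonempty) (hCF : SCFree C)
    (u : Pt × Pt) (hu : SRME P C u)
    (C' : Set (Pt × Pt)) (hC' : C' = C \ {u}) (hC'ne : C'.Nonempty)
    (u' : Pt × Pt) (hu' : SRME P C' u')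
    (hlow : lowSC P C = lowSC P C')
    (hpts : ptsS C \ lowSC P C = ptsS C' \ lowSC P C')
    (hlft : u.1 = u'.1) :
    False := by
  obtain ⟨⟨huC, huext⟩, humax⟩ := hu
  obtain ⟨⟨hu'C', hu'ext⟩, -⟩ := hu'
  have hu'mem : u' ∈ C \ {u} := hC' ▸ hu'C'
  have hu'C : u' ∈ C := hu'mem.1
  have hu'ne : u' ≠ u := hu'mem.2
  have hsegu : IsSegOn P u := hCseg u huC
  have hsegu' : IsSegOn P u' := hCseg u' hu'C
  have hxu : u.1.1 < u.2.1 := hsegu.2.2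
  have hxu' : u'.1.1 < u'.2.1 := hsegu'.2.2
  -- key claim: u does not depend on u'
  have hkey : ¬ SDependsOn P u' u := by
    rintro (⟨q, hq1, hq2⟩ | ⟨q, hq1, hq2⟩)
    · -- q is a vertex of u' lying in the lower shadow of u
      have hxb := lowS_x_between hxu hq2
      rcases hq1 with rfl | rfl
      · -- q = u'.1 = u.1 : impossible by x-coordinates
        rw [← hlft] at hxb
        linarith [hxb.1]
      · -- q = u'.2 lies in lowS P u ⊆ lowSC P C = lowSC P C'
        have hmem : u'.2 ∈ lowSC P C' := by
          rw [← hlow]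
          exact Set.mem_biUnion huC hq2
        obtain ⟨s, hsC', hsq⟩ := Set.mem_iUnion₂.mp hmem
        have hsne : s ≠ u' := by
          rintro rfl
          have := lowS_x_between (hCseg s (hC' ▸ hsC' : s ∈ C \ {u}).1).2.2 hsq
          linarith [this.2]
        exact hu'ext s hsC' hsne (Or.inl ⟨u'.2, Or.inr rfl, hsq⟩)
    · -- q is a vertex of u lying in the upper shadow of u'
      have hxb := upS_x_between hxu' hq1
      rcases hq2 with rfl | rfl
      · -- q = u.1 = u'.1 : impossible by x-coordinates
        rw [hlft] at hxb
        linarith [hxb.1]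
      · -- q = u.2 lies strictly above the interior of u'
        have hx2 : u.2.1 < u'.2.1 := hxb.2
        by_cases hlo : u.2 ∈ lowSC P C
        · obtain ⟨t, htC, htq⟩ := Set.mem_iUnion₂.mp hlo
          have htne : t ≠ u := by
            rintro rfl
            have := lowS_x_between (hCseg t htC).2.2 htq
            linarith [this.2]
          exact huext t htC htne (Or.inl ⟨u.2, Or.inr rfl, htq⟩)
        · have hmem : u.2 ∈ ptsS C \ lowSC P C :=
            ⟨Set.mem_biUnion huC (Or.inr rfl), hlo⟩
          rw [hpts] at hmem
          obtain ⟨s, hsC', hsq⟩ := Set.mem_iUnion₂.mp hmem.1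
          have hsne : s ≠ u' := by
            rintro rfl
            simp only [segV, Set.mem_insert_iff, Set.mem_singleton_iff] at hsq
            rcases hsq with h | h
            · rw [← hlft] at h
              exact absurd (congrArg Prod.fst h) (ne_of_gt hxu)
            · exact absurd (congrArg Prod.fst h) (ne_of_lt hx2)
          exact hu'ext s hsC' hsne (Or.inr ⟨u.2, hq1, hsq⟩)
  -- hence u' is extreme in C
  have hext : SExtreme P C u' := by
    refine ⟨hu'C, fun v hv hvne => ?_⟩
    by_cases hvu : v = u
    · rw [hvu]; exact hkey
    · exact hu'ext v (hC' ▸ (⟨hv, hvu⟩ : v ∈ C \ {u})) hvne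
  have := humax u' hext hu'ne
  rw [hlft] at this
  linarith
end
end

section
/- Let (U, 𝒞, ≐, T) be a combination problem with combination graph G. Then for every vertex [C] of G: (1) for every representative C of [C] there is a directed source-to-[C] path whose set of edge labels equals C; (2) for every directed source-to-[C] path, the set of its edge labels is a combination equivalent to C; (3) along any such path the labels appear in the canonical order of the resulting combination. Consequently G represents ⋃T: taking labels gives a bijection between directed source-sink paths of G and the combinations in ⋃T. -/
/-!
Statement 7: the combination graph represents ⋃T.  For every vertex [C]:
(1) every representative is realized as the label set of a source-to-[C] path;
(2) every source-to-[C] path has label set a combination equivalent to C;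
(3) labels along any path appear in canonical order.
Consequently, taking label sets is a bijection between source-sink paths
(= paths ending at a vertex of T) and the combinations in ⋃T.
-/
section

variable {U : Type*} [DecidableEq U]

/-- `𝒞` is serializable with right-most-extreme-element selector `rm`:
`∅ ∈ 𝒞`, and every nonempty member `C` of `𝒞` contains its right-most extreme
element `rm C`, whose removal stays in `𝒞`. -/
def Serializable (𝒞 : Set (Finset U)) (rm : Finset U → U) : Prop :=
  ∅ ∈ 𝒞 ∧ ∀ C ∈ 𝒞, C ≠ ∅ → rm C ∈ C ∧ C.erase (rm C) ∈ 𝒞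

/-- `C →ᵘ C'`: `C'` arises from `C` by adding its new right-most extreme
element (`C = C' \ {rm C'}`). -/
def Step (𝒞 : Set (Finset U)) (rm : Finset U → U) (C C' : Finset U) : Prop :=
  C ∈ 𝒞 ∧ C' ∈ 𝒞 ∧ C' ≠ ∅ ∧ C = C'.erase (rm C')

/-- Coherence of the equivalence relation `eqv`. -/
def Coherent (𝒞 : Set (Finset U)) (rm : Finset U → U)
    (eqv : Finset U → Finset U → Prop) : Prop :=
  ∀ C₁ C₂ C₁', eqv C₁ C₂ → C₂ ∈ 𝒞 → Step 𝒞 rm C₁ C₁' →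
    ∃ C₂', Step 𝒞 rm C₂ C₂' ∧ rm C₂' = rm C₁' ∧ eqv C₁' C₂'

/-- The equivalence class of `C` within `𝒞` (a vertex of the combination graph). -/
def cls (𝒞 : Set (Finset U)) (eqv : Finset U → Finset U → Prop)
    (C : Finset U) : Set (Finset U) :=
  {D ∈ 𝒞 | eqv C D}

/-- A (labeled, forgetting the label) edge of the combination graph between
equivalence classes. -/
def Edge (𝒞 : Set (Finset U)) (rm : Finset U → U)
    (eqv : Finset U → Finset U → Prop) (V W : Set (Finset U)) : Prop :=
  ∃ C C', V = cls 𝒞 eqv C ∧ W = cls 𝒞 eqv C' ∧ C ∈ 𝒞 ∧ C' ∈ 𝒞 ∧ Step 𝒞 rm C C'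

/-- A labeled edge of the combination graph. -/
def LEdge (𝒞 : Set (Finset U)) (rm : Finset U → U)
    (eqv : Finset U → Finset U → Prop) (V : Set (Finset U)) (u : U)
    (W : Set (Finset U)) : Prop :=
  ∃ C C', V = cls 𝒞 eqv C ∧ W = cls 𝒞 eqv C' ∧ C ∈ 𝒞 ∧ C' ∈ 𝒞 ∧
    Step 𝒞 rm C C' ∧ rm C' = u

/-- Directed paths in the combination graph, recorded by their label list. -/
inductive Trace (𝒞 : Set (Finset U)) (rm : Finset U → U)
    (eqv : Finset U → Finset U → Prop) :
    Set (Finset U) → List U → Set (Finset U) → Prop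
  | nil (V : Set (Finset U)) : Trace 𝒞 rm eqv V [] V
  | cons {V V' W : Set (Finset U)} {u : U} {l : List U} :
      LEdge 𝒞 rm eqv V u V' → Trace 𝒞 rm eqv V' l W →
      Trace 𝒞 rm eqv V (u :: l) W

/-- `l` is the canonical order of `C`: obtained by successively removing
right-most extreme elements and reversing. -/
inductive IsCanon (𝒞 : Set (Finset U)) (rm : Finset U → U) :
    Finset U → List U → Prop
  | nil : IsCanon 𝒞 rm ∅ []
  | snoc {C : Finset U} {l : List U} : C ∈ 𝒞 → C ≠ ∅ →
      IsCanon 𝒞 rm (C.erase (rm C)) l → IsCanon 𝒞 rm C (l ++ [rm C])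

/-! ### Auxiliary machinery -/

variable {𝒞 : Set (Finset U)} {rm : Finset U → U} {eqv : Finset U → Finset U → Prop}

lemma cls_congr (heq : Equivalence eqv) {C D : Finset U} (h : eqv C D) :
    cls 𝒞 eqv C = cls 𝒞 eqv D := by
  ext E
  simp only [cls, Set.mem_setOf_eq]
  exact and_congr_right fun _ =>
    ⟨fun h' => heq.trans (heq.symm h) h', fun h' => heq.trans h h'⟩

lemma eqv_of_cls_eq (heq : Equivalence eqv) {C D : Finset U} (hD : D ∈ 𝒞)
    (h : cls 𝒞 eqv C = cls 𝒞 eqv D) : eqv C D := by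
  have hmem : D ∈ cls 𝒞 eqv D := ⟨hD, heq.refl D⟩
  rw [← h] at hmem
  exact hmem.2

/-- A chain of `Step`s between actual combinations, with labels. -/
inductive Chain (𝒞 : Set (Finset U)) (rm : Finset U → U) :
    Finset U → List U → Finset U → Prop
  | nil (C : Finset U) (h : C ∈ 𝒞) : Chain 𝒞 rm C [] C
  | cons {C C' E : Finset U} {u : U} {l : List U} :
      Step 𝒞 rm C C' → rm C' = u → Chain 𝒞 rm C' l E →
      Chain 𝒞 rm C (u :: l) E

lemma trace_chain (heq : Equivalence eqv) (hcoh : Coherent 𝒞 rm eqv)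
    {V W : Set (Finset U)} {l : List U} (ht : Trace 𝒞 rm eqv V l W) :
    ∀ D ∈ 𝒞, V = cls 𝒞 eqv D → ∃ E, Chain 𝒞 rm D l E ∧ W = cls 𝒞 eqv E := by
  induction ht with
  | nil V => exact fun D hD hV => ⟨D, Chain.nil D hD, hV⟩
  | cons he ht ih =>
    intro D hD hV
    obtain ⟨C, C', hVC, hV'C', hC, hC', hstep, hrm⟩ := he
    have hCD : eqv C D := eqv_of_cls_eq heq hD (hVC.symm.trans hV)
    obtain ⟨D', hstepD, hrmD, heqv'⟩ := hcoh C D C' hCD hD hstep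
    obtain ⟨E, hch, hW⟩ := ih D' hstepD.2.1 (hV'C'.trans (cls_congr heq heqv'))
    exact ⟨E, Chain.cons hstepD (hrmD.trans hrm) hch, hW⟩

lemma chain_mem {D E : Finset U} {l : List U} (hch : Chain 𝒞 rm D l E) : E ∈ 𝒞 := by
  induction hch with
  | nil _ h => exact h
  | cons _ _ _ ih => exact ih

lemma chain_toFinset (hser : Serializable 𝒞 rm) {D E : Finset U} {l : List U}
    (hch : Chain 𝒞 rm D l E) : E = D ∪ l.toFinset := by
  induction hch with
  | nil _ _ => simp
  | cons hstep hrm hch ih =>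
    rename_i C C' E u l
    have hmem : rm C' ∈ C' := (hser.2 C' hstep.2.1 hstep.2.2.1).1
    have hC' : C' = insert u C := by
      rw [← hrm, hstep.2.2.2, Finset.insert_erase hmem]
    rw [ih, hC']
    simp [Finset.insert_union, Finset.union_insert]

lemma chain_canon {D E : Finset U} {l : List U} (hch : Chain 𝒞 rm D l E) :
    ∀ m : List U, IsCanon 𝒞 rm D m → IsCanon 𝒞 rm E (m ++ l) := by
  induction hch with
  | nil _ _ => simpa using fun m h => h
  | cons hstep hrm hch ih =>
    rename_i C C' E u l
    intro m hm
    have h1 : IsCanon 𝒞 rm C' (m ++ [rm C']) :=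
      IsCanon.snoc hstep.2.1 hstep.2.2.1 (hstep.2.2.2 ▸ hm)
    have h2 := ih (m ++ [rm C']) h1
    simpa [hrm] using h2

lemma canon_unique {C : Finset U} {l₁ : List U} (h1 : IsCanon 𝒞 rm C l₁) :
    ∀ l₂, IsCanon 𝒞 rm C l₂ → l₁ = l₂ := by
  induction h1 with
  | nil =>
    intro l₂ h2
    cases h2 with
    | nil => rfl
    | snoc _ hne _ => exact absurd rfl hne
  | snoc hC hne h ih =>
    intro l₂ h2
    cases h2 with
    | nil => exact absurd rfl hne
    | snoc _ _ h' => rw [ih _ h']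

lemma trace_snoc {V W W' : Set (Finset U)} {u : U} {l : List U}
    (ht : Trace 𝒞 rm eqv V l W) (he : LEdge 𝒞 rm eqv W u W') :
    Trace 𝒞 rm eqv V (l ++ [u]) W' := by
  induction ht with
  | nil V => exact Trace.cons he (Trace.nil _)
  | cons he' ht ih => exact Trace.cons he' (ih he)

lemma realize (hser : Serializable 𝒞 rm) :
    ∀ C : Finset U, C ∈ 𝒞 → ∃ l : List U,
      Trace 𝒞 rm eqv (cls 𝒞 eqv ∅) l (cls 𝒞 eqv C) ∧ l.toFinset = C := by
  intro C
  induction C using Finset.strongInduction with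
  | _ C ih =>
    intro hC
    by_cases h : C = ∅
    · subst h
      exact ⟨[], Trace.nil _, by simp⟩
    · obtain ⟨hmem, hC'⟩ := hser.2 C hC h
      obtain ⟨l, ht, hl⟩ := ih (C.erase (rm C)) (Finset.erase_ssubset hmem) hC'
      refine ⟨l ++ [rm C],
        trace_snoc ht ⟨C.erase (rm C), C, rfl, rfl, hC', hC, ⟨hC', hC, h, rfl⟩, rfl⟩, ?_⟩
      rw [List.toFinset_append, hl]
      rw [Finset.union_comm]; simpa using Finset.insert_erase hmem

theorem combination_graph_represents
    (𝒞 : Set (Finset U)) (rm : Finset U → U)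
    (eqv : Finset U → Finset U → Prop) (heq : Equivalence eqv)
    (hser : Serializable 𝒞 rm) (hcoh : Coherent 𝒞 rm eqv)
    (T : Set (Set (Finset U)))
    (hT : ∀ V ∈ T, ∃ C ∈ 𝒞, V = cls 𝒞 eqv C) :
    (∀ C ∈ 𝒞, ∃ l : List U,
        Trace 𝒞 rm eqv (cls 𝒞 eqv ∅) l (cls 𝒞 eqv C) ∧ l.toFinset = C) ∧
    (∀ C ∈ 𝒞, ∀ l : List U,
        Trace 𝒞 rm eqv (cls 𝒞 eqv ∅) l (cls 𝒞 eqv C) →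
          l.toFinset ∈ 𝒞 ∧ eqv l.toFinset C) ∧
    (∀ (l : List U) (V : Set (Finset U)),
        Trace 𝒞 rm eqv (cls 𝒞 eqv ∅) l V → IsCanon 𝒞 rm l.toFinset l) ∧
    Set.BijOn (fun l : List U => l.toFinset)
      {l | ∃ V ∈ T, Trace 𝒞 rm eqv (cls 𝒞 eqv ∅) l V}
      {C | C ∈ 𝒞 ∧ cls 𝒞 eqv C ∈ T} := by
  -- soundness: every trace from the source corresponds to an actual chain from ∅
  have key : ∀ (l : List U) (V : Set (Finset U)),
      Trace 𝒞 rm eqv (cls 𝒞 eqv ∅) l V →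
        l.toFinset ∈ 𝒞 ∧ V = cls 𝒞 eqv l.toFinset ∧ IsCanon 𝒞 rm l.toFinset l := by
    intro l V ht
    obtain ⟨E, hch, hV⟩ := trace_chain heq hcoh ht ∅ hser.1 rfl
    have hE : E = l.toFinset := by simpa using chain_toFinset hser hch
    have hcanon : IsCanon 𝒞 rm E l := by
      simpa using chain_canon hch [] IsCanon.nil
    exact ⟨hE ▸ chain_mem hch, hE ▸ hV, hE ▸ hcanon⟩
  have part2 : ∀ C ∈ 𝒞, ∀ l : List U,
      Trace 𝒞 rm eqv (cls 𝒞 eqv ∅) l (cls 𝒞 eqv C) →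
        l.toFinset ∈ 𝒞 ∧ eqv l.toFinset C := by
    intro C hC l ht
    obtain ⟨hmem, hV, _⟩ := key l _ ht
    exact ⟨hmem, heq.symm (eqv_of_cls_eq heq hmem (hV.symm ▸ rfl))⟩
  refine ⟨realize hser, part2, fun l V ht => (key l V ht).2.2, ?_, ?_, ?_⟩
  · -- maps to
    rintro l ⟨V, hVT, ht⟩
    obtain ⟨C, hC, hVC⟩ := hT V hVT
    obtain ⟨hmem, heqv⟩ := part2 C hC l (hVC ▸ ht)
    exact ⟨hmem, (cls_congr heq heqv).symm ▸ (hVC ▸ hVT)⟩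
  · -- injective
    rintro l₁ ⟨V₁, _, ht₁⟩ l₂ ⟨V₂, _, ht₂⟩ hEq
    have h1 := (key l₁ V₁ ht₁).2.2
    have h2 := (key l₂ V₂ ht₂).2.2
    have hEq' : l₁.toFinset = l₂.toFinset := hEq
    exact canon_unique h1 l₂ (hEq' ▸ h2)
  · -- surjective
    rintro C ⟨hC, hCT⟩
    obtain ⟨l, ht, hl⟩ := realize hser C hC
    exact ⟨l, ⟨cls 𝒞 eqv C, hCT, ht⟩, hl⟩

end
end

section
/- Let U be a subset of the convex parts on P. Then the set 𝒞 of crossing-free combinations C of U whose vertex-point sets are pairwise disjoint and which satisfy low(C) ⊆ pts(C) is serializable: every nonempty C ∈ 𝒞 has a right-most extreme element u, and C \ {u} again belongs to 𝒞 (in particular low(C \ {u}) ⊆ pts(C \ {u})). -/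
/-!
Statement 9: for any subset U of the convex parts on P, the family of
crossing-free combinations with pairwise disjoint vertex sets and
low(C) ⊆ pts(C) is serializable: every nonempty member has a right-most
extreme element whose removal stays in the family.
-/
open scoped Classical

noncomputable section

/-- A convex part on `P`: a finite nonempty subset `Q ⊆ P` whose convex hull
contains no point of `P \ Q`; the associated geometric graph consists of the
edges along the boundary of the convex hull of `Q`. -/
structure CPart (P : Set Pt) where
  Q : Set Pt
  hQP : Q ⊆ P
  hfin : Q.Finite
  hne : Q.Nonempty
  hhull : convexHull ℝ Q ∩ P ⊆ Q

/-- The boundary edges of a convex part. -/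
def cedges {P : Set Pt} (u : CPart P) : Set (Pt × Pt) :=
  {e | e.1 ∈ u.Q ∧ e.2 ∈ u.Q ∧ e.1 ≠ e.2 ∧
    openSegment ℝ e.1 e.2 ⊆ frontier (convexHull ℝ u.Q)}

/-- Lower shadow of a convex part. -/
def lowU {P : Set Pt} (u : CPart P) : Set Pt :=
  {q ∈ P | ∃ e ∈ cedges u, ∃ z ∈ openSegment ℝ e.1 e.2, z.1 = q.1 ∧ q.2 < z.2}

/-- Upper shadow of a convex part. -/
def upU {P : Set Pt} (u : CPart P) : Set Pt :=
  {q ∈ P | ∃ e ∈ cedges u, ∃ z ∈ openSegment ℝ e.1 e.2, z.1 = q.1 ∧ z.2 < q.2}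

/-- Two convex parts cross: an edge of one and a different edge of the other
intersect in their relative interiors. -/
def UCross {P : Set Pt} (u v : CPart P) : Prop :=
  ∃ e ∈ cedges u, ∃ f ∈ cedges v,
    (openSegment ℝ e.1 e.2 ∩ openSegment ℝ f.1 f.2).Nonempty ∧
      ({e.1, e.2} : Set Pt) ≠ {f.1, f.2}

/-- `u₂` depends on `u₁`. -/
def UDependsOn {P : Set Pt} (u₁ u₂ : CPart P) : Prop :=
  (u₁.Q ∩ lowU u₂).Nonempty ∨ (upU u₁ ∩ u₂.Q).Nonempty

/-- x-coordinate of the left-most vertex point of a convex part. -/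
def lftx {P : Set Pt} (u : CPart P) : ℝ := sInf (Prod.fst '' u.Q)

/-- x-coordinate of the right-most vertex point of a convex part. -/
def rgtx {P : Set Pt} (u : CPart P) : ℝ := sSup (Prod.fst '' u.Q)

/-- `u` is extreme in `C`. -/
def UExtreme {P : Set Pt} (C : Set (CPart P)) (u : CPart P) : Prop :=
  u ∈ C ∧ ∀ v ∈ C, v ≠ u → ¬ UDependsOn u v

/-- `u` is the right-most extreme element of `C`. -/
def URME {P : Set Pt} (C : Set (CPart P)) (u : CPart P) : Prop :=
  UExtreme C u ∧ ∀ v, UExtreme C v → v ≠ u → rgtx v ≤ lftx u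

/-- Vertex points of a combination. -/
def ptsU {P : Set Pt} (C : Set (CPart P)) : Set Pt := ⋃ u ∈ C, u.Q

/-- Lower shadow of a combination. -/
def lowUC {P : Set Pt} (C : Set (CPart P)) : Set Pt := ⋃ u ∈ C, lowU u

/-- The family 𝒞 of combinations of units from `Us`: crossing-free, pairwise
disjoint vertex-point sets, and lower shadow contained in the vertex points. -/
def PartFam {P : Set Pt} (Us : Set (CPart P)) : Set (Set (CPart P)) :=
  {C | C ⊆ Us ∧ C.Finite ∧ (∀ u ∈ C, ∀ v ∈ C, ¬ UCross u v) ∧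
       (∀ u ∈ C, ∀ v ∈ C, u ≠ v → Disjoint u.Q v.Q) ∧ lowUC C ⊆ ptsU C}

namespace SerAux
open Set

variable {P : Set Pt}

/-- hull of a part -/
def hull (u : CPart P) : Set Pt := convexHull ℝ u.Q

lemma hull_convex (u : CPart P) : Convex ℝ (hull u) := convex_convexHull ℝ _
lemma hull_compact (u : CPart P) : IsCompact (hull u) := u.hfin.isCompact_convexHull ℝ
lemma hull_closed (u : CPart P) : IsClosed (hull u) := (hull_compact u).isClosed
lemma subset_hull (u : CPart P) : u.Q ⊆ hull u := subset_convexHull ℝ _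

lemma exists_lftx (u : CPart P) : ∃ a ∈ u.Q, a.1 = lftx u ∧ ∀ b ∈ u.Q, lftx u ≤ b.1 := by
  have hfin : (Prod.fst '' u.Q).Finite := u.hfin.image _
  have hne : (Prod.fst '' u.Q).Nonempty := u.hne.image _
  have hmem : sInf (Prod.fst '' u.Q) ∈ Prod.fst '' u.Q := hne.csInf_mem hfin
  obtain ⟨a, ha, hax⟩ := hmem
  exact ⟨a, ha, hax, fun b hb => csInf_le hfin.bddBelow ⟨b, hb, rfl⟩⟩

lemma exists_rgtx (u : CPart P) : ∃ a ∈ u.Q, a.1 = rgtx u ∧ ∀ b ∈ u.Q, b.1 ≤ rgtx u := by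
  have hfin : (Prod.fst '' u.Q).Finite := u.hfin.image _
  have hne : (Prod.fst '' u.Q).Nonempty := u.hne.image _
  have hmem : sSup (Prod.fst '' u.Q) ∈ Prod.fst '' u.Q := hne.csSup_mem hfin
  obtain ⟨a, ha, hax⟩ := hmem
  exact ⟨a, ha, hax, fun b hb => le_csSup hfin.bddAbove ⟨b, hb, rfl⟩⟩

lemma lftx_le_rgtx (u : CPart P) : lftx u ≤ rgtx u := by
  obtain ⟨a, ha, hax, _⟩ := exists_lftx u
  obtain ⟨b, hb, hbx, hble⟩ := exists_rgtx u
  calc lftx u = a.1 := hax.symm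
    _ ≤ rgtx u := hble a ha

lemma hull_slab (u : CPart P) : ∀ p ∈ hull u, lftx u ≤ p.1 ∧ p.1 ≤ rgtx u := by
  intro p hp
  obtain ⟨_, _, _, hl⟩ := exists_lftx u
  obtain ⟨_, _, _, hr⟩ := exists_rgtx u
  have hconv : Convex ℝ {p : Pt | lftx u ≤ p.1 ∧ p.1 ≤ rgtx u} := by
    intro x hx y hy a b ha hb hab
    obtain ⟨hx1, hx2⟩ := hx
    obtain ⟨hy1, hy2⟩ := hy
    have h1 : (a • x + b • y).1 = a * x.1 + b * y.1 := rfl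
    have el : lftx u = a * lftx u + b * lftx u := by rw [← add_mul, hab, one_mul]
    have er : rgtx u = a * rgtx u + b * rgtx u := by rw [← add_mul, hab, one_mul]
    constructor <;> rw [h1]
    · linarith [mul_le_mul_of_nonneg_left hx1 ha, mul_le_mul_of_nonneg_left hy1 hb]
    · linarith [mul_le_mul_of_nonneg_left hx2 ha, mul_le_mul_of_nonneg_left hy2 hb]
  have hsub : u.Q ⊆ {p : Pt | lftx u ≤ p.1 ∧ p.1 ≤ rgtx u} := fun q hq => ⟨hl q hq, hr q hq⟩
  exact convexHull_min hsub hconv hp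

lemma fiber_nonempty (u : CPart P) {x0 : ℝ} (h1 : lftx u ≤ x0) (h2 : x0 ≤ rgtx u) :
    ∃ y, (x0, y) ∈ hull u := by
  obtain ⟨a, ha, hax, _⟩ := exists_lftx u
  obtain ⟨b, hb, hbx, _⟩ := exists_rgtx u
  rcases eq_or_lt_of_le (lftx_le_rgtx u) with heq | hlt
  · refine ⟨a.2, ?_⟩
    have hx : x0 = a.1 := by rw [hax]; linarith [heq ▸ h2]
    have : (x0, a.2) = a := by rw [hx]
    rw [this]; exact subset_hull u ha
  · set t : ℝ := (x0 - a.1) / (b.1 - a.1) with ht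
    have hba : b.1 - a.1 > 0 := by rw [hax, hbx] at *; linarith
    have ht0 : 0 ≤ t := div_nonneg (by rw [hax] at *; linarith) hba.le
    have ht1 : t ≤ 1 := by
      rw [div_le_one hba]; rw [hbx] at *; linarith
    have hmem : (1 - t) • a + t • b ∈ hull u :=
      (hull_convex u) (subset_hull u ha) (subset_hull u hb) (by linarith) ht0 (by ring)
    refine ⟨((1 - t) • a + t • b).2, ?_⟩
    have hx : ((1 - t) • a + t • b).1 = x0 := by
      have h1 : ((1 - t) • a + t • b).1 = (1 - t) * a.1 + t * b.1 := rfl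
      rw [h1, ht]
      field_simp
      ring
    rw [← hx]
    exact hmem

end SerAux
namespace SerAux
open Set

variable {P : Set Pt}

/-- Points of the hull maximizing a linear functional lie in the hull of the
maximizing points of the generating set. -/
lemma convexHull_extreme_subset (s : Finset Pt) (φ : Pt →ₗ[ℝ] ℝ) {M : ℝ}
    (hub : ∀ c ∈ s, φ c ≤ M) {z : Pt} (hz : z ∈ convexHull ℝ (s : Set Pt)) (hzM : M ≤ φ z) :
    z ∈ convexHull ℝ ({c ∈ s | φ c = M} : Finset Pt) := by
  rw [Finset.convexHull_eq] at hz
  obtain ⟨w, hw0, hw1, hcm⟩ := hz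
  have hcm' : ∑ y ∈ s, w y • y = z := by
    have h := hcm
    rw [Finset.centerMass_eq_of_sum_1 _ _ hw1] at h
    simpa using h
  have hφz : φ z = ∑ y ∈ s, w y * φ y := by
    rw [← hcm', map_sum]
    congr 1; ext y; rw [map_smul, smul_eq_mul]
  have hsum0 : ∑ y ∈ s, w y * (M - φ y) = 0 := by
    have : ∑ y ∈ s, w y * (M - φ y) = M - φ z := by
      rw [hφz]
      simp only [mul_sub]
      rw [Finset.sum_sub_distrib, ← Finset.sum_mul, hw1, one_mul]
    rw [this]
    have : φ z ≤ M := by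
      rw [hφz]
      calc ∑ y ∈ s, w y * φ y ≤ ∑ y ∈ s, w y * M := by
            apply Finset.sum_le_sum
            intro i hi
            exact mul_le_mul_of_nonneg_left (hub i hi) (hw0 i hi)
        _ = M := by rw [← Finset.sum_mul, hw1, one_mul]
    linarith
  have hterm : ∀ y ∈ s, w y * (M - φ y) = 0 := by
    intro y hy
    have := (Finset.sum_eq_zero_iff_of_nonneg (fun i hi =>
      mul_nonneg (hw0 i hi) (by linarith [hub i hi]))).mp hsum0
    exact this y hy
  have hsupp : ∀ y ∈ s, w y ≠ 0 → φ y = M := by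
    intro y hy hwy
    have := hterm y hy
    rcases mul_eq_zero.mp this with h | h
    · exact absurd h hwy
    · linarith
  have hz' : z = ({i ∈ s | w i ≠ 0} : Finset Pt).centerMass w id := by
    rw [Finset.centerMass_filter_ne_zero]; exact hcm.symm
  have hmem : z ∈ convexHull ℝ (({i ∈ s | w i ≠ 0} : Finset Pt) : Set Pt) := by
    rw [hz']
    apply Finset.centerMass_mem_convexHull
    · intro i hi; exact hw0 i (Finset.mem_filter.mp hi).1
    · have hpos : ∑ i ∈ ({i ∈ s | w i ≠ 0} : Finset Pt), w i = 1 := by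
        rw [Finset.sum_filter_ne_zero, hw1]
      rw [hpos]; norm_num
    · intro i hi
      exact Finset.mem_coe.mpr hi
  refine convexHull_mono ?_ hmem
  intro c hc
  rw [Finset.mem_coe, Finset.mem_filter] at hc ⊢
  exact ⟨hc.1, hsupp c hc.1 hc.2⟩

lemma mem_Q_of_fiber_left (hdx : DistinctX P) (u : CPart P) {p : Pt}
    (hp : p ∈ hull u) (hx : p.1 = lftx u) : p ∈ u.Q := by
  classical
  set s := u.hfin.toFinset with hs
  have hcoe : (s : Set Pt) = u.Q := u.hfin.coe_toFinset
  have hp' : p ∈ convexHull ℝ (s : Set Pt) := by rw [hcoe]; exact hp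
  obtain ⟨a0, ha0, hax, hal⟩ := exists_lftx u
  have hub : ∀ c ∈ s, (-(LinearMap.fst ℝ ℝ ℝ)) c ≤ -(lftx u) := by
    intro c hc
    have : c ∈ u.Q := by rw [← hcoe]; exact hc
    simpa using hal c this
  have hzM : -(lftx u) ≤ (-(LinearMap.fst ℝ ℝ ℝ)) p := by simp [hx]
  have hmem := convexHull_extreme_subset s (-(LinearMap.fst ℝ ℝ ℝ)) hub hp' hzM
  set T : Finset Pt := {c ∈ s | (-(LinearMap.fst ℝ ℝ ℝ)) c = -(lftx u)} with hT
  have hTne : T.Nonempty := by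
    by_contra h
    rw [Finset.not_nonempty_iff_eq_empty] at h
    rw [h] at hmem
    simp at hmem
  obtain ⟨a, ha⟩ := hTne
  have haQ : a ∈ u.Q := by
    have := (Finset.mem_filter.mp ha).1
    rw [← hcoe]; exact this
  have haX : a.1 = lftx u := by
    have := (Finset.mem_filter.mp ha).2
    simpa using this
  have hsub : (T : Set Pt) ⊆ {a} := by
    intro b hb
    rw [Finset.mem_coe, Finset.mem_filter] at hb
    have hbQ : b ∈ u.Q := by rw [← hcoe]; exact hb.1
    have hbX : b.1 = lftx u := by simpa using hb.2
    have : b = a := by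
      by_contra hne
      exact hdx b (u.hQP hbQ) a (u.hQP haQ) hne (by rw [hbX, haX])
    simp [this]
  have : p ∈ convexHull ℝ ({a} : Set Pt) := convexHull_mono hsub hmem
  rw [convexHull_singleton] at this
  rw [this]
  exact haQ

lemma mem_Q_of_fiber_right (hdx : DistinctX P) (u : CPart P) {p : Pt}
    (hp : p ∈ hull u) (hx : p.1 = rgtx u) : p ∈ u.Q := by
  classical
  set s := u.hfin.toFinset with hs
  have hcoe : (s : Set Pt) = u.Q := u.hfin.coe_toFinset
  have hp' : p ∈ convexHull ℝ (s : Set Pt) := by rw [hcoe]; exact hp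
  obtain ⟨a0, ha0, hax, hal⟩ := exists_rgtx u
  have hub : ∀ c ∈ s, (LinearMap.fst ℝ ℝ ℝ) c ≤ rgtx u := by
    intro c hc
    have : c ∈ u.Q := by rw [← hcoe]; exact hc
    simpa using hal c this
  have hzM : rgtx u ≤ (LinearMap.fst ℝ ℝ ℝ) p := by simp [hx]
  have hmem := convexHull_extreme_subset s (LinearMap.fst ℝ ℝ ℝ) hub hp' hzM
  set T : Finset Pt := {c ∈ s | (LinearMap.fst ℝ ℝ ℝ) c = rgtx u} with hT
  have hTne : T.Nonempty := by
    by_contra h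
    rw [Finset.not_nonempty_iff_eq_empty] at h
    rw [h] at hmem
    simp at hmem
  obtain ⟨a, ha⟩ := hTne
  have haQ : a ∈ u.Q := by
    have := (Finset.mem_filter.mp ha).1
    rw [← hcoe]; exact this
  have haX : a.1 = rgtx u := by
    have := (Finset.mem_filter.mp ha).2
    simpa using this
  have hsub : (T : Set Pt) ⊆ {a} := by
    intro b hb
    rw [Finset.mem_coe, Finset.mem_filter] at hb
    have hbQ : b ∈ u.Q := by rw [← hcoe]; exact hb.1
    have hbX : b.1 = rgtx u := by simpa using hb.2
    have : b = a := by
      by_contra hne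
      exact hdx b (u.hQP hbQ) a (u.hQP haQ) hne (by rw [hbX, haX])
    simp [this]
  have : p ∈ convexHull ℝ ({a} : Set Pt) := convexHull_mono hsub hmem
  rw [convexHull_singleton] at this
  rw [this]
  exact haQ

end SerAux
namespace SerAux
open Set

variable {P : Set Pt}

lemma seg_param {α β M : ℝ} (hβ : β ≠ 0) {a b c : Pt}
    (ha : a.1 * α + a.2 * β = M) (hb : b.1 * α + b.2 * β = M) (hc : c.1 * α + c.2 * β = M)
    (h1 : a.1 ≤ c.1) (h2 : c.1 ≤ b.1) (hab : a.1 < b.1) : c ∈ segment ℝ a b := by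
  set t : ℝ := (c.1 - a.1) / (b.1 - a.1) with hts
  have hd : (0:ℝ) < b.1 - a.1 := by linarith
  have ht0 : 0 ≤ t := div_nonneg (by linarith) hd.le
  have ht1 : t ≤ 1 := by rw [hts, div_le_one hd]; linarith
  have hx : (1 - t) * a.1 + t * b.1 = c.1 := by
    rw [hts]; field_simp; ring
  have hyβ : ((1 - t) * a.2 + t * b.2) * β = c.2 * β := by
    linear_combination (1 - t) * ha + t * hb - hc - α * hx
  have hy : (1 - t) * a.2 + t * b.2 = c.2 := mul_right_cancel₀ hβ hyβ
  refine ⟨1 - t, t, by linarith, ht0, by ring, ?_⟩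
  have : ((1 - t) • a + t • b) = c := by
    have e1 : ((1 - t) • a + t • b).1 = (1 - t) * a.1 + t * b.1 := rfl
    have e2 : ((1 - t) • a + t • b).2 = (1 - t) * a.2 + t * b.2 := rfl
    apply Prod.ext <;> simp only [e1, e2, hx, hy]
  exact this

lemma cl_eval (f : Pt →L[ℝ] ℝ) (p : Pt) : f p = p.1 * f (1, 0) + p.2 * f (0, 1) := by
  have hp : p = p.1 • ((1:ℝ), (0:ℝ)) + p.2 • ((0:ℝ), (1:ℝ)) := by
    apply Prod.ext <;> simp
  conv_lhs => rw [hp]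
  rw [map_add, map_smul, map_smul]
  simp [smul_eq_mul]

lemma exists_edge (hgp : GenPos P) (hdx : DistinctX P) (u : CPart P) {z : Pt}
    (hz : z ∈ hull u) (hzi : z ∉ interior (hull u)) (hzQ : z ∉ u.Q)
    (hl : lftx u < z.1) (hr : z.1 < rgtx u) :
    ∃ e ∈ cedges u, z ∈ openSegment ℝ e.1 e.2 := by
  classical
  obtain ⟨a0, ha0Q, ha0x, hal⟩ := exists_lftx u
  obtain ⟨b0, hb0Q, hb0x, hbr⟩ := exists_rgtx u
  have ha0b0 : a0 ≠ b0 := by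
    intro h
    rw [h, hb0x] at ha0x
    linarith
  rcases (interior (hull u)).eq_empty_or_nonempty with hemp | ⟨w0, hw0⟩
  · -- degenerate: hull is a segment
    have hQab : u.Q ⊆ segment ℝ a0 b0 := by
      intro c hc
      by_cases hca : c = a0
      · rw [hca]; exact left_mem_segment ℝ a0 b0
      by_cases hcb : c = b0
      · rw [hcb]; exact right_mem_segment ℝ a0 b0
      exfalso
      have hnc : ¬ Collinear ℝ ({a0, b0, c} : Set Pt) :=
        hgp a0 (u.hQP ha0Q) b0 (u.hQP hb0Q) c (u.hQP hc) ha0b0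
          (fun h => hca h.symm) (fun h => hcb h.symm)
      have hai : AffineIndependent ℝ ![a0, b0, c] :=
        affineIndependent_iff_not_collinear_set.mpr hnc
      have hcard : Fintype.card (Fin 3) = Module.finrank ℝ Pt + 1 := by
        simp [Module.finrank_prod]
      have htop : affineSpan ℝ (Set.range ![a0, b0, c]) = ⊤ :=
        hai.affineSpan_eq_top_iff_card_eq_finrank_add_one.mpr hcard
      have hrange : Set.range ![a0, b0, c] = ({a0, b0, c} : Set Pt) := by
        ext x
        simp [Matrix.range_cons, Matrix.range_empty]
        tauto
      have hsub : ({a0, b0, c} : Set Pt) ⊆ u.Q := by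
        intro x hx
        rcases hx with h | h | h
        · rw [h]; exact ha0Q
        · rw [h]; exact hb0Q
        · rw [h]; exact hc
      have hQtop : affineSpan ℝ u.Q = ⊤ := by
        apply top_le_iff.mp
        rw [← htop, hrange]
        exact affineSpan_mono ℝ hsub
      have : (interior (hull u)).Nonempty := by
        rw [(hull_convex u).interior_nonempty_iff_affineSpan_eq_top]
        rw [SerAux.hull] at *
        rw [affineSpan_convexHull]
        exact hQtop
      rw [hemp] at this
      exact Set.not_nonempty_empty this
    have hseg : hull u ⊆ segment ℝ a0 b0 := convexHull_min hQab (convex_segment a0 b0)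
    have hzseg : z ∈ segment ℝ a0 b0 := hseg hz
    have hza : a0 ≠ z := fun h => by rw [← h, ha0x] at hl; linarith
    have hzb : b0 ≠ z := fun h => by rw [← h, hb0x] at hr; linarith
    have hzopen : z ∈ openSegment ℝ a0 b0 := mem_openSegment_of_ne_left_right hza hzb hzseg
    refine ⟨(a0, b0), ⟨ha0Q, hb0Q, ha0b0, ?_⟩, hzopen⟩
    intro w hw
    show w ∈ frontier (hull u)
    rw [(hull_closed u).frontier_eq]
    constructor
    · exact (hull_convex u).segment_subset (subset_hull u ha0Q)
        (subset_hull u hb0Q) (openSegment_subset_segment ℝ a0 b0 hw)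
    · rw [hemp]; exact Set.notMem_empty w
  · -- nondegenerate: separating functional
    obtain ⟨f, hf⟩ := geometric_hahn_banach_open_point ((hull_convex u).interior)
      isOpen_interior hzi
    have hfK : ∀ c ∈ hull u, f c ≤ f z := by
      intro c hc
      by_contra hlt
      push_neg at hlt
      set ε : ℝ := f c - f z with hε
      have hεpos : 0 < ε := by linarith
      set D : ℝ := |f w0 - f c| with hD
      have hD0 : 0 ≤ D := abs_nonneg _
      set t : ℝ := min 1 (ε / (2 * (D + 1))) with hts
      have ht0 : 0 < t := lt_min one_pos (div_pos hεpos (by linarith))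
      have ht1 : t ≤ 1 := min_le_left _ _
      have hmem : t • w0 + (1 - t) • c ∈ interior (hull u) :=
        (hull_convex u).combo_interior_closure_mem_interior hw0
          (subset_closure hc) ht0 (by linarith) (by ring)
      have hval : f (t • w0 + (1 - t) • c) = t * f w0 + (1 - t) * f c := by
        rw [map_add, map_smul, map_smul]; simp [smul_eq_mul]
      have hlt2 : f (t • w0 + (1 - t) • c) < f z := hf _ hmem
      rw [hval] at hlt2
      have habs : -(D) ≤ f w0 - f c := neg_abs_le _
      have htD : t * D ≤ ε / 2 := by
        have h1 : t ≤ ε / (2 * (D + 1)) := min_le_right _ _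
        have h2 : t * D ≤ (ε / (2 * (D + 1))) * D := mul_le_mul_of_nonneg_right h1 hD0
        have h3 : (ε / (2 * (D + 1))) * D ≤ ε / 2 := by
          rw [div_mul_eq_mul_div, div_le_div_iff₀ (by linarith) (by norm_num)]
          nlinarith
        linarith
      nlinarith [mul_le_mul_of_nonneg_left habs ht0.le]
    set α : ℝ := f (1, 0) with hα
    set β : ℝ := f (0, 1) with hβdef
    have hβ : β ≠ 0 := by
      intro h0
      have hfe : ∀ p : Pt, f p = p.1 * α := by
        intro p
        rw [cl_eval f p, ← hα, ← hβdef, h0]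
        ring
      rcases lt_trichotomy α 0 with hneg | hzero | hpos
      · have : ∀ c ∈ u.Q, z.1 ≤ c.1 := by
          intro c hc
          have := hfK c (subset_hull u hc)
          rw [hfe c, hfe z] at this
          exact le_of_mul_le_mul_right (by linarith) (by linarith : (0:ℝ) < -α)
        have := this a0 ha0Q
        rw [ha0x] at this
        linarith
      · have h1 := hf w0 hw0
        rw [hfe w0, hfe z, hzero] at h1
        linarith
      · have : ∀ c ∈ u.Q, c.1 ≤ z.1 := by
          intro c hc
          have := hfK c (subset_hull u hc)
          rw [hfe c, hfe z] at this
          exact le_of_mul_le_mul_right this hpos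
        have := this b0 hb0Q
        rw [hb0x] at this
        linarith
    set M : ℝ := f z with hM
    set s : Finset Pt := u.hfin.toFinset with hsdef
    have hcoe : (s : Set Pt) = u.Q := u.hfin.coe_toFinset
    have hub : ∀ c ∈ s, f.toLinearMap c ≤ M := by
      intro c hc
      exact hfK c (subset_hull u (by rw [← hcoe]; exact hc))
    have hz' : z ∈ convexHull ℝ (s : Set Pt) := by rw [hcoe]; exact hz
    have hmem := convexHull_extreme_subset s f.toLinearMap hub hz' (le_refl _)
    set T : Finset Pt := {c ∈ s | f.toLinearMap c = M} with hT
    have hTne : T.Nonempty := by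
      by_contra h
      rw [Finset.not_nonempty_iff_eq_empty] at h
      rw [h] at hmem
      simp at hmem
    have hTQ : ∀ c ∈ T, c ∈ u.Q ∧ f c = M := by
      intro c hc
      rw [hT, Finset.mem_filter] at hc
      exact ⟨by rw [← hcoe]; exact hc.1, hc.2⟩
    obtain ⟨a, haT, hamin⟩ := T.exists_min_image (fun c => c.1) hTne
    obtain ⟨b, hbT, hbmax⟩ := T.exists_max_image (fun c => c.1) hTne
    have haQ := (hTQ a haT).1
    have hbQ := (hTQ b hbT).1
    have hline : ∀ c ∈ T, c.1 * α + c.2 * β = M := by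
      intro c hc
      rw [← cl_eval f c]
      exact (hTQ c hc).2
    have hzseg : ∀ (hab : a.1 < b.1), z ∈ segment ℝ a b := by
      intro hab
      have hTseg : (T : Set Pt) ⊆ segment ℝ a b :=
        fun c hc => seg_param hβ (hline a haT) (hline b hbT)
          (hline c (Finset.mem_coe.mp hc)) (hamin c (Finset.mem_coe.mp hc))
          (hbmax c (Finset.mem_coe.mp hc)) hab
      exact convexHull_min hTseg (convex_segment a b) hmem
    have hane : a ≠ b := by
      intro h
      have hTa : (T : Set Pt) ⊆ {a} := by
        intro c hc
        have h1 := hamin c (Finset.mem_coe.mp hc)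
        have h2 := hbmax c (Finset.mem_coe.mp hc)
        rw [← h] at h2
        have hcx : c.1 = a.1 := le_antisymm h2 h1
        have : c = a := by
          by_contra hne
          exact hdx c (u.hQP (hTQ c (Finset.mem_coe.mp hc)).1) a (u.hQP haQ) hne hcx
        simp [this]
      have : z ∈ convexHull ℝ ({a} : Set Pt) := convexHull_mono hTa hmem
      rw [convexHull_singleton] at this
      exact hzQ (this ▸ haQ)
    have habx : a.1 < b.1 := by
      rcases lt_or_eq_of_le (hamin b hbT) with h | h
      · exact h
      · exact absurd h (hdx a (u.hQP haQ) b (u.hQP hbQ) hane)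
    have hzseg' := hzseg habx
    have hza : a ≠ z := fun h => hzQ (h ▸ haQ)
    have hzb : b ≠ z := fun h => hzQ (h ▸ hbQ)
    have hzopen : z ∈ openSegment ℝ a b := mem_openSegment_of_ne_left_right hza hzb hzseg'
    refine ⟨(a, b), ⟨haQ, hbQ, hane, ?_⟩, hzopen⟩
    intro w hw
    show w ∈ frontier (hull u)
    rw [(hull_closed u).frontier_eq]
    have hwseg := openSegment_subset_segment ℝ a b hw
    have hwhull : w ∈ hull u :=
      (hull_convex u).segment_subset (subset_hull u haQ) (subset_hull u hbQ) hwseg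
    refine ⟨hwhull, ?_⟩
    intro hwint
    have hwM : f w = M := by
      obtain ⟨ta, tb, hta, htb, htab, hsum⟩ := hwseg
      rw [← hsum, map_add, map_smul, map_smul]
      simp only [smul_eq_mul]
      rw [(hTQ a haT).2, (hTQ b hbT).2]
      linear_combination M * htab
    have := hf w hwint
    rw [hwM] at this
    exact lt_irrefl M this

end SerAux
namespace SerAux
open Set

variable {P : Set Pt}

/-- A point of `P` strictly inside the x-range of a part and not a vertex of it
lies in its upper or lower shadow. -/
lemma shadow (hgp : GenPos P) (hdx : DistinctX P) (u : CPart P) {q : Pt}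
    (hqP : q ∈ P) (hqQ : q ∉ u.Q) (h1 : lftx u < q.1) (h2 : q.1 < rgtx u) :
    q ∈ upU u ∨ q ∈ lowU u := by
  classical
  set F : Set ℝ := Prod.snd '' (hull u ∩ {p : Pt | p.1 = q.1}) with hF
  have hclosed : IsClosed {p : Pt | p.1 = q.1} := isClosed_eq continuous_fst continuous_const
  have hFcpt : IsCompact F := ((hull_compact u).inter_right hclosed).image continuous_snd
  have hFne : F.Nonempty := by
    obtain ⟨y, hy⟩ := fiber_nonempty u h1.le h2.le
    exact ⟨y, ⟨(q.1, y), ⟨hy, rfl⟩, rfl⟩⟩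
  have hFmem : ∀ y, y ∈ F ↔ (q.1, y) ∈ hull u := by
    intro y
    constructor
    · rintro ⟨p, ⟨hp, hpx⟩, hpy⟩
      have : p = (q.1, y) := by
        apply Prod.ext
        · exact hpx
        · exact hpy
      rw [← this]; exact hp
    · intro h
      exact ⟨(q.1, y), ⟨h, rfl⟩, rfl⟩
  set yt : ℝ := sSup F with hyt
  set yb : ℝ := sInf F with hyb
  have hytF : yt ∈ F := hFcpt.sSup_mem hFne
  have hybF : yb ∈ F := hFcpt.sInf_mem hFne
  have hytmax : ∀ y ∈ F, y ≤ yt := fun y hy => le_csSup hFcpt.bddAbove hy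
  have hybmin : ∀ y ∈ F, yb ≤ y := fun y hy => csInf_le hFcpt.bddBelow hy
  have hqhull : q ∉ hull u := fun h => hqQ (u.hhull ⟨h, hqP⟩)
  have hqout : yt < q.2 ∨ q.2 < yb := by
    by_contra h
    push_neg at h
    obtain ⟨hq1, hq2⟩ := h
    -- q.2 between yb and yt : q in hull
    have hseg : segment ℝ (q.1, yb) (q.1, yt) ⊆ hull u :=
      (hull_convex u).segment_subset ((hFmem yb).mp hybF) ((hFmem yt).mp hytF)
    have hq : q ∈ segment ℝ (q.1, yb) (q.1, yt) := by
      have hbt : yb ≤ yt := hybmin yt hytF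
      rcases eq_or_lt_of_le hbt with he | hlt
      · have : q.2 = yb := by rw [he]; linarith [he]
        have hqe : q = (q.1, yb) := Prod.ext rfl this
        rw [hqe]; exact left_mem_segment ℝ _ _
      · set t : ℝ := (q.2 - yb) / (yt - yb) with hts
        refine ⟨1 - t, t, ?_, ?_, by ring, ?_⟩
        · have : t ≤ 1 := by rw [hts, div_le_one (by linarith)]; linarith
          linarith
        · exact div_nonneg (by linarith) (by linarith)
        · apply Prod.ext
          · show (1 - t) * q.1 + t * q.1 = q.1
            ring
          · show (1 - t) * yb + t * yt = q.2
            have hden : yt - yb ≠ 0 := ne_of_gt (by linarith)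
            have ht : t * (yt - yb) = q.2 - yb := by
              rw [hts]; exact div_mul_cancel₀ _ hden
            linear_combination ht
    exact hqhull (hseg hq)
  rcases hqout with habove | hbelow
  · -- top point is on an edge; q is in the upper shadow
    set z : Pt := (q.1, yt) with hzdef
    have hzhull : z ∈ hull u := (hFmem yt).mp hytF
    have hzi : z ∉ interior (hull u) := by
      intro hint
      obtain ⟨ε, hε, hball⟩ := Metric.isOpen_iff.mp isOpen_interior z hint
      have hmem : (q.1, yt + ε / 2) ∈ Metric.ball z ε := by
        rw [Metric.mem_ball]
        have : dist ((q.1, yt + ε / 2) : Pt) (q.1, yt) = ε / 2 := by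
          have e1 : dist q.1 q.1 = (0:ℝ) := by simp
          have e2 : dist (yt + ε / 2) yt = ε / 2 := by
            rw [Real.dist_eq, show yt + ε / 2 - yt = ε / 2 by ring]
            exact abs_of_pos (by linarith)
          rw [Prod.dist_eq, e1, e2]
          exact max_eq_right (by positivity)
        rw [hzdef, this]
        linarith
      have : yt + ε / 2 ∈ F := (hFmem _).mpr (interior_subset (hball hmem))
      have := hytmax _ this
      linarith
    have hzQ : z ∉ u.Q := by
      intro hmem
      have hne : z ≠ q := by
        intro h
        have : z.2 = q.2 := by rw [h]
        simp only [hzdef] at this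
        linarith
      exact hdx z (u.hQP hmem) q hqP hne rfl
    obtain ⟨e, he, hze⟩ := exists_edge hgp hdx u hzhull hzi hzQ h1 h2
    left
    exact ⟨hqP, e, he, z, hze, rfl, habove⟩
  · -- bottom point is on an edge; q is in the lower shadow
    set z : Pt := (q.1, yb) with hzdef
    have hzhull : z ∈ hull u := (hFmem yb).mp hybF
    have hzi : z ∉ interior (hull u) := by
      intro hint
      obtain ⟨ε, hε, hball⟩ := Metric.isOpen_iff.mp isOpen_interior z hint
      have hmem : (q.1, yb - ε / 2) ∈ Metric.ball z ε := by
        rw [Metric.mem_ball]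
        have : dist ((q.1, yb - ε / 2) : Pt) (q.1, yb) = ε / 2 := by
          have e1 : dist q.1 q.1 = (0:ℝ) := by simp
          have e2 : dist (yb - ε / 2) yb = ε / 2 := by
            rw [Real.dist_eq, show yb - ε / 2 - yb = -(ε / 2) by ring, abs_neg]
            exact abs_of_pos (by linarith)
          rw [Prod.dist_eq, e1, e2]
          exact max_eq_right (by positivity)
        rw [hzdef, this]
        linarith
      have : yb - ε / 2 ∈ F := (hFmem _).mpr (interior_subset (hball hmem))
      have := hybmin _ this
      linarith
    have hzQ : z ∉ u.Q := by
      intro hmem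
      have hne : z ≠ q := by
        intro h
        have : z.2 = q.2 := by rw [h]
        simp only [hzdef] at this
        linarith
      exact hdx z (u.hQP hmem) q hqP hne rfl
    obtain ⟨e, he, hze⟩ := exists_edge hgp hdx u hzhull hzi hzQ h1 h2
    right
    exact ⟨hqP, e, he, z, hze, rfl, hbelow⟩

end SerAux
namespace SerAux
open Set

variable {P : Set Pt}

lemma hulls_disjoint (hgp : GenPos P) (hdx : DistinctX P) {u v : CPart P}
    (hQdisj : Disjoint u.Q v.Q) (hcross : ¬ UCross u v) :
    ∀ p, p ∈ hull u → p ∈ hull v → False := by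
  intro p0 hp0u hp0v
  set K : Set Pt := hull u ∩ hull v with hK
  have hKcpt : IsCompact K := (hull_compact u).inter_right (hull_closed v)
  have hKne : K.Nonempty := ⟨p0, hp0u, hp0v⟩
  obtain ⟨η, hηK, hηmin⟩ := hKcpt.exists_isMinOn hKne continuous_fst.continuousOn
  have hηu : η ∈ hull u := hηK.1
  have hηv : η ∈ hull v := hηK.2
  have hmin : ∀ w ∈ K, η.1 ≤ w.1 := fun w hw => hηmin hw
  -- helper: if η is interior to one hull, it is the leftmost vertex of the other
  have key : ∀ (a b : CPart P), η ∈ hull a → η ∈ hull b → η ∈ interior (hull a) →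
      hull a ∩ hull b = K → η ∈ b.Q := by
    intro a b hηa hηb hint hab
    have hright : ∀ w ∈ hull b, η.1 ≤ w.1 := by
      intro w hw
      by_contra hlt
      push_neg at hlt
      obtain ⟨ε, hε, hball⟩ := Metric.isOpen_iff.mp isOpen_interior η hint
      have hwη : w ≠ η := fun h => by rw [h] at hlt; linarith
      have hdpos : 0 < dist w η := dist_pos.mpr hwη
      set t : ℝ := min 1 (ε / (2 * dist w η)) with hts
      have ht0 : 0 < t := lt_min one_pos (div_pos hε (by linarith))
      have ht1 : t ≤ 1 := min_le_left _ _
      set x : Pt := (1 - t) • η + t • w with hx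
      have hxb : x ∈ hull b := (hull_convex b) hηb hw (by linarith) ht0.le (by ring)
      have hxdist : dist x η = t * dist w η := by
        rw [dist_eq_norm, dist_eq_norm]
        have : x - η = t • (w - η) := by
          rw [hx]
          module
        rw [this, norm_smul]
        simp [abs_of_pos ht0]
      have hxball : x ∈ Metric.ball η ε := by
        rw [Metric.mem_ball, hxdist]
        have h1 : t ≤ ε / (2 * dist w η) := min_le_right _ _
        have h2 : t * dist w η ≤ (ε / (2 * dist w η)) * dist w η :=
          mul_le_mul_of_nonneg_right h1 hdpos.le
        have h3 : (ε / (2 * dist w η)) * dist w η = ε / 2 := by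
          field_simp
        rw [h3] at h2
        linarith
      have hxa : x ∈ hull a := interior_subset (hball hxball)
      have hxK : x ∈ K := by rw [← hab]; exact ⟨hxa, hxb⟩
      have hx1 : x.1 = (1 - t) * η.1 + t * w.1 := rfl
      have := hmin x hxK
      rw [hx1] at this
      nlinarith
    -- so η is the leftmost point of hull b
    have hle : lftx b ≤ η.1 := (hull_slab b η hηb).1
    obtain ⟨c, hcQ, hcx, _⟩ := exists_lftx b
    have hge : η.1 ≤ lftx b := by
      rw [← hcx]
      exact hright c (subset_hull b hcQ)
    exact mem_Q_of_fiber_left hdx b hηb (le_antisymm hge hle)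
  by_cases hAint : η ∈ interior (hull u)
  · have hηbQ : η ∈ v.Q := key u v hηu hηv hAint rfl
    have hηP : η ∈ P := v.hQP hηbQ
    have hηuQ : η ∈ u.Q := u.hhull ⟨hηu, hηP⟩
    exact Set.disjoint_left.mp hQdisj hηuQ hηbQ
  by_cases hBint : η ∈ interior (hull v)
  · have hηaQ : η ∈ u.Q := key v u hηv hηu hBint (Set.inter_comm _ _)
    have hηP : η ∈ P := u.hQP hηaQ
    have hηvQ : η ∈ v.Q := v.hhull ⟨hηv, hηP⟩
    exact Set.disjoint_left.mp hQdisj hηaQ hηvQ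
  -- η is a frontier point of both hulls
  have hηuQ : η ∉ u.Q := by
    intro h
    exact Set.disjoint_left.mp hQdisj h (v.hhull ⟨hηv, u.hQP h⟩)
  have hηvQ : η ∉ v.Q := by
    intro h
    exact Set.disjoint_left.mp hQdisj (u.hhull ⟨hηu, v.hQP h⟩) h
  have hstrict : ∀ (a : CPart P), η ∈ hull a → η ∉ a.Q → lftx a < η.1 ∧ η.1 < rgtx a := by
    intro a hηa hηaQ'
    obtain ⟨h1, h2⟩ := hull_slab a η hηa
    constructor
    · rcases lt_or_eq_of_le h1 with h | h
      · exact h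
      · exact absurd (mem_Q_of_fiber_left hdx a hηa h.symm) hηaQ'
    · rcases lt_or_eq_of_le h2 with h | h
      · exact h
      · exact absurd (mem_Q_of_fiber_right hdx a hηa h) hηaQ'
  obtain ⟨hu1, hu2⟩ := hstrict u hηu hηuQ
  obtain ⟨hv1, hv2⟩ := hstrict v hηv hηvQ
  obtain ⟨e, he, hηe⟩ := exists_edge hgp hdx u hηu hAint hηuQ hu1 hu2
  obtain ⟨e', he', hηe'⟩ := exists_edge hgp hdx v hηv hBint hηvQ hv1 hv2
  apply hcross
  refine ⟨e, he, e', he', ⟨η, hηe, hηe'⟩, ?_⟩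
  intro hsets
  have h1 : e.1 ∈ ({e.1, e.2} : Set Pt) := Or.inl rfl
  rw [hsets] at h1
  have he1v : e.1 ∈ v.Q := by
    rcases h1 with h | h
    · rw [h]; exact he'.1
    · rw [h]; exact he'.2.1
  exact Set.disjoint_left.mp hQdisj he.1 he1v

end SerAux
namespace SerAux
open Set

variable {P : Set Pt}

def Ov (u v : CPart P) : Prop := lftx u ≤ rgtx v ∧ lftx v ≤ rgtx u

def Below (u v : CPart P) : Prop :=
  ∀ p ∈ hull u, ∀ z ∈ hull v, p.1 = z.1 → p.2 < z.2

def ABelow (u v : CPart P) : Prop := Ov u v ∧ Below u v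

lemma ov_common {u v : CPart P} (h : Ov u v) :
    ∃ x0, lftx u ≤ x0 ∧ x0 ≤ rgtx u ∧ lftx v ≤ x0 ∧ x0 ≤ rgtx v := by
  refine ⟨max (lftx u) (lftx v), le_max_left _ _, ?_, le_max_right _ _, ?_⟩
  · exact max_le (lftx_le_rgtx u) h.2
  · exact max_le h.1 (lftx_le_rgtx v)

lemma abelow_asymm {u v : CPart P} (h1 : ABelow u v) (h2 : ABelow v u) : False := by
  obtain ⟨x0, hu1, hu2, hv1, hv2⟩ := ov_common h1.1
  obtain ⟨y1, hy1⟩ := fiber_nonempty u hu1 hu2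
  obtain ⟨y2, hy2⟩ := fiber_nonempty v hv1 hv2
  have ha := h1.2 _ hy1 _ hy2 rfl
  have hb := h2.2 _ hy2 _ hy1 rfl
  simp at ha hb
  linarith

lemma below_or (hgp : GenPos P) (hdx : DistinctX P) {u v : CPart P}
    (hQdisj : Disjoint u.Q v.Q) (hcross : ¬ UCross u v) (hov : Ov u v) :
    Below u v ∨ Below v u := by
  have hdisj : Disjoint (hull u) (hull v) :=
    Set.disjoint_left.mpr fun p hpu hpv => hulls_disjoint hgp hdx hQdisj hcross p hpu hpv
  obtain ⟨f, s, t, hfs, hst, hft⟩ := geometric_hahn_banach_compact_closed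
    (hull_convex u) (hull_compact u) (hull_convex v) (hull_closed v) hdisj
  obtain ⟨x0, hu1, hu2, hv1, hv2⟩ := ov_common hov
  obtain ⟨y1, hy1⟩ := fiber_nonempty u hu1 hu2
  obtain ⟨y2, hy2⟩ := fiber_nonempty v hv1 hv2
  set β : ℝ := f (0, 1) with hβdef
  have hβ : β ≠ 0 := by
    intro h0
    have h1 := hfs _ hy1
    have h2 := hft _ hy2
    rw [cl_eval f _] at h1 h2
    simp only [← hβdef, h0] at h1 h2
    simp at h1 h2
    linarith
  rcases lt_or_gt_of_ne hβ with hneg | hpos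
  · right
    intro p hp z hz hx
    have h1 := hft _ hp
    have h2 := hfs _ hz
    rw [cl_eval f p] at h1
    rw [cl_eval f z] at h2
    rw [← hβdef] at h1 h2
    by_contra hc
    push_neg at hc
    have hxx : z.1 * f (1, 0) = p.1 * f (1, 0) := by rw [hx]
    nlinarith [mul_le_mul_of_nonpos_left hc hneg.le]
  · left
    intro p hp z hz hx
    have h1 := hfs _ hp
    have h2 := hft _ hz
    rw [cl_eval f p] at h1
    rw [cl_eval f z] at h2
    rw [← hβdef] at h1 h2
    by_contra hc
    push_neg at hc
    have hxx : z.1 * f (1, 0) = p.1 * f (1, 0) := by rw [hx]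
    nlinarith [mul_le_mul_of_nonneg_left hc hpos.le]

lemma rot_inj {n a b s : ℕ} (ha : a < n) (hb : b < n) (h : (a + s) % n = (b + s) % n) :
    a = b := by
  have h1 : a + s ≡ b + s [MOD n] := h
  have h2 : a ≡ b [MOD n] := h1.add_right_cancel' s
  have h3 : a % n = b % n := h2
  rw [Nat.mod_eq_of_lt ha, Nat.mod_eq_of_lt hb] at h3
  exact h3

lemma no_cycle (C : Set (CPart P))
    (hcomp : ∀ u ∈ C, ∀ v ∈ C, u ≠ v → Ov u v → ABelow u v ∨ ABelow v u) :
    ∀ n, 1 ≤ n → ∀ f : ℕ → CPart P, (∀ k, f k ∈ C) → f n = f 0 →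
      (∀ k < n, ABelow (f k) (f (k + 1))) → False := by
  intro n
  induction n using Nat.strong_induction_on with
  | _ n ih =>
    intro hn f hfC hper hstep
    by_cases hone : n = 1
    · subst hone
      have h := hstep 0 (by norm_num)
      rw [hper] at h
      exact abelow_asymm h h
    by_cases htwo : n = 2
    · subst htwo
      have h0 := hstep 0 (by norm_num)
      have h1 := hstep 1 (by norm_num)
      rw [hper] at h1
      exact abelow_asymm h0 h1
    have hn3 : 3 ≤ n := by omega
    by_cases hrep : ∃ i j, i < j ∧ j ≤ n ∧ j - i < n ∧ f i = f j
    · obtain ⟨i, j, hij, hjn, hlt, heq⟩ := hrep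
      refine ih (j - i) hlt (by omega) (fun k => f (i + k)) (fun k => hfC _) ?_ ?_
      · show f (i + (j - i)) = f (i + 0)
        rw [show i + (j - i) = j by omega, Nat.add_zero]
        exact heq.symm
      · intro k hk
        show ABelow (f (i + k)) (f (i + (k + 1)))
        rw [show i + (k + 1) = (i + k) + 1 by omega]
        exact hstep (i + k) (by omega)
    · push_neg at hrep
      have hinj : ∀ i j, i < n → j < n → f i = f j → i = j := by
        intro i j hi hj hfe
        by_contra hne
        rcases Nat.lt_or_ge i j with h | h
        · exact hrep i j h (by omega) (by omega) hfe
        · have : j < i := by omega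
          exact hrep j i this (by omega) (by omega) hfe.symm
      obtain ⟨m, hmrange, hmmax⟩ := (Finset.range n).exists_max_image
        (fun k => lftx (f k)) ⟨0, by simp; omega⟩
      rw [Finset.mem_range] at hmrange
      set g : ℕ → CPart P := fun k => f ((k + (m + 1)) % n) with hg
      have hidx : ∀ k, (k + (m + 1)) % n < n := fun k => Nat.mod_lt _ (by omega)
      have hgper : g n = g 0 := by
        show f ((n + (m + 1)) % n) = f ((0 + (m + 1)) % n)
        rw [Nat.add_mod_left, Nat.zero_add]
      have hsucc : ∀ k, (k + 1 + (m + 1)) % n = ((k + (m + 1)) % n + 1) % n := by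
        intro k
        rw [show k + 1 + (m + 1) = (k + (m + 1)) + 1 by omega, Nat.add_mod,
          Nat.mod_eq_of_lt (show 1 < n by omega)]
      have hgstep : ∀ k < n, ABelow (g k) (g (k + 1)) := by
        intro k hk
        show ABelow (f ((k + (m + 1)) % n)) (f ((k + 1 + (m + 1)) % n))
        set x := (k + (m + 1)) % n with hx
        have hxn : x < n := hidx k
        rw [hsucc k, ← hx]
        by_cases hx1 : x + 1 < n
        · rw [Nat.mod_eq_of_lt hx1]
          exact hstep x hxn
        · have hxe : x + 1 = n := by omega
          rw [hxe, Nat.mod_self]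
          have h := hstep x hxn
          rw [hxe, hper] at h
          exact h
      have hgn1 : (n - 1 + (m + 1)) % n = m := by
        rw [show n - 1 + (m + 1) = n + m by omega, Nat.add_mod_left,
          Nat.mod_eq_of_lt hmrange]
      have hgmax : ∀ k < n, lftx (g k) ≤ lftx (g (n - 1)) := by
        intro k hk
        show lftx (f ((k + (m + 1)) % n)) ≤ lftx (f ((n - 1 + (m + 1)) % n))
        rw [hgn1]
        exact hmmax _ (Finset.mem_range.mpr (hidx k))
      have hgne : ∀ a b, a < n → b < n → a ≠ b → g a ≠ g b := by
        intro a b ha hb hne hfe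
        exact hne (rot_inj ha hb (hinj _ _ (hidx a) (hidx b) hfe))
      set A := g (n - 2) with hA
      set B := g (n - 1) with hB
      set Cc := g 0 with hCc
      have hAB : ABelow A B := by
        have := hgstep (n - 2) (by omega)
        rw [show n - 2 + 1 = n - 1 by omega] at this
        exact this
      have hBC : ABelow B Cc := by
        have := hgstep (n - 1) (by omega)
        rw [show n - 1 + 1 = n by omega, hgper] at this
        exact this
      have hAC_ne : A ≠ Cc := hgne _ _ (by omega) (by omega) (by omega)
      have hlab : lftx A ≤ lftx B := hgmax (n - 2) (by omega)
      have hlcb : lftx Cc ≤ lftx B := hgmax 0 (by omega)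
      have hovac : Ov A Cc := by
        constructor
        · calc lftx A ≤ lftx B := hlab
            _ ≤ rgtx Cc := hBC.1.1
        · calc lftx Cc ≤ lftx B := hlcb
            _ ≤ rgtx A := hAB.1.2
      rcases hcomp A (hfC _) Cc (hfC _) hAC_ne hovac with hACb | hCAb
      · -- skip the max element : cycle of length n - 1
        set h : ℕ → CPart P := fun k => if k = n - 1 then g 0 else g k with hh
        refine ih (n - 1) (by omega) (by omega) h ?_ ?_ ?_
        · intro k
          by_cases hk : k = n - 1 <;> simp [hh, hk] <;> exact hfC _
        · show h (n - 1) = h 0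
          simp [hh]
        · intro k hk
          have hk1 : h k = g k := by simp [hh, show k ≠ n - 1 by omega]
          by_cases hk2 : k + 1 = n - 1
          · have hk3 : k = n - 2 := by omega
            have hk4 : h (k + 1) = g 0 := by simp [hh, hk2]
            rw [hk1, hk4, hk3]
            exact hACb
          · have hk4 : h (k + 1) = g (k + 1) := by simp [hh, hk2]
            rw [hk1, hk4]
            exact hgstep k (by omega)
      · -- triangle contradiction at the common abscissa lftx B
        set x0 := lftx B with hx0
        obtain ⟨ya, hya⟩ := fiber_nonempty A (by linarith [hlab]) hAB.1.2
        obtain ⟨yb, hyb⟩ := fiber_nonempty B (le_refl _) (lftx_le_rgtx B)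
        obtain ⟨yc, hyc⟩ := fiber_nonempty Cc (by linarith [hlcb]) hBC.1.1
        have h1 := hAB.2 _ hya _ hyb rfl
        have h2 := hBC.2 _ hyb _ hyc rfl
        have h3 := hCAb.2 _ hyc _ hya rfl
        simp at h1 h2 h3
        linarith

lemma exists_top (C : Set (CPart P)) (hfin : C.Finite) (hne : C.Nonempty)
    (hcomp : ∀ u ∈ C, ∀ v ∈ C, u ≠ v → Ov u v → ABelow u v ∨ ABelow v u) :
    ∃ u ∈ C, ∀ v ∈ C, ¬ ABelow u v := by
  by_contra hcon
  push_neg at hcon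
  have hstep : ∀ u : {x // x ∈ C}, ∃ v : {x // x ∈ C}, ABelow u.1 v.1 := by
    intro u
    obtain ⟨v, hv, hb⟩ := hcon u.1 u.2
    exact ⟨⟨v, hv⟩, hb⟩
  have : Nonempty {x // x ∈ C} := ⟨⟨hne.some, hne.some_mem⟩⟩
  set g : ℕ → {x // x ∈ C} := fun k => Nat.rec ⟨hne.some, hne.some_mem⟩
    (fun _ p => (hstep p).choose) k with hgdef
  have hgs : ∀ k, ABelow (g k).1 (g (k + 1)).1 := by
    intro k
    exact (hstep (g k)).choose_spec
  have hCfin : Finite {x // x ∈ C} := hfin.to_subtype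
  obtain ⟨i, j, hne', heq⟩ := Finite.exists_ne_map_eq_of_infinite g
  rcases Nat.lt_or_ge i j with hij | hij
  · refine no_cycle C hcomp (j - i) (by omega) (fun k => (g (i + k)).1)
      (fun k => (g (i + k)).2) ?_ ?_
    · show ((g (i + (j - i)) : {x // x ∈ C}) : CPart P) = ((g (i + 0) : {x // x ∈ C}) : CPart P)
      rw [show i + (j - i) = j by omega, Nat.add_zero, heq]
    · intro k hk
      show ABelow ((g (i + k) : {x // x ∈ C}) : CPart P) ((g (i + (k + 1)) : {x // x ∈ C}) : CPart P)
      rw [show i + (k + 1) = (i + k) + 1 by omega]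
      exact hgs (i + k)
  · have hji : j < i := by omega
    refine no_cycle C hcomp (i - j) (by omega) (fun k => (g (j + k)).1)
      (fun k => (g (j + k)).2) ?_ ?_
    · show ((g (j + (i - j)) : {x // x ∈ C}) : CPart P) = ((g (j + 0) : {x // x ∈ C}) : CPart P)
      rw [show j + (i - j) = i by omega, Nat.add_zero, heq]
    · intro k hk
      show ABelow ((g (j + k) : {x // x ∈ C}) : CPart P) ((g (j + (k + 1)) : {x // x ∈ C}) : CPart P)
      rw [show j + (k + 1) = (j + k) + 1 by omega]
      exact hgs (j + k)

end SerAux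

namespace SerAux
open Set

variable {P : Set Pt}

lemma dep_pair {u v : CPart P} (h : UDependsOn u v) :
    ∃ p ∈ hull u, ∃ z ∈ hull v, p.1 = z.1 ∧ p.2 < z.2 := by
  rcases h with ⟨q, hqu, hqlow⟩ | ⟨q, hqup, hqv⟩
  · obtain ⟨hqP, e, he, z, hz, hx, hy⟩ := hqlow
    refine ⟨q, subset_hull u hqu, z, ?_, hx.symm, hy⟩
    exact (hull_convex v).segment_subset (subset_hull v he.1) (subset_hull v he.2.1)
      (openSegment_subset_segment _ _ _ hz)
  · obtain ⟨hqP, e, he, z, hz, hx, hy⟩ := hqup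
    refine ⟨z, ?_, q, subset_hull v hqv, hx, hy⟩
    exact (hull_convex u).segment_subset (subset_hull u he.1) (subset_hull u he.2.1)
      (openSegment_subset_segment _ _ _ hz)

end SerAux

theorem convexPart_partitions_serializable
    (P : Set Pt) (hPfin : P.Finite) (hgp : GenPos P) (hdx : DistinctX P)
    (Us : Set (CPart P)) (C : Set (CPart P))
    (hC : C ∈ PartFam Us) (hCne : C.Nonempty) :
    ∃ u, URME C u ∧ C \ {u} ∈ PartFam Us := by
  classical
  obtain ⟨hsub, hfin, hncross, hdisjQ, hlow⟩ := hC
  have hcomp : ∀ u ∈ C, ∀ v ∈ C, u ≠ v → SerAux.Ov u v →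
      SerAux.ABelow u v ∨ SerAux.ABelow v u := by
    intro u hu v hv hne hov
    rcases SerAux.below_or hgp hdx (hdisjQ u hu v hv hne) (hncross u hu v hv) hov with h | h
    · exact Or.inl ⟨hov, h⟩
    · exact Or.inr ⟨⟨hov.2, hov.1⟩, h⟩
  have hdepA : ∀ u ∈ C, ∀ v ∈ C, u ≠ v → UDependsOn u v → SerAux.ABelow u v := by
    intro u hu v hv hne hdep
    obtain ⟨p, hp, z, hz, hx, hy⟩ := SerAux.dep_pair hdep
    have h1 := SerAux.hull_slab u p hp
    have h2 := SerAux.hull_slab v z hz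
    have hov : SerAux.Ov u v := by
      constructor
      · linarith [h1.1, h2.2]
      · linarith [h2.1, h1.2]
    rcases hcomp u hu v hv hne hov with h | h
    · exact h
    · exfalso
      have := h.2 z hz p hp hx.symm
      linarith
  obtain ⟨u0, hu0C, hu0top⟩ := SerAux.exists_top C hfin hCne hcomp
  have hu0ext : UExtreme C u0 := by
    refine ⟨hu0C, ?_⟩
    intro v hv hne hdep
    exact hu0top v hv (hdepA u0 hu0C v hv (Ne.symm hne) hdep)
  have hsep : ∀ u, UExtreme C u → ∀ v, UExtreme C v → u ≠ v →
      rgtx v ≤ lftx u ∨ rgtx u ≤ lftx v := by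
    intro u hu v hv hne
    by_contra hcon
    push_neg at hcon
    obtain ⟨h1, h2⟩ := hcon
    obtain ⟨au, hauQ, haux, -⟩ := SerAux.exists_lftx u
    obtain ⟨av, havQ, havx, -⟩ := SerAux.exists_lftx v
    have hQd : Disjoint u.Q v.Q := hdisjQ u hu.1 v hv.1 hne
    have hxne : lftx u ≠ lftx v := by
      intro he
      have hane : au ≠ av := fun hh => Set.disjoint_left.mp hQd hauQ (hh ▸ havQ)
      exact hdx au (u.hQP hauQ) av (v.hQP havQ) hane (by rw [haux, havx, he])
    rcases lt_or_gt_of_ne hxne with hlt | hgt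
    · have hin1 : lftx u < av.1 := by rw [havx]; exact hlt
      have hin2 : av.1 < rgtx u := by rw [havx]; exact h2
      have havP : av ∈ P := v.hQP havQ
      have havnu : av ∉ u.Q := fun h => Set.disjoint_left.mp hQd h havQ
      rcases SerAux.shadow hgp hdx u havP havnu hin1 hin2 with hup | hlo
      · exact hu.2 v hv.1 (Ne.symm hne) (Or.inr ⟨av, hup, havQ⟩)
      · exact hv.2 u hu.1 hne (Or.inl ⟨av, havQ, hlo⟩)
    · have hin1 : lftx v < au.1 := by rw [haux]; exact hgt
      have hin2 : au.1 < rgtx v := by rw [haux]; exact h1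
      have hauP : au ∈ P := u.hQP hauQ
      have haunv : au ∉ v.Q := fun h => Set.disjoint_left.mp hQd hauQ h
      rcases SerAux.shadow hgp hdx v hauP haunv hin1 hin2 with hup | hlo
      · exact hv.2 u hu.1 hne (Or.inr ⟨au, hup, hauQ⟩)
      · exact hu.2 v hv.1 (Ne.symm hne) (Or.inl ⟨au, hauQ, hlo⟩)
  set E := {u | UExtreme C u} with hE
  have hEsub : E ⊆ C := fun u hu => hu.1
  have hEfin : E.Finite := hfin.subset hEsub
  have hEne : E.Nonempty := ⟨u0, hu0ext⟩
  obtain ⟨ustar, hustarE, hmax⟩ := hEfin.exists_maximalFor lftx E hEne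
  have hmax' : ∀ v ∈ E, lftx v ≤ lftx ustar := by
    intro v hv
    rcases le_or_gt (lftx v) (lftx ustar) with h | h
    · exact h
    · exact (hmax hv h.le).ge
  have hustarext : UExtreme C ustar := hustarE
  refine ⟨ustar, ⟨hustarext, ?_⟩, ?_⟩
  · intro v hvext hvne
    rcases hsep ustar hustarext v hvext (Ne.symm hvne) with h | h
    · exact h
    · exfalso
      have hle1 : lftx v ≤ lftx ustar := hmax' v hvext
      have hle2 : lftx ustar ≤ rgtx ustar := SerAux.lftx_le_rgtx ustar
      have heq : lftx v = lftx ustar := le_antisymm hle1 (by linarith)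
      obtain ⟨av, havQ, havx, -⟩ := SerAux.exists_lftx v
      obtain ⟨au, hauQ, haux, -⟩ := SerAux.exists_lftx ustar
      have hQd : Disjoint v.Q ustar.Q := hdisjQ v hvext.1 ustar hustarext.1 hvne
      have hane : av ≠ au := fun hh => Set.disjoint_left.mp hQd havQ (hh ▸ hauQ)
      exact hdx av (v.hQP havQ) au (ustar.hQP hauQ) hane (by rw [havx, haux, heq])
  · refine ⟨fun x hx => hsub hx.1, hfin.subset Set.diff_subset,
      fun u hu v hv => hncross u hu.1 v hv.1,
      fun u hu v hv hne => hdisjQ u hu.1 v hv.1 hne, ?_⟩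
    intro q hq
    simp only [lowUC, Set.mem_iUnion] at hq
    obtain ⟨v, hv, hqv⟩ := hq
    have hqC : q ∈ lowUC C := by
      simp only [lowUC, Set.mem_iUnion]
      exact ⟨v, hv.1, hqv⟩
    have hqpts : q ∈ ptsU C := hlow hqC
    simp only [ptsU, Set.mem_iUnion] at hqpts
    obtain ⟨w, hw, hqw⟩ := hqpts
    by_cases hws : w = ustar
    · exfalso
      subst hws
      have hvne : v ≠ w := fun h => hv.2 (by rw [← h]; rfl)
      exact hustarext.2 v hv.1 hvne (Or.inl ⟨q, hqw, hqv⟩)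
    · simp only [ptsU, Set.mem_iUnion]
      exact ⟨w, ⟨hw, hws⟩, hqw⟩
end
end

section
/- Let U be any subset of the convex parts on an n-point set P. Then the combination graph for convex partitions over U has size at most O(2ⁿ n³). In particular, the number of labeled edges is at most Σ_{l=1}^{n} Σ_{r=l}^{n} 2^{r-l+1} · 2^{n-(r-l+1)} · n = O(2ⁿ n³), using that there are at most 2^{r-l+1} convex parts with leftmost point p_l and rightmost point p_r, and for a fixed such convex part u, at most 2^{n-(r-l+1)} · n equivalence classes have an outgoing edge labeled u. -/
/-!
Statement 10: for any subset U of the convex parts on an n-point set P, the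
combination graph for convex partitions over U has size O(2^n · n^3)
(vertices + labeled edges + sink edges).
-/
open scoped Classical

noncomputable section

/-- Equivalence: equal vertex-point sets and equal leftmost points of the
right-most extreme elements. -/
def PEqv {P : Set Pt} (C C' : Set (CPart P)) : Prop :=
  ptsU C = ptsU C' ∧ ∀ u u', URME C u → URME C' u' → lftx u = lftx u'

/-- The equivalence class of `C` (a vertex of the combination graph). -/
def pcls {P : Set Pt} (Us : Set (CPart P)) (C : Set (CPart P)) :
    Set (Set (CPart P)) :=
  {D ∈ PartFam Us | PEqv C D}

/-- `C →ᵘ C'` : `C'` arises from `C` by adding the new right-most extreme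
element `u`. -/
def PStep {P : Set Pt} (Us : Set (CPart P)) (C C' : Set (CPart P))
    (u : CPart P) : Prop :=
  C ∈ PartFam Us ∧ C' ∈ PartFam Us ∧ u ∉ C ∧ C' = insert u C ∧ URME C' u

/-- A labeled edge of the combination graph for convex partitions. -/
def PLEdge {P : Set Pt} (Us : Set (CPart P)) (V : Set (Set (CPart P)))
    (u : CPart P) (W : Set (Set (CPart P))) : Prop :=
  ∃ C C', V = pcls Us C ∧ W = pcls Us C' ∧ PStep Us C C' u

lemma cpart_ext {P : Set Pt} {u v : CPart P} (h : u.Q = v.Q) : u = v := by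
  cases u; cases v; simp_all

lemma exists_lftx_mem {P : Set Pt} (u : CPart P) : ∃ a ∈ u.Q, a.1 = lftx u := by
  have h := Set.Nonempty.csInf_mem (u.hne.image Prod.fst) (u.hfin.image _)
  obtain ⟨a, ha, ha'⟩ := h
  exact ⟨a, ha, ha'⟩

lemma exists_rgtx_mem {P : Set Pt} (u : CPart P) : ∃ a ∈ u.Q, a.1 = rgtx u := by
  have h := Set.Nonempty.csSup_mem (u.hne.image Prod.fst) (u.hfin.image _)
  obtain ⟨a, ha, ha'⟩ := h
  exact ⟨a, ha, ha'⟩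

lemma lftx_le {P : Set Pt} (u : CPart P) {a : Pt} (ha : a ∈ u.Q) : lftx u ≤ a.1 :=
  csInf_le ((u.hfin.image Prod.fst).bddBelow) ⟨a, ha, rfl⟩

lemma le_rgtx {P : Set Pt} (u : CPart P) {a : Pt} (ha : a ∈ u.Q) : a.1 ≤ rgtx u :=
  le_csSup ((u.hfin.image Prod.fst).bddAbove) ⟨a, ha, rfl⟩

lemma lftx_le_rgtx {P : Set Pt} (u : CPart P) : lftx u ≤ rgtx u := by
  obtain ⟨a, ha, h⟩ := exists_lftx_mem u
  rw [← h]
  exact le_rgtx u ha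

lemma ker_dep {f : Pt →L[ℝ] ℝ} (hf : f ≠ 0) {k₁ k₂ : Pt} (h1 : f k₁ = 0) (h2 : f k₂ = 0)
    (hk1 : k₁ ≠ 0) : ∃ r : ℝ, k₂ = r • k₁ := by
  have hrep : ∀ k : Pt, f k = k.1 * f (1,0) + k.2 * f (0,1) := by
    intro k
    have hk : k = k.1 • ((1:ℝ),(0:ℝ)) + k.2 • ((0:ℝ),(1:ℝ)) := by
      ext <;> simp
    calc f k = f (k.1 • ((1:ℝ),(0:ℝ)) + k.2 • ((0:ℝ),(1:ℝ))) := by rw [← hk]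
    _ = k.1 * f (1,0) + k.2 * f (0,1) := by
      rw [map_add, ContinuousLinearMap.map_smul, ContinuousLinearMap.map_smul]
      simp [smul_eq_mul]
  set α := f (1,0) with hα
  set β := f (0,1) with hβ
  have hαβ : ¬ (α = 0 ∧ β = 0) := by
    rintro ⟨hA, hB⟩
    apply hf
    refine ContinuousLinearMap.ext fun k => ?_
    rw [ContinuousLinearMap.zero_apply, hrep k, hA, hB]; ring
  have e1 : k₁.1 * α + k₁.2 * β = 0 := by rw [← hrep]; exact h1
  have e2 : k₂.1 * α + k₂.2 * β = 0 := by rw [← hrep]; exact h2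
  have hdet : k₁.1 * k₂.2 = k₂.1 * k₁.2 := by
    rcases eq_or_ne α 0 with hA | hA
    · have hB : β ≠ 0 := fun hB => hαβ ⟨hA, hB⟩
      have h12 : k₁.2 = 0 := by
        have := e1; rw [hA] at this; simpa [hB] using this
      have h22 : k₂.2 = 0 := by
        have := e2; rw [hA] at this; simpa [hB] using this
      rw [h12, h22]; ring
    · have key : α * (k₁.1 * k₂.2) = α * (k₂.1 * k₁.2) := by
        linear_combination k₂.2 * e1 - k₁.2 * e2
      exact mul_left_cancel₀ hA key
  rcases eq_or_ne k₁.1 0 with h11 | h11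
  · have h12 : k₁.2 ≠ 0 := by
      intro h12
      exact hk1 (Prod.ext h11 h12)
    refine ⟨k₂.2 / k₁.2, ?_⟩
    have h21 : k₂.1 = 0 := by
      have := hdet; rw [h11] at this
      have : k₂.1 * k₁.2 = 0 := by linarith
      rcases mul_eq_zero.1 this with h | h
      · exact h
      · exact absurd h h12
    ext
    · simp [Prod.smul_def, h11, h21, smul_eq_mul]
    · simp [Prod.smul_def, smul_eq_mul]
      field_simp
  · refine ⟨k₂.1 / k₁.1, ?_⟩
    ext
    · simp [Prod.smul_def, smul_eq_mul]; field_simp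
    · simp [Prod.smul_def, smul_eq_mul]
      field_simp
      nlinarith [hdet]

lemma collinear_of_line {f : Pt →L[ℝ] ℝ} (hf : f ≠ 0) {M : ℝ} {a b c : Pt}
    (ha : f a = M) (hb : f b = M) (hc : f c = M) (hab : a ≠ b) :
    Collinear ℝ ({a, b, c} : Set Pt) := by
  rw [collinear_iff_of_mem (Set.mem_insert a {b, c})]
  refine ⟨b - a, ?_⟩
  intro p hp
  have hba : f (b - a) = 0 := by rw [map_sub, ha, hb, sub_self]
  have hbane : b - a ≠ 0 := sub_ne_zero.2 (Ne.symm hab)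
  rcases hp with rfl | rfl | rfl
  · exact ⟨0, by simp⟩
  · exact ⟨1, by simp⟩
  · have hca : f (p - a) = 0 := by rw [map_sub, ha, hc, sub_self]
    obtain ⟨r, hr⟩ := ker_dep hf hba hca hbane
    exact ⟨r, by rw [← hr]; simp⟩

lemma face_lemma (s : Finset Pt) (f : Pt →L[ℝ] ℝ) {z : Pt}
    (hz : z ∈ convexHull ℝ (s : Set Pt)) (hle : ∀ y ∈ s, f y ≤ f z) :
    z ∈ convexHull ℝ ((s.filter (fun y => f y = f z) : Finset Pt) : Set Pt) := by
  classical
  rw [Finset.convexHull_eq] at hz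
  obtain ⟨w, hw0, hw1, hwz⟩ := hz
  have hzsum : z = ∑ y ∈ s, w y • y := by
    rw [← hwz, Finset.centerMass_eq_of_sum_1 _ _ hw1]; rfl
  have hfz : f z = ∑ y ∈ s, w y * f y := by
    rw [hzsum, map_sum]
    refine Finset.sum_congr rfl fun y hy => ?_
    rw [ContinuousLinearMap.map_smul, smul_eq_mul]
  have hsum0 : ∑ y ∈ s, w y * (f z - f y) = 0 := by
    have : ∑ y ∈ s, w y * (f z - f y) = (∑ y ∈ s, w y) * f z - ∑ y ∈ s, w y * f y := by
      rw [Finset.sum_mul, ← Finset.sum_sub_distrib]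
      exact Finset.sum_congr rfl fun y hy => by ring
    rw [this, hw1, one_mul, ← hfz, sub_self]
  have hterm : ∀ y ∈ s, w y * (f z - f y) = 0 :=
    (Finset.sum_eq_zero_iff_of_nonneg fun y hy =>
      mul_nonneg (hw0 y hy) (sub_nonneg.2 (hle y hy))).1 hsum0
  set t := s.filter (fun y => f y = f z) with ht
  have hwzero : ∀ y ∈ s, y ∉ t → w y = 0 := by
    intro y hy hyn
    have hne : f y ≠ f z := by
      intro h; exact hyn (Finset.mem_filter.2 ⟨hy, h⟩)
    have := hterm y hy
    rcases mul_eq_zero.1 this with h | h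
    · exact h
    · exact absurd (by linarith [sub_eq_zero.1 h] : f y = f z) hne
  have hts : t ⊆ s := Finset.filter_subset _ _
  have hw1' : ∑ y ∈ t, w y = 1 := by
    rw [← hw1]
    exact Finset.sum_subset hts (fun y hy hyn => hwzero y hy hyn)
  have hzsum' : z = ∑ y ∈ t, w y • y := by
    rw [hzsum]
    refine (Finset.sum_subset hts (fun y hy hyn => by rw [hwzero y hy hyn, zero_smul])).symm
  have := t.centerMass_mem_convexHull (fun y hy => hw0 y (hts hy))
    (by rw [hw1']; norm_num) (fun y hy => Finset.mem_coe.2 hy)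
  rw [Finset.centerMass_eq_of_sum_1 _ _ hw1'] at this
  rw [hzsum']
  exact this

lemma frontier_edge {P : Set Pt} (hgp : GenPos P) (u : CPart P) {z : Pt}
    (hzfr : z ∈ frontier (convexHull ℝ u.Q)) (hzx : ∀ w ∈ u.Q, w.1 ≠ z.1) :
    ∃ e ∈ cedges u, z ∈ openSegment ℝ e.1 e.2 := by
  classical
  set K := convexHull ℝ u.Q with hK
  have hKconv : Convex ℝ K := convex_convexHull ℝ _
  have hKcl : IsClosed K := (u.hfin.isCompact_convexHull ℝ).isClosed
  have hfr : frontier K = K \ interior K := by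
    rw [frontier, hKcl.closure_eq]
  have hzK : z ∈ K := (hfr ▸ hzfr).1
  have hzint : z ∉ interior K := (hfr ▸ hzfr).2
  by_cases h3 : ∃ a ∈ u.Q, ∃ b ∈ u.Q, ∃ c ∈ u.Q, a ≠ b ∧ a ≠ c ∧ b ≠ c
  · -- full-dimensional case
    obtain ⟨a, ha, b, hb, c, hc, hab, hac, hbc⟩ := h3
    have hnc : ¬ Collinear ℝ ({a, b, c} : Set Pt) :=
      hgp a (u.hQP ha) b (u.hQP hb) c (u.hQP hc) hab hac hbc
    have hai : AffineIndependent ℝ ![a, b, c] :=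
      affineIndependent_iff_not_collinear_set.2 hnc
    have hspan3 : affineSpan ℝ (Set.range ![a, b, c]) = ⊤ := by
      rw [hai.affineSpan_eq_top_iff_card_eq_finrank_add_one]
      simp [Module.finrank_prod]
    have hspan : affineSpan ℝ u.Q = ⊤ := by
      refine top_unique ?_
      rw [← hspan3]
      refine affineSpan_mono ℝ ?_
      simp only [Matrix.range_cons, Matrix.range_empty, Set.singleton_union, Set.insert_union,
        Set.union_empty]
      intro x hx
      rcases hx with rfl | rfl | rfl
      · exact ha
      · exact hb
      · exact hc
    have hint : (interior K).Nonempty :=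
      interior_convexHull_nonempty_iff_affineSpan_eq_top.2 hspan
    obtain ⟨f, hf⟩ := geometric_hahn_banach_open_point (hKconv.interior) isOpen_interior hzint
    obtain ⟨w0, hw0⟩ := hint
    have hfw0 : f w0 < f z := hf w0 hw0
    have hfK : ∀ w ∈ K, f w ≤ f z := by
      intro w hw
      by_contra hlt
      push_neg at hlt
      set t : ℝ := (f z - f w0) / (f w - f w0) with htdef
      have hden : 0 < f w - f w0 := by linarith
      have ht0 : 0 < t := div_pos (by linarith) hden
      have ht1 : t < 1 := (div_lt_one hden).2 (by linarith)
      have hyint : t • w + (1 - t) • w0 ∈ interior K :=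
        hKconv.combo_closure_interior_mem_interior (subset_closure hw) hw0 ht0.le
          (by linarith) (by ring)
      have := hf _ hyint
      rw [map_add, ContinuousLinearMap.map_smul, ContinuousLinearMap.map_smul,
        smul_eq_mul, smul_eq_mul] at this
      have heq : t * (f w - f w0) = f z - f w0 := by
        rw [htdef, div_mul_cancel₀ _ hden.ne']
      nlinarith [heq, this]
    have hf0 : f ≠ 0 := by
      intro h0
      rw [h0] at hfw0
      simp at hfw0
    -- the face containing z
    set s : Finset Pt := u.hfin.toFinset with hs
    have hsc : (s : Set Pt) = u.Q := u.hfin.coe_toFinset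
    have hzf : z ∈ convexHull ℝ ((s.filter (fun y => f y = f z) : Finset Pt) : Set Pt) := by
      refine face_lemma s f ?_ ?_
      · rw [hsc]; exact hzK
      · intro y hy
        exact hfK y (subset_convexHull ℝ _ (hsc ▸ Finset.mem_coe.2 hy))
    set F : Set Pt := ((s.filter (fun y => f y = f z) : Finset Pt) : Set Pt) with hF
    have hFQ : ∀ y ∈ F, y ∈ u.Q ∧ f y = f z := by
      intro y hy
      simp only [hF, Finset.coe_filter, Set.mem_setOf_eq, hs, Set.Finite.mem_toFinset] at hy
      exact hy
    have hFne : F.Nonempty := by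
      rcases F.eq_empty_or_nonempty with h | h
      · rw [h] at hzf; simp at hzf
      · exact h
    obtain ⟨a0, ha0⟩ := hFne
    by_cases h2 : ∃ b0 ∈ F, b0 ≠ a0
    · obtain ⟨b0, hb0, hb0ne⟩ := h2
      have hFsub : F ⊆ {a0, b0} := by
        intro c0 hc0
        by_contra hc0n
        simp only [Set.mem_insert_iff, Set.mem_singleton_iff] at hc0n
        push_neg at hc0n
        have hcol : Collinear ℝ ({a0, b0, c0} : Set Pt) :=
          collinear_of_line hf0 (hFQ a0 ha0).2 (hFQ b0 hb0).2 (hFQ c0 hc0).2 (Ne.symm hb0ne)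
        exact hgp a0 (u.hQP (hFQ a0 ha0).1) b0 (u.hQP (hFQ b0 hb0).1) c0 (u.hQP (hFQ c0 hc0).1)
          (Ne.symm hb0ne) (Ne.symm hc0n.1) (Ne.symm hc0n.2) hcol
      have hzseg : z ∈ segment ℝ a0 b0 := by
        have := (convexHull_mono hFsub) hzf
        rwa [convexHull_pair] at this
      have hza : a0 ≠ z := fun h => hzx a0 (hFQ a0 ha0).1 (by rw [h])
      have hzb : b0 ≠ z := fun h => hzx b0 (hFQ b0 hb0).1 (by rw [h])
      have hzo : z ∈ openSegment ℝ a0 b0 := mem_openSegment_of_ne_left_right hza hzb hzseg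
      refine ⟨(a0, b0), ⟨(hFQ a0 ha0).1, (hFQ b0 hb0).1, Ne.symm hb0ne, ?_⟩, hzo⟩
      -- open segment lies in the frontier
      intro w hw
      have hwseg : w ∈ segment ℝ a0 b0 := openSegment_subset_segment ℝ a0 b0 hw
      have hwK : w ∈ K := by
        have hsubQ : ({a0, b0} : Set Pt) ⊆ u.Q :=
          Set.insert_subset_iff.2 ⟨(hFQ a0 ha0).1, Set.singleton_subset_iff.2 (hFQ b0 hb0).1⟩
        have : segment ℝ a0 b0 ⊆ K := by
          rw [← convexHull_pair]
          exact convexHull_mono hsubQ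
        exact this hwseg
      have hfw : f w = f z := by
        obtain ⟨p, q, hp, hq, hpq, rfl⟩ := hwseg
        rw [map_add, ContinuousLinearMap.map_smul, ContinuousLinearMap.map_smul,
          smul_eq_mul, smul_eq_mul, (hFQ a0 ha0).2, (hFQ b0 hb0).2]
        linear_combination (f z) * hpq
      have hwint : w ∉ interior K := fun hint' => absurd (hf w hint') (by rw [hfw]; simp)
      rw [hfr]
      exact ⟨hwK, hwint⟩
    · -- F a singleton: z would be a vertex, contradiction
      push_neg at h2
      have : z = a0 := by
        have hsub : F ⊆ {a0} := fun y hy => h2 y hy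
        have := (convexHull_mono hsub) hzf
        rwa [convexHull_singleton, Set.mem_singleton_iff] at this
      exact absurd rfl (this ▸ hzx a0 (hFQ a0 ha0).1)
  · -- degenerate: at most two points
    push_neg at h3
    obtain ⟨a, ha⟩ := u.hne
    by_cases h2 : ∃ b ∈ u.Q, b ≠ a
    · obtain ⟨b, hb, hba⟩ := h2
      have hQab : u.Q = {a, b} := by
        apply Set.Subset.antisymm
        · intro c hc
          simp only [Set.mem_insert_iff, Set.mem_singleton_iff]
          by_cases hca : c = a
          · exact Or.inl hca
          · exact Or.inr (h3 a ha b hb c hc (Ne.symm hba) (Ne.symm hca)).symm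
        · intro c hc
          rcases hc with rfl | rfl
          · exact ha
          · exact hb
      have hKseg : K = segment ℝ a b := by rw [hK, hQab, convexHull_pair]
      have hintK : interior K = ∅ := by
        by_contra hne
        have hne' : (interior K).Nonempty := Set.nonempty_iff_ne_empty.2 hne
        have hspan : affineSpan ℝ u.Q = ⊤ := affineSpan_eq_top_of_nonempty_interior hne'
        have hcol : Collinear ℝ u.Q := hQab ▸ collinear_pair ℝ a b
        have hvs : vectorSpan ℝ u.Q = ⊤ := AffineSubspace.vectorSpan_eq_top_of_affineSpan_eq_top ℝ _ _ hspan
        have h1 : Module.finrank ℝ (vectorSpan ℝ u.Q) ≤ 1 := by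
          haveI := hcol.finiteDimensional_vectorSpan
          exact collinear_iff_finrank_le_one.1 hcol
        rw [hvs] at h1
        rw [finrank_top] at h1
        simp [Module.finrank_prod] at h1
      have hfrK : frontier K = K := by rw [hfr, hintK, Set.diff_empty]
      have hzseg : z ∈ segment ℝ a b := hKseg ▸ hzK
      have hza : a ≠ z := fun h => hzx a ha (by rw [h])
      have hzb : b ≠ z := fun h => hzx b hb (by rw [h])
      refine ⟨(a, b), ⟨ha, hb, Ne.symm hba, ?_⟩, mem_openSegment_of_ne_left_right hza hzb hzseg⟩
      rw [hfrK, hKseg]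
      exact openSegment_subset_segment ℝ a b
    · push_neg at h2
      have hQa : u.Q ⊆ {a} := fun y hy => h2 y hy
      have : z = a := by
        have := (convexHull_mono hQa) hzK
        rwa [convexHull_singleton, Set.mem_singleton_iff] at this
      exact absurd rfl (this ▸ hzx a ha)

lemma below_or_above {P : Set Pt} (hgp : GenPos P) (hdx : DistinctX P) (u : CPart P) {q : Pt}
    (hqP : q ∈ P) (hqn : q ∉ u.Q) (hl : lftx u < q.1) (hr : q.1 < rgtx u) :
    q ∈ lowU u ∨ q ∈ upU u := by
  classical
  have hzx : ∀ w ∈ u.Q, w.1 ≠ q.1 := by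
    intro w hw
    exact hdx w (u.hQP hw) q hqP (fun h => hqn (h ▸ hw))
  set K := convexHull ℝ u.Q with hK
  have hKconv : Convex ℝ K := convex_convexHull ℝ _
  have hKcpt : IsCompact K := u.hfin.isCompact_convexHull ℝ
  have hKcl : IsClosed K := hKcpt.isClosed
  have hqK : q ∉ K := fun h => hqn (u.hhull ⟨h, hqP⟩)
  obtain ⟨pl, hpl, hplx⟩ := exists_lftx_mem u
  obtain ⟨pr, hpr, hprx⟩ := exists_rgtx_mem u
  have hlr : pl.1 < pr.1 := by rw [hplx, hprx]; linarith
  -- a point of K on the vertical line through q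
  set t : ℝ := (q.1 - pl.1) / (pr.1 - pl.1) with htdef
  have hden : (0:ℝ) < pr.1 - pl.1 := by linarith
  have ht0 : 0 ≤ t := le_of_lt (div_pos (by rw [hplx]; linarith) hden)
  have ht1 : t ≤ 1 := le_of_lt ((div_lt_one hden).2 (by rw [hprx]; linarith))
  set z0 : Pt := (1 - t) • pl + t • pr with hz0
  have hz0K : z0 ∈ K :=
    hKconv.segment_subset (subset_convexHull ℝ _ hpl) (subset_convexHull ℝ _ hpr)
      ⟨1 - t, t, by linarith, ht0, by ring, rfl⟩
  have hz0x : z0.1 = q.1 := by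
    simp only [hz0, Prod.fst_add, Prod.smul_fst, smul_eq_mul]
    rw [htdef]; field_simp; ring
  set T : Set Pt := K ∩ {w : Pt | w.1 = q.1} with hT
  have hTcpt : IsCompact T :=
    hKcpt.inter_right (isClosed_eq continuous_fst continuous_const)
  have hTne : T.Nonempty := ⟨z0, hz0K, hz0x⟩
  set Ys : Set ℝ := Prod.snd '' T with hYs
  have hYcpt : IsCompact Ys := hTcpt.image continuous_snd
  have hYne : Ys.Nonempty := hTne.image _
  obtain ⟨za, hzaT, hzay⟩ := hYcpt.sInf_mem hYne
  obtain ⟨zb, hzbT, hzby⟩ := hYcpt.sSup_mem hYne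
  have hzax : za.1 = q.1 := hzaT.2
  have hzbx : zb.1 = q.1 := hzbT.2
  -- q is strictly below or strictly above the slice
  have hout : q.2 < sInf Ys ∨ sSup Ys < q.2 := by
    by_contra hcon
    push_neg at hcon
    obtain ⟨hc1, hc2⟩ := hcon
    -- then q lies on the segment from za to zb, hence in K
    apply hqK
    rcases eq_or_lt_of_le hc2 with heq | hlt
    · -- q = zb
      have : q = zb := by
        ext
        · rw [hzbx]
        · rw [hzby, ← heq]
      rw [this]; exact hzbT.1
    · rcases eq_or_lt_of_le hc1 with heq1 | hlt1
      · -- q = za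
        have : q = za := by
          ext
          · rw [hzax]
          · rw [hzay, ← heq1]
        rw [this]; exact hzaT.1
      · -- strictly between: convex combination of za and zb
        have hab : za.2 < zb.2 := by rw [hzay, hzby] at *; linarith
        set c : ℝ := (zb.2 - q.2) / (zb.2 - za.2) with hc
        set d : ℝ := (q.2 - za.2) / (zb.2 - za.2) with hd
        have hden2 : (0:ℝ) < zb.2 - za.2 := by linarith
        have hq' : q = c • za + d • zb := by
          have hcd : c + d = 1 := by rw [hc, hd]; field_simp; ring
          ext
          · simp only [Prod.fst_add, Prod.smul_fst, smul_eq_mul, hzax, hzbx]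
            linear_combination (-q.1) * hcd
          · simp only [Prod.snd_add, Prod.smul_snd, smul_eq_mul, hc, hd]
            rw [hzay, hzby] at *
            field_simp
            ring
        rw [hq']
        exact hKconv.segment_subset hzaT.1 hzbT.1
          ⟨c, d, by rw [hc]; exact div_nonneg (by rw [hzby]; linarith) hden2.le,
           by rw [hd]; exact div_nonneg (by rw [hzay]; linarith) hden2.le,
           by rw [hc, hd]; field_simp; ring, rfl⟩
  -- frontier membership of slice endpoints
  have hfr : frontier K = K \ interior K := by rw [frontier, hKcl.closure_eq]
  rcases hout with hbelow | habove
  · -- q strictly below: za is on the lower boundary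
    have hzafr : za ∈ frontier K := by
      rw [hfr]
      refine ⟨hzaT.1, fun hint => ?_⟩
      obtain ⟨ε, hε, hball⟩ := Metric.isOpen_iff.1 isOpen_interior za hint
      have hmem : (za.1, za.2 - ε/2) ∈ K := by
        apply interior_subset
        apply hball
        rw [Metric.mem_ball, Prod.dist_eq]
        have h2 : dist (za.2 - ε/2) (za.2) = ε/2 := by
          rw [Real.dist_eq, abs_of_nonpos (by linarith)]; ring
        simp only [dist_self, h2]
        rw [max_eq_right (by positivity)]
        linarith
      have : za.2 - ε/2 ∈ Ys := ⟨(za.1, za.2 - ε/2), ⟨hmem, by simp [hzax]⟩, rfl⟩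
      have := csInf_le hYcpt.bddBelow this
      rw [hzay] at *
      linarith
    obtain ⟨e, he, hze⟩ := frontier_edge hgp u hzafr (by rw [hzax]; exact hzx)
    exact Or.inl ⟨hqP, e, he, za, hze, hzax, by rw [hzay]; exact hbelow⟩
  · have hzbfr : zb ∈ frontier K := by
      rw [hfr]
      refine ⟨hzbT.1, fun hint => ?_⟩
      obtain ⟨ε, hε, hball⟩ := Metric.isOpen_iff.1 isOpen_interior zb hint
      have hmem : (zb.1, zb.2 + ε/2) ∈ K := by
        apply interior_subset
        apply hball
        rw [Metric.mem_ball, Prod.dist_eq]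
        have h2 : dist (zb.2 + ε/2) (zb.2) = ε/2 := by
          rw [Real.dist_eq, abs_of_nonneg (by linarith)]; ring
        simp only [dist_self, h2]
        rw [max_eq_right (by positivity)]
        linarith
      have : zb.2 + ε/2 ∈ Ys := ⟨(zb.1, zb.2 + ε/2), ⟨hmem, by simp [hzbx]⟩, rfl⟩
      have := le_csSup hYcpt.bddAbove this
      rw [hzby] at *
      linarith
    obtain ⟨e, he, hze⟩ := frontier_edge hgp u hzbfr (by rw [hzbx]; exact hzx)
    exact Or.inr ⟨hqP, e, he, zb, hze, hzbx, by rw [hzby]; exact habove⟩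

lemma lowU_strip {P : Set Pt} (u : CPart P) {q : Pt} (hq : q ∈ lowU u) :
    lftx u ≤ q.1 ∧ q.1 ≤ rgtx u := by
  obtain ⟨hqP, e, he, z, hz, hzx, _⟩ := hq
  obtain ⟨a, b, ha, hb, hab, rfl⟩ := openSegment_subset_segment ℝ e.1 e.2 hz
  obtain ⟨h1, h2, _, _⟩ := he
  have l1 := lftx_le u h1
  have l2 := lftx_le u h2
  have r1 := le_rgtx u h1
  have r2 := le_rgtx u h2
  have hx : (a • e.1 + b • e.2).1 = a * e.1.1 + b * e.2.1 := rfl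
  rw [← hzx, hx]
  have e1 : a * lftx u + b * lftx u = lftx u := by rw [← add_mul, hab, one_mul]
  have e2 : a * rgtx u + b * rgtx u = rgtx u := by rw [← add_mul, hab, one_mul]
  constructor
  · nlinarith [mul_le_mul_of_nonneg_left l1 ha, mul_le_mul_of_nonneg_left l2 hb]
  · nlinarith [mul_le_mul_of_nonneg_left r1 ha, mul_le_mul_of_nonneg_left r2 hb]

lemma distinctX_of_strictMono {n : ℕ} {p : Fin n → Pt}
    (hp : StrictMono (fun i => (p i).1)) : DistinctX (Set.range p) := by
  rintro a ⟨i, rfl⟩ b ⟨j, rfl⟩ hab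
  have hij : i ≠ j := fun h => hab (by rw [h])
  exact hp.injective.ne hij

lemma keyfact {n : ℕ} {p : Fin n → Pt} (hp : StrictMono (fun i => (p i).1))
    (hgp : GenPos (Set.range p)) {Us C C' : Set (CPart (Set.range p))}
    {u : CPart (Set.range p)} (h : PStep Us C C' u) :
    ptsU C ∩ {q : Pt | lftx u ≤ q.1 ∧ q.1 ≤ rgtx u} = lowU u \ u.Q := by
  have hdx : DistinctX (Set.range p) := distinctX_of_strictMono hp
  obtain ⟨hC, hC', hun, hins, hurme⟩ := h
  have huC' : u ∈ C' := by rw [hins]; exact Set.mem_insert u C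
  apply Set.Subset.antisymm
  · rintro q ⟨hqpts, hql, hqr⟩
    obtain ⟨v, hv, hqv⟩ : ∃ v ∈ C, q ∈ v.Q := by
      simpa [ptsU] using hqpts
    have hvC' : v ∈ C' := by rw [hins]; exact Set.mem_insert_of_mem u hv
    have hvu : v ≠ u := fun hh => hun (hh ▸ hv)
    have hdisj : Disjoint u.Q v.Q := hC'.2.2.2.1 u huC' v hvC' (Ne.symm hvu)
    have hqnu : q ∉ u.Q := fun hh => (Set.disjoint_left.1 hdisj hh) hqv
    have hqP : q ∈ Set.range p := v.hQP hqv
    have hql' : lftx u < q.1 := by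
      rcases eq_or_lt_of_le hql with heq | hlt
      · obtain ⟨pl, hpl, hplx⟩ := exists_lftx_mem u
        exact absurd (heq ▸ hplx : pl.1 = q.1)
          (hdx pl (u.hQP hpl) q hqP (fun hh => hqnu (hh ▸ hpl)))
      · exact hlt
    have hqr' : q.1 < rgtx u := by
      rcases eq_or_lt_of_le hqr with heq | hlt
      · obtain ⟨pr, hpr, hprx⟩ := exists_rgtx_mem u
        exact absurd (heq ▸ hprx : pr.1 = q.1).symm
          (Ne.symm (hdx pr (u.hQP hpr) q hqP (fun hh => hqnu (hh ▸ hpr))))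
      · exact hlt
    have hnup : q ∉ upU u := by
      intro hup
      exact hurme.1.2 v hvC' hvu (Or.inr ⟨q, hup, hqv⟩)
    rcases below_or_above hgp hdx u hqP hqnu hql' hqr' with hlow | hup
    · exact ⟨hlow, hqnu⟩
    · exact absurd hup hnup
  · rintro q ⟨hlow, hqnu⟩
    have hstrip := lowU_strip u hlow
    have hqC' : q ∈ ptsU C' := hC'.2.2.2.2 (Set.mem_biUnion huC' hlow)
    obtain ⟨w, hw, hqw⟩ : ∃ w ∈ C', q ∈ w.Q := by
      simpa [ptsU] using hqC'
    rw [hins] at hw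
    rcases hw with rfl | hw
    · exact absurd hqw hqnu
    · exact ⟨Set.mem_biUnion hw hqw, hstrip⟩

def LCset {P : Set Pt} (C : Set (CPart P)) : Set ℝ := {x | ∃ u, URME C u ∧ lftx u = x}

lemma pcls_det {P : Set Pt} (Us : Set (CPart P)) {C D : Set (CPart P)}
    (hpts : ptsU C = ptsU D)
    (hL : LCset C = LCset D ∨ (¬ (LCset C).Subsingleton ∧ ¬ (LCset D).Subsingleton)) :
    pcls Us C = pcls Us D := by
  have key : ∀ (E D' : Set (CPart P)),
      (∀ u u', URME E u → URME D' u' → lftx u = lftx u') ↔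
      (∀ a ∈ LCset E, ∀ b ∈ LCset D', a = b) := by
    intro E D'
    constructor
    · rintro h a ⟨ua, hua, rfl⟩ b ⟨ub, hub, rfl⟩
      exact h ua ub hua hub
    · intro h ua ub hua hub
      exact h _ ⟨ua, hua, rfl⟩ _ ⟨ub, hub, rfl⟩
  ext D'
  simp only [pcls, Set.mem_setOf_eq, PEqv, key]
  rcases hL with hL | ⟨h1, h2⟩
  · rw [hpts, hL]
  · obtain ⟨x1, hx1, x2, hx2, hx12⟩ := Set.not_subsingleton_iff.1 h1
    obtain ⟨y1, hy1, y2, hy2, hy12⟩ := Set.not_subsingleton_iff.1 h2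
    constructor
    · rintro ⟨hPF, hp1, hp2⟩
      refine ⟨hPF, hpts ▸ hp1, ?_⟩
      intro a ha b hb
      exact absurd ((hp2 x1 hx1 b hb).trans (hp2 x2 hx2 b hb).symm) hx12
    · rintro ⟨hPF, hp1, hp2⟩
      refine ⟨hPF, hpts.symm ▸ hp1, ?_⟩
      intro a ha b hb
      exact absurd ((hp2 y1 hy1 b hb).trans (hp2 y2 hy2 b hb).symm) hy12

lemma LCset_sub_exists {n : ℕ} {p : Fin n → Pt} {C : Set (CPart (Set.range p))}
    (hsub : (LCset C).Subsingleton) (hne : (LCset C).Nonempty) :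
    ∃ i : Fin n, LCset C = {(p i).1} := by
  obtain ⟨x, hx⟩ := hne
  obtain ⟨u, hu, rfl⟩ := hx
  obtain ⟨a, ha, hax⟩ := exists_lftx_mem u
  obtain ⟨i, rfl⟩ := u.hQP ha
  refine ⟨i, ?_⟩
  rw [hax]
  apply Set.eq_singleton_iff_unique_mem.2
  exact ⟨⟨u, hu, rfl⟩, fun y hy => hsub hy ⟨u, hu, rfl⟩⟩

def tagC {n : ℕ} (p : Fin n → Pt) (C : Set (CPart (Set.range p))) : Option (Option (Fin n)) :=
  if _ : (LCset C).Subsingleton then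
    some (if h2 : ∃ i : Fin n, LCset C = {(p i).1} then some h2.choose else none)
  else none

lemma tag_det {n : ℕ} {p : Fin n → Pt} {C D : Set (CPart (Set.range p))}
    (h : tagC p C = tagC p D) :
    LCset C = LCset D ∨ (¬ (LCset C).Subsingleton ∧ ¬ (LCset D).Subsingleton) := by
  unfold tagC at h
  by_cases h1 : (LCset C).Subsingleton <;> by_cases h2 : (LCset D).Subsingleton
  · left
    rw [dif_pos h1, dif_pos h2] at h
    rcases Set.eq_empty_or_nonempty (LCset C) with hCe | hCne
    · rcases Set.eq_empty_or_nonempty (LCset D) with hDe | hDne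
      · rw [hCe, hDe]
      · obtain ⟨i, hi⟩ := LCset_sub_exists h2 hDne
        exfalso
        have hnC : ¬ ∃ i : Fin n, LCset C = {(p i).1} := by
          rintro ⟨j, hj⟩
          rw [hCe] at hj
          exact Set.singleton_ne_empty _ hj.symm
        rw [dif_neg hnC, dif_pos ⟨i, hi⟩] at h
        simp at h
    · obtain ⟨i, hi⟩ := LCset_sub_exists h1 hCne
      rcases Set.eq_empty_or_nonempty (LCset D) with hDe | hDne
      · exfalso
        have hnD : ¬ ∃ i : Fin n, LCset D = {(p i).1} := by
          rintro ⟨j, hj⟩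
          rw [hDe] at hj
          exact Set.singleton_ne_empty _ hj.symm
        rw [dif_pos ⟨i, hi⟩, dif_neg hnD] at h
        simp at h
      · obtain ⟨j, hj⟩ := LCset_sub_exists h2 hDne
        have hex1 : ∃ k : Fin n, LCset C = {(p k).1} := ⟨i, hi⟩
        have hex2 : ∃ k : Fin n, LCset D = {(p k).1} := ⟨j, hj⟩
        rw [dif_pos hex1, dif_pos hex2] at h
        have hij : hex1.choose = hex2.choose := by simpa using h
        rw [hex1.choose_spec, hex2.choose_spec, hij]
  · rw [dif_pos h1, dif_neg h2] at h
    simp at h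
  · rw [dif_neg h1, dif_pos h2] at h
    simp at h
  · right
    exact ⟨h1, h2⟩

lemma ptsU_subset {P : Set Pt} {C : Set (CPart P)} : ptsU C ⊆ P :=
  Set.iUnion₂_subset fun u _ => u.hQP

lemma ptsU_insert {P : Set Pt} {u : CPart P} {C : Set (CPart P)} :
    ptsU (insert u C) = u.Q ∪ ptsU C := by
  simp [ptsU, Set.biUnion_insert]

lemma LCset_urme {P : Set Pt} {C' : Set (CPart P)} {u : CPart P} (h : URME C' u) :
    LCset C' = {lftx u} := by
  apply Set.eq_singleton_iff_unique_mem.2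
  refine ⟨⟨u, h, rfl⟩, ?_⟩
  rintro x ⟨v, hv, rfl⟩
  by_cases hvu : v = u
  · rw [hvu]
  · have h1 := h.2 v hv.1 hvu
    have h2 := hv.2 u h.1 (Ne.symm hvu)
    have h3 := lftx_le_rgtx u
    have h4 := lftx_le_rgtx v
    linarith

lemma exists_li {n : ℕ} {p : Fin n → Pt} (u : CPart (Set.range p)) :
    ∃ i : Fin n, p i ∈ u.Q ∧ (p i).1 = lftx u := by
  obtain ⟨a, ha, hax⟩ := exists_lftx_mem u
  obtain ⟨i, rfl⟩ := u.hQP ha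
  exact ⟨i, ha, hax⟩

lemma exists_ri {n : ℕ} {p : Fin n → Pt} (u : CPart (Set.range p)) :
    ∃ i : Fin n, p i ∈ u.Q ∧ (p i).1 = rgtx u := by
  obtain ⟨a, ha, hax⟩ := exists_rgtx_mem u
  obtain ⟨i, rfl⟩ := u.hQP ha
  exact ⟨i, ha, hax⟩

lemma preim_inj {n : ℕ} {p : Fin n → Pt} {A B : Set Pt} (hA : A ⊆ Set.range p)
    (hB : B ⊆ Set.range p) (h : p ⁻¹' A = p ⁻¹' B) : A = B := by
  have := congrArg (Set.image p) h
  rwa [Set.image_preimage_eq_inter_range, Set.image_preimage_eq_inter_range,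
    Set.inter_eq_left.2 hA, Set.inter_eq_left.2 hB] at this

lemma cls_bound {n : ℕ} {p : Fin n → Pt} (Us : Set (CPart (Set.range p))) :
    {V | ∃ C ∈ PartFam Us, V = pcls Us C}.ncard ≤ 2 ^ n * (n + 2) := by
  classical
  set f : Set (Set (CPart (Set.range p))) → Finset (Fin n) × Option (Option (Fin n)) :=
    fun V =>
      if h : ∃ C ∈ PartFam Us, V = pcls Us C then
        ((Set.toFinite (p ⁻¹' ptsU h.choose)).toFinset, tagC p h.choose)
      else (∅, none) with hf
  have hinj : Set.InjOn f {V | ∃ C ∈ PartFam Us, V = pcls Us C} := by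
    intro V1 h1 V2 h2 heq
    simp only [Set.mem_setOf_eq] at h1 h2
    rw [hf] at heq
    simp only [dif_pos h1, dif_pos h2, Prod.mk.injEq] at heq
    obtain ⟨hfin, htag⟩ := heq
    have hsets : p ⁻¹' ptsU h1.choose = p ⁻¹' ptsU h2.choose := by
      have := congrArg (fun (x : Finset (Fin n)) => (x : Set (Fin n))) hfin
      simpa only [Set.Finite.coe_toFinset] using this
    have hpts : ptsU h1.choose = ptsU h2.choose :=
      preim_inj ptsU_subset ptsU_subset hsets
    have hpcls : pcls Us h1.choose = pcls Us h2.choose :=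
      pcls_det Us hpts (tag_det htag)
    rw [h1.choose_spec.2, h2.choose_spec.2, hpcls]
  have hcard := Set.ncard_le_ncard_of_injOn f (fun a _ => Set.mem_univ (f a)) hinj
    Set.finite_univ
  rw [Set.ncard_univ, Nat.card_eq_fintype_card] at hcard
  simpa [Fintype.card_finset] using hcard

lemma edge_bound {n : ℕ} {p : Fin n → Pt} (hp : StrictMono (fun i => (p i).1))
    (hgp : GenPos (Set.range p)) (Us : Set (CPart (Set.range p))) :
    {e : Set (Set (CPart (Set.range p))) × CPart (Set.range p) ×
        Set (Set (CPart (Set.range p))) |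
      PLEdge Us e.1 e.2.1 e.2.2}.ncard ≤ (n + 1) ^ 2 * (2 ^ n * (n + 2)) := by
  classical
  set strip : CPart (Set.range p) → Set Pt :=
    fun u => {q : Pt | lftx u ≤ q.1 ∧ q.1 ≤ rgtx u} with hstrip
  set f : (Set (Set (CPart (Set.range p))) × CPart (Set.range p) ×
      Set (Set (CPart (Set.range p)))) →
      Option (Fin n) × Option (Fin n) × Finset (Fin n) × Option (Option (Fin n)) :=
    fun e =>
      if h : PLEdge Us e.1 e.2.1 e.2.2 then
        (some (exists_li e.2.1).choose, some (exists_ri e.2.1).choose,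
          (Set.toFinite (p ⁻¹' (e.2.1.Q ∪ (ptsU h.choose \ strip e.2.1)))).toFinset,
          tagC p h.choose)
      else (none, none, ∅, none) with hf
  have hinj : Set.InjOn f {e : Set (Set (CPart (Set.range p))) × CPart (Set.range p) ×
      Set (Set (CPart (Set.range p))) | PLEdge Us e.1 e.2.1 e.2.2} := by
    intro e1 he1 e2 he2 heq
    simp only [Set.mem_setOf_eq] at he1 he2
    rw [hf] at heq
    simp only [dif_pos he1, dif_pos he2, Prod.mk.injEq, Option.some.injEq] at heq
    obtain ⟨hli, hri, hfin, htag⟩ := heq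
    set u1 := e1.2.1 with hu1
    set u2 := e2.2.1 with hu2
    set C1 := he1.choose with hC1
    set C2 := he2.choose with hC2
    obtain ⟨C1', hV1, hW1, hstep1⟩ := he1.choose_spec
    obtain ⟨C2', hV2, hW2, hstep2⟩ := he2.choose_spec
    have hsets : p ⁻¹' (u1.Q ∪ (ptsU C1 \ strip u1)) = p ⁻¹' (u2.Q ∪ (ptsU C2 \ strip u2)) := by
      have := congrArg (fun (x : Finset (Fin n)) => (x : Set (Fin n))) hfin
      simpa only [Set.Finite.coe_toFinset] using this
    set li := (exists_li u1).choose with hlidef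
    set ri := (exists_ri u1).choose with hridef
    set I : Set (Fin n) := Set.Icc li ri with hI
    -- characterization of the Q-part and B-part, for each side
    have hQpart : ∀ (u : CPart (Set.range p)) (C : Set (CPart (Set.range p))),
        (exists_li u).choose = li → (exists_ri u).choose = ri →
        p ⁻¹' u.Q = (p ⁻¹' (u.Q ∪ (ptsU C \ strip u))) ∩ I ∧
        p ⁻¹' (ptsU C \ strip u) = (p ⁻¹' (u.Q ∪ (ptsU C \ strip u))) \ I := by
      intro u C hliu hriu
      have hlspec := (exists_li u).choose_spec
      have hrspec := (exists_ri u).choose_spec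
      rw [hliu] at hlspec
      rw [hriu] at hrspec
      have hQI : ∀ i, p i ∈ u.Q → i ∈ I := by
        intro i hi
        constructor
        · exact (hp.le_iff_le).1 (by
            show (p li).1 ≤ (p i).1
            rw [hlspec.2]; exact lftx_le u hi)
        · exact (hp.le_iff_le).1 (by
            show (p i).1 ≤ (p ri).1
            rw [hrspec.2]; exact le_rgtx u hi)
      have hIstrip : ∀ i, i ∈ I → p i ∈ strip u := by
        intro i hi
        constructor
        · rw [← hlspec.2]; exact hp.monotone hi.1
        · rw [← hrspec.2]; exact hp.monotone hi.2
      constructor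
      · ext i
        simp only [Set.mem_inter_iff, Set.mem_preimage, Set.mem_union, Set.mem_diff]
        constructor
        · intro hi
          exact ⟨Or.inl hi, hQI i hi⟩
        · rintro ⟨hor, hiI⟩
          rcases hor with hq | ⟨_, hns⟩
          · exact hq
          · exact absurd (hIstrip i hiI) hns
      · ext i
        simp only [Set.mem_diff, Set.mem_preimage, Set.mem_union]
        constructor
        · rintro ⟨hpts, hns⟩
          exact ⟨Or.inr ⟨hpts, hns⟩, fun hiI => hns (hIstrip i hiI)⟩
        · rintro ⟨hor, hiI⟩
          rcases hor with hq | hb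
          · exact absurd (hQI i hq) hiI
          · exact hb
    have h1parts := hQpart u1 C1 rfl rfl
    have h2parts := hQpart u2 C2 hli.symm hri.symm
    -- recover u
    have hQeq : u1.Q = u2.Q := by
      apply preim_inj u1.hQP u2.hQP
      rw [h1parts.1, h2parts.1, hsets]
    have hueq : u1 = u2 := cpart_ext hQeq
    -- recover the outside part
    have hBeq : ptsU C1 \ strip u1 = ptsU C2 \ strip u2 := by
      apply preim_inj (fun q hq => ptsU_subset hq.1) (fun q hq => ptsU_subset hq.1)
      rw [h1parts.2, h2parts.2, hsets]
    -- key fact: the inside part is determined by u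
    have hkey1 := keyfact hp hgp hstep1
    have hkey2 := keyfact hp hgp hstep2
    have hpts : ptsU C1 = ptsU C2 := by
      rw [← Set.diff_union_inter (ptsU C1) (strip u1), ← Set.diff_union_inter (ptsU C2) (strip u2)]
      rw [hBeq]
      congr 1
      show ptsU C1 ∩ {q : Pt | lftx u1 ≤ q.1 ∧ q.1 ≤ rgtx u1} =
        ptsU C2 ∩ {q : Pt | lftx u2 ≤ q.1 ∧ q.1 ≤ rgtx u2}
      rw [hkey1, hkey2, hueq]
    -- the source classes agree
    have hVeq : e1.1 = e2.1 := by
      rw [hV1, hV2]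
      exact pcls_det Us hpts (tag_det htag)
    -- the target classes agree
    have hWeq : e1.2.2 = e2.2.2 := by
      rw [hW1, hW2]
      apply pcls_det Us
      · rw [hstep1.2.2.2.1, hstep2.2.2.2.1, ptsU_insert, ptsU_insert, hpts, hueq]
      · left
        rw [LCset_urme hstep1.2.2.2.2, LCset_urme hstep2.2.2.2.2, hueq]
    exact Prod.ext hVeq (Prod.ext hueq hWeq)
  have hcard := Set.ncard_le_ncard_of_injOn f (fun a _ => Set.mem_univ (f a)) hinj
    Set.finite_univ
  rw [Set.ncard_univ, Nat.card_eq_fintype_card] at hcard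
  refine hcard.trans ?_
  simp [Fintype.card_finset]
  ring_nf
  omega

theorem convexPartition_graph_size :
    ∃ c : ℕ, ∀ (n : ℕ) (p : Fin n → Pt),
      StrictMono (fun i => (p i).1) →
      GenPos (Set.range p) →
      ∀ Us : Set (CPart (Set.range p)),
        -- vertices (classes plus sink)
        ({V | ∃ C ∈ PartFam Us, V = pcls Us C}.ncard + 1)
        -- labeled edges
        + {e : Set (Set (CPart (Set.range p))) × CPart (Set.range p) ×
              Set (Set (CPart (Set.range p))) |
            PLEdge Us e.1 e.2.1 e.2.2}.ncard
        -- sink edges (at most one per class)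
        + {V | ∃ C ∈ PartFam Us, V = pcls Us C}.ncard
        ≤ c * 2 ^ n * (n + 1) ^ 3 := by
  refine ⟨10, ?_⟩
  intro n p hp hgp Us
  have hA := cls_bound Us
  have hE := edge_bound hp hgp Us
  set A := {V | ∃ C ∈ PartFam Us, V = pcls Us C}.ncard with hAdef
  set E := {e : Set (Set (CPart (Set.range p))) × CPart (Set.range p) ×
      Set (Set (CPart (Set.range p))) | PLEdge Us e.1 e.2.1 e.2.2}.ncard with hEdef
  have hpow : (n : ℕ) + 1 ≤ (n + 1) ^ 3 := Nat.le_self_pow (by norm_num) _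
  have h1 : A ≤ 2 * (2 ^ n * (n + 1) ^ 3) := by
    calc A ≤ 2 ^ n * (n + 2) := hA
      _ ≤ 2 ^ n * (2 * (n + 1) ^ 3) := by
          refine Nat.mul_le_mul_left _ ?_
          omega
      _ = 2 * (2 ^ n * (n + 1) ^ 3) := by ring
  have h2 : E ≤ 2 * (2 ^ n * (n + 1) ^ 3) := by
    calc E ≤ (n + 1) ^ 2 * (2 ^ n * (n + 2)) := hE
      _ ≤ (n + 1) ^ 2 * (2 ^ n * (2 * (n + 1))) := by
          refine Nat.mul_le_mul_left _ (Nat.mul_le_mul_left _ ?_)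
          omega
      _ = 2 * (2 ^ n * (n + 1) ^ 3) := by ring
  have h3 : 0 < 2 ^ n * (n + 1) ^ 3 := by positivity
  have hgoal : A + 1 + E + A ≤ 10 * (2 ^ n * (n + 1) ^ 3) := by omega
  calc A + 1 + E + A ≤ 10 * (2 ^ n * (n + 1) ^ 3) := hgoal
    _ = 10 * 2 ^ n * (n + 1) ^ 3 := by ring
end
end
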